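/- arXiv:math/9405216 — 7 statements merged into one kernel-verified Lean document; each statement's English description precedes it below -/
import Mathlib

section
/- Let F and G be continuous nondecreasing lifts (continuous nondecreasing maps ℝ → ℝ with F(x+1) = F(x)+1 and G(x+1) = G(x)+1). Assume the rotation number ρ(F) is irrational and the circle map f of ℝ/ℤ induced by F has a dense forward orbit (there exists θ ∈ ℝ/ℤ whose forward orbit {f^n(θ) : n ≥ 0} is dense in ℝ/ℤ). If F(x) ≥ G(x) for all x ∈ ℝ and F ≠ G, then ρ(F) > ρ(G). -/
open Real Filter Set

section AuxLemmas

variable {Φ : ℝ → ℝ}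

/-- A lift commutes with integer translations. -/
lemma lift_int_aux (hl : ∀ x, Φ (x + 1) = Φ x + 1) :
    ∀ (m : ℤ) (x : ℝ), Φ (x + m) = Φ x + m := by
  intro m
  induction m using Int.induction_on with
  | zero => simp
  | succ n ih =>
    intro x
    have h1 : (x + ((n : ℤ) + 1 : ℤ) : ℝ) = (x + (n : ℤ)) + 1 := by push_cast; ring
    rw [h1, hl, ih]; push_cast; ring
  | pred n ih =>
    intro x
    have h1 : (x + (-(n : ℤ) - 1 : ℤ) : ℝ) + 1 = x + (-(n : ℤ) : ℤ) := by push_cast; ring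
    have h2 := hl (x + (-(n : ℤ) - 1 : ℤ))
    rw [h1, ih] at h2
    have h3 : Φ (x + (-(n : ℤ) - 1 : ℤ)) = Φ x + (-(n : ℤ) : ℤ) - 1 := by linarith
    rw [h3]; push_cast; ring

lemma iterate_lift_aux (hl : ∀ x, Φ (x + 1) = Φ x + 1) :
    ∀ (n : ℕ) (m : ℤ) (x : ℝ), Φ^[n] (x + m) = Φ^[n] x + m := by
  intro n
  induction n with
  | zero => simp
  | succ n ih =>
    intro m x
    rw [Function.iterate_succ_apply, Function.iterate_succ_apply, lift_int_aux hl, ih]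

/-- If one iterate is below a translate, the rotation number is at most `p/q`. -/
lemma rho_le_aux (hm : Monotone Φ) (hl : ∀ x, Φ (x + 1) = Φ x + 1) {ρ : ℝ}
    (hρ : ∀ x : ℝ, Tendsto (fun n : ℕ => Φ^[n] x / (n : ℝ)) atTop (nhds ρ))
    {q : ℕ} (hq : 0 < q) {p : ℤ} {x : ℝ} (h : Φ^[q] x ≤ x + p) :
    ρ ≤ (p : ℝ) / (q : ℝ) := by
  have hiter : ∀ k : ℕ, Φ^[k * q] x ≤ x + (k : ℝ) * (p : ℝ) := by
    intro k
    induction k with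
    | zero => simp
    | succ k ih =>
      have e : (k + 1) * q = q + k * q := by ring
      rw [e, Function.iterate_add_apply]
      have e2 : (x + (k : ℝ) * (p : ℝ)) = x + ((k * p : ℤ) : ℝ) := by push_cast; ring
      calc Φ^[q] (Φ^[k*q] x) ≤ Φ^[q] (x + ((k * p : ℤ) : ℝ)) := (hm.iterate q) (by rw [← e2]; exact ih)
        _ = Φ^[q] x + ((k * p : ℤ) : ℝ) := iterate_lift_aux hl q _ _
        _ ≤ x + (p : ℝ) + ((k * p : ℤ) : ℝ) := by linarith
        _ = x + ((k + 1 : ℕ) : ℝ) * (p : ℝ) := by push_cast; ring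
  have hnq : Tendsto (fun k : ℕ => k * q) atTop atTop :=
    tendsto_atTop_mono (fun k => Nat.le_mul_of_pos_right k hq) tendsto_id
  have h1 : Tendsto (fun k : ℕ => Φ^[k * q] x / ((k * q : ℕ) : ℝ)) atTop (nhds ρ) := (hρ x).comp hnq
  have hcast : Tendsto (fun k : ℕ => ((k * q : ℕ) : ℝ)) atTop atTop :=
    tendsto_natCast_atTop_atTop.comp hnq
  have h0 : Tendsto (fun k : ℕ => x * (((k * q : ℕ) : ℝ))⁻¹) atTop (nhds 0) := by
    simpa using hcast.inv_tendsto_atTop.const_mul x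
  have h2 : Tendsto (fun k : ℕ => x * (((k * q : ℕ) : ℝ))⁻¹ + (p : ℝ) / (q : ℝ)) atTop
      (nhds ((p : ℝ) / (q : ℝ))) := by
    simpa using h0.add (tendsto_const_nhds (x := (p : ℝ) / (q : ℝ)))
  refine le_of_tendsto_of_tendsto h1 h2 ?_
  filter_upwards [eventually_ge_atTop 1] with k hk
  have hk0 : (0 : ℝ) < (k : ℝ) := by exact_mod_cast hk
  have hq0 : (0 : ℝ) < (q : ℝ) := by exact_mod_cast hq
  have hkq : (0 : ℝ) < ((k * q : ℕ) : ℝ) := by push_cast; positivity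
  have step1 : Φ^[k * q] x / ((k * q : ℕ) : ℝ) ≤ (x + (k : ℝ) * (p : ℝ)) / ((k * q : ℕ) : ℝ) := by
    gcongr
    exact hiter k
  refine step1.trans (le_of_eq ?_)
  push_cast
  field_simp

/-- If one iterate is above a translate, the rotation number is at least `p/q`. -/
lemma rho_ge_aux (hm : Monotone Φ) (hl : ∀ x, Φ (x + 1) = Φ x + 1) {ρ : ℝ}
    (hρ : ∀ x : ℝ, Tendsto (fun n : ℕ => Φ^[n] x / (n : ℝ)) atTop (nhds ρ))
    {q : ℕ} (hq : 0 < q) {p : ℤ} {x : ℝ} (h : x + p ≤ Φ^[q] x) :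
    (p : ℝ) / (q : ℝ) ≤ ρ := by
  have hiter : ∀ k : ℕ, x + (k : ℝ) * (p : ℝ) ≤ Φ^[k * q] x := by
    intro k
    induction k with
    | zero => simp
    | succ k ih =>
      have e : (k + 1) * q = q + k * q := by ring
      rw [e, Function.iterate_add_apply]
      have e2 : (x + (k : ℝ) * (p : ℝ)) = x + ((k * p : ℤ) : ℝ) := by push_cast; ring
      calc x + ((k + 1 : ℕ) : ℝ) * (p : ℝ) = (x + (p : ℝ)) + ((k * p : ℤ) : ℝ) := by push_cast; ring
        _ ≤ Φ^[q] x + ((k * p : ℤ) : ℝ) := by linarith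
        _ = Φ^[q] (x + ((k * p : ℤ) : ℝ)) := (iterate_lift_aux hl q _ _).symm
        _ ≤ Φ^[q] (Φ^[k*q] x) := (hm.iterate q) (by rw [e2] at ih; exact ih)
  have hnq : Tendsto (fun k : ℕ => k * q) atTop atTop :=
    tendsto_atTop_mono (fun k => Nat.le_mul_of_pos_right k hq) tendsto_id
  have h1 : Tendsto (fun k : ℕ => Φ^[k * q] x / ((k * q : ℕ) : ℝ)) atTop (nhds ρ) := (hρ x).comp hnq
  have hcast : Tendsto (fun k : ℕ => ((k * q : ℕ) : ℝ)) atTop atTop :=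
    tendsto_natCast_atTop_atTop.comp hnq
  have h0 : Tendsto (fun k : ℕ => x * (((k * q : ℕ) : ℝ))⁻¹) atTop (nhds 0) := by
    simpa using hcast.inv_tendsto_atTop.const_mul x
  have h2 : Tendsto (fun k : ℕ => x * (((k * q : ℕ) : ℝ))⁻¹ + (p : ℝ) / (q : ℝ)) atTop
      (nhds ((p : ℝ) / (q : ℝ))) := by
    simpa using h0.add (tendsto_const_nhds (x := (p : ℝ) / (q : ℝ)))
  refine le_of_tendsto_of_tendsto h2 h1 ?_
  filter_upwards [eventually_ge_atTop 1] with k hk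
  have hk0 : (0 : ℝ) < (k : ℝ) := by exact_mod_cast hk
  have hq0 : (0 : ℝ) < (q : ℝ) := by exact_mod_cast hq
  have hkq : (0 : ℝ) < ((k * q : ℕ) : ℝ) := by push_cast; positivity
  have step1 : (x + (k : ℝ) * (p : ℝ)) / ((k * q : ℕ) : ℝ) ≤ Φ^[k * q] x / ((k * q : ℕ) : ℝ) := by
    gcongr
    exact hiter k
  refine le_trans (le_of_eq ?_) step1
  push_cast
  field_simp

/-- Key identity: for a lift with irrational rotation number,
`x + ⌊nρ⌋ < Φ^[n] x < x + ⌊nρ⌋ + 1`. -/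
lemma key_bounds_aux (hm : Monotone Φ) (hl : ∀ x, Φ (x + 1) = Φ x + 1) {ρ : ℝ}
    (hρ : ∀ x : ℝ, Tendsto (fun n : ℕ => Φ^[n] x / (n : ℝ)) atTop (nhds ρ))
    (hirr : Irrational ρ) {n : ℕ} (hn : 0 < n) (x : ℝ) :
    x + (⌊(n : ℝ) * ρ⌋ : ℝ) < Φ^[n] x ∧ Φ^[n] x < x + (⌊(n : ℝ) * ρ⌋ : ℝ) + 1 := by
  have hq0 : (0 : ℝ) < (n : ℝ) := by exact_mod_cast hn
  constructor
  · by_contra hcon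
    push_neg at hcon
    have h1 : ρ ≤ ((⌊(n : ℝ) * ρ⌋ : ℤ) : ℝ) / (n : ℝ) := rho_le_aux hm hl hρ hn hcon
    have h2 : (n : ℝ) * ρ ≤ (⌊(n : ℝ) * ρ⌋ : ℝ) := by
      rw [le_div_iff₀ hq0] at h1; linarith
    have h3 : (⌊(n : ℝ) * ρ⌋ : ℝ) ≤ (n : ℝ) * ρ := Int.floor_le _
    exact (hirr.natCast_mul hn.ne').ne_int ⌊(n : ℝ) * ρ⌋ (le_antisymm h2 h3)
  · by_contra hcon
    push_neg at hcon
    have hcon' : x + ((⌊(n : ℝ) * ρ⌋ + 1 : ℤ) : ℝ) ≤ Φ^[n] x := by push_cast; linarith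
    have h1 : ((⌊(n : ℝ) * ρ⌋ + 1 : ℤ) : ℝ) / (n : ℝ) ≤ ρ := rho_ge_aux hm hl hρ hn hcon'
    have h2 : (⌊(n : ℝ) * ρ⌋ : ℝ) + 1 ≤ (n : ℝ) * ρ := by
      rw [div_le_iff₀ hq0] at h1; push_cast at h1; linarith
    exact absurd (Int.lt_floor_add_one ((n : ℝ) * ρ)) (by linarith)

/-- An arithmetic progression with small positive step hits any sufficiently long
interval modulo 1, with arbitrarily large index. -/
lemma ap_hits_aux {t u v : ℝ} (ht : 0 < t) (h2 : t < v - u) (c : ℝ) (K : ℕ) :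
    ∃ j : ℕ, K ≤ j ∧ ∃ M : ℤ, c + (j : ℝ) * t - (M : ℝ) ∈ Ioo u v := by
  set M : ℤ := ⌈(((K : ℝ) + 1) * t + c - u : ℝ)⌉ with hMdef
  have hM : ((K : ℝ) + 1) * t + c - u ≤ (M : ℝ) := Int.le_ceil _
  set j' : ℤ := ⌊((u + (M : ℝ) - c) / t : ℝ)⌋ + 1 with hj'def
  have hj1 : (u + (M : ℝ) - c) / t < (j' : ℝ) := by
    rw [hj'def]; push_cast; exact Int.lt_floor_add_one _
  have hj2 : (j' : ℝ) - 1 ≤ (u + (M : ℝ) - c) / t := by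
    rw [hj'def]; push_cast
    linarith [Int.floor_le ((u + (M : ℝ) - c) / t)]
  have h3 : u + (M : ℝ) < c + (j' : ℝ) * t := by
    rw [div_lt_iff₀ ht] at hj1; linarith
  have h4 : c + (j' : ℝ) * t ≤ u + (M : ℝ) + t := by
    have := (mul_le_mul_of_nonneg_right hj2 ht.le)
    rw [div_mul_cancel₀ _ ht.ne'] at this
    linarith
  have h5 : (K : ℝ) + 1 ≤ (u + (M : ℝ) - c) / t := by
    rw [le_div_iff₀ ht]; linarith
  have hj'K : (K : ℤ) + 1 ≤ j' := by
    have h6 : ((K : ℤ) : ℝ) < (j' : ℝ) := by push_cast; linarith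
    exact Int.lt_iff_add_one_le.mp (by exact_mod_cast h6)
  have hj'pos : 0 ≤ j' := by omega
  have hcast : ((j'.toNat : ℕ) : ℝ) = (j' : ℝ) := by
    exact_mod_cast congrArg (Int.cast : ℤ → ℝ) (Int.toNat_of_nonneg hj'pos)
  refine ⟨j'.toNat, by omega, M, ?_, ?_⟩
  · rw [hcast]; linarith
  · rw [hcast]; linarith

/-- Density of the irrational rotation orbit: for any `c`, any nonempty open interval
`(u,v)` and any `K`, there are `k ≥ K`, `k ≥ 1` and `m : ℤ` with `c + kα - m ∈ (u,v)`. -/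
lemma rot_dense_aux {α : ℝ} (hirr : Irrational α) (c u v : ℝ) (huv : u < v) (K : ℕ) :
    ∃ k : ℕ, K ≤ k ∧ 1 ≤ k ∧ ∃ m : ℤ, c + (k : ℝ) * α - (m : ℝ) ∈ Ioo u v := by
  classical
  set S : AddSubgroup ℝ :=
    { carrier := {x : ℝ | ∃ k m : ℤ, x = (k : ℝ) * α + (m : ℝ)}
      zero_mem' := ⟨0, 0, by simp⟩
      add_mem' := by
        rintro x y ⟨k1, m1, rfl⟩ ⟨k2, m2, rfl⟩
        exact ⟨k1 + k2, m1 + m2, by push_cast; ring⟩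
      neg_mem' := by
        rintro x ⟨k, m, rfl⟩
        exact ⟨-k, -m, by push_cast; ring⟩ } with hSdef
  have hdS : Dense (S : Set ℝ) := by
    rcases S.dense_or_cyclic with h | ⟨a, ha⟩
    · exact h
    · exfalso
      have hαS : α ∈ S := ⟨1, 0, by simp⟩
      have h1S : (1 : ℝ) ∈ S := ⟨0, 1, by simp⟩
      rw [ha, AddSubgroup.mem_closure_singleton] at hαS h1S
      obtain ⟨i, hi⟩ := hαS
      obtain ⟨j, hj⟩ := h1S
      rw [zsmul_eq_mul] at hi hj
      have hj0 : j ≠ 0 := by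
        rintro rfl; simp at hj
      have hj0' : (j : ℝ) ≠ 0 := Int.cast_ne_zero.mpr hj0
      have hmul : α * (j : ℝ) = (i : ℝ) := by
        rw [← hi, show (i : ℝ) * a * (j : ℝ) = (i : ℝ) * ((j : ℝ) * a) from by ring, hj, mul_one]
      have hαval : α = (i : ℝ) / (j : ℝ) := (eq_div_iff hj0').mpr hmul
      have : Irrational (((i / j : ℚ) : ℝ)) := by
        rw [show (((i / j : ℚ)) : ℝ) = (i : ℝ) / (j : ℝ) by push_cast; ring, ← hαval]
        exact hirr
      exact (Rat.not_irrational _) this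
  have hmin : (0 : ℝ) < min (v - u) 1 := lt_min (sub_pos.mpr huv) one_pos
  have hη : (0 : ℝ) < min (v - u) 1 / 2 := by linarith
  obtain ⟨g, hgS, hgIoo⟩ := hdS.exists_mem_open isOpen_Ioo
    (nonempty_Ioo.mpr hη : (Ioo (0:ℝ) (min (v - u) 1 / 2)).Nonempty)
  obtain ⟨k, m, rfl⟩ := hgS
  set g := (k : ℝ) * α + (m : ℝ) with hgdef
  have hg1 : (0 : ℝ) < g := hgIoo.1
  have hg2 : g < min (v - u) 1 / 2 := hgIoo.2
  have hglt : g < v - u := by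
    have h1 := min_le_left (v - u) (1 : ℝ); linarith
  have hglt1 : g < 1 := by
    have h1 := min_le_right (v - u) (1 : ℝ); linarith
  have hk0 : k ≠ 0 := by
    rintro rfl
    rw [hgdef] at hg1 hglt1
    simp only [Int.cast_zero, zero_mul, zero_add] at hg1 hglt1
    have h1 : 0 < m := by exact_mod_cast hg1
    have h2 : m < 1 := by exact_mod_cast hglt1
    omega
  rcases hk0.lt_or_gt with hneg | hpos
  · -- k < 0 : reflect the interval
    have hglt' : g < (-u) - (-v) := by linarith
    obtain ⟨j, hjK, M, hM1, hM2⟩ := ap_hits_aux (u := -v) (v := -u) hg1 hglt' (-c) (max K 1)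
    have h7 : (((-k).toNat : ℕ) : ℝ) = -(k : ℝ) := by
      exact_mod_cast congrArg (Int.cast : ℤ → ℝ) (Int.toNat_of_nonneg (by omega : (0:ℤ) ≤ -k))
    have hexp : (j : ℝ) * g = (j : ℝ) * (k : ℝ) * α + (j : ℝ) * (m : ℝ) := by
      rw [hgdef]; ring
    refine ⟨j * (-k).toNat, ?_, ?_, j * m - M, ?_, ?_⟩
    · have h1 : 1 ≤ (-k).toNat := by omega
      calc K ≤ j := le_trans (le_max_left _ _) hjK
        _ = j * 1 := (mul_one j).symm
        _ ≤ j * (-k).toNat := Nat.mul_le_mul_left j h1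
    · have h1 : 1 ≤ (-k).toNat := by omega
      have h2 : 1 ≤ j := le_trans (le_max_right _ _) hjK
      calc 1 = 1 * 1 := (one_mul 1).symm
        _ ≤ j * (-k).toNat := Nat.mul_le_mul h2 h1
    · rw [Nat.cast_mul, h7]; push_cast; linarith [hexp]
    · rw [Nat.cast_mul, h7]; push_cast; linarith [hexp]
  · -- k > 0
    obtain ⟨j, hjK, M, hM1, hM2⟩ := ap_hits_aux hg1 hglt c (max K 1)
    have h7 : ((k.toNat : ℕ) : ℝ) = (k : ℝ) := by
      exact_mod_cast congrArg (Int.cast : ℤ → ℝ) (Int.toNat_of_nonneg (by omega : (0:ℤ) ≤ k))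
    have hexp : (j : ℝ) * g = (j : ℝ) * (k : ℝ) * α + (j : ℝ) * (m : ℝ) := by
      rw [hgdef]; ring
    refine ⟨j * k.toNat, ?_, ?_, M - j * m, ?_, ?_⟩
    · have h1 : 1 ≤ k.toNat := by omega
      calc K ≤ j := le_trans (le_max_left _ _) hjK
        _ = j * 1 := (mul_one j).symm
        _ ≤ j * k.toNat := Nat.mul_le_mul_left j h1
    · have h1 : 1 ≤ k.toNat := by omega
      have h2 : 1 ≤ j := le_trans (le_max_right _ _) hjK
      calc 1 = 1 * 1 := (one_mul 1).symm
        _ ≤ j * k.toNat := Nat.mul_le_mul h2 h1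
    · rw [Nat.cast_mul, h7]; push_cast; linarith [hexp]
    · rw [Nat.cast_mul, h7]; push_cast; linarith [hexp]

end AuxLemmas

/-- Let `F` and `G` be continuous nondecreasing lifts, with rotation numbers `ρF` and `ρG`
(the common limits of `F^n(x)/n`, resp. `G^n(x)/n`).  Assume `ρF` is irrational and the
circle map induced by `F` has a dense forward orbit (i.e. the forward orbit of some point
under `F`, saturated by integer translations, is dense in `ℝ`).  If `F ≥ G` pointwise and
`F ≠ G`, then `ρF > ρG`. -/
theorem stmt_6 (F G : ℝ → ℝ)
    (hFc : Continuous F) (hGc : Continuous G)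
    (hFm : Monotone F) (hGm : Monotone G)
    (hFl : ∀ x, F (x + 1) = F x + 1) (hGl : ∀ x, G (x + 1) = G x + 1)
    (ρF ρG : ℝ)
    (hρF : ∀ x : ℝ, Filter.Tendsto (fun n : ℕ => F^[n] x / (n : ℝ)) Filter.atTop (nhds ρF))
    (hρG : ∀ x : ℝ, Filter.Tendsto (fun n : ℕ => G^[n] x / (n : ℝ)) Filter.atTop (nhds ρG))
    (hirr : Irrational ρF)
    (hdense : ∃ θ : ℝ, Dense {y : ℝ | ∃ n : ℕ, ∃ k : ℤ, y = F^[n] θ + k})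
    (hge : ∀ x, G x ≤ F x) (hne : F ≠ G) :
    ρG < ρF := by
  by_contra hlt
  push_neg at hlt
  -- `G`-iterates are below `F`-iterates
  have hGF_iter : ∀ (n : ℕ) (x : ℝ), G^[n] x ≤ F^[n] x := by
    intro n
    induction n with
    | zero => intro x; simp
    | succ n ih =>
      intro x
      rw [Function.iterate_succ_apply', Function.iterate_succ_apply']
      exact le_trans (hge _) (hFm (ih x))
  have hle : ρG ≤ ρF := by
    refine le_of_tendsto_of_tendsto (hρG 0) (hρF 0) ?_
    refine Eventually.of_forall fun n => ?_
    rcases Nat.eq_zero_or_pos n with h0 | hn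
    · subst h0; simp
    · have hn' : (0:ℝ) < (n : ℝ) := by exact_mod_cast hn
      exact (div_le_div_iff_of_pos_right hn').mpr (hGF_iter n 0)
  have heq : ρG = ρF := le_antisymm hle hlt
  have hρG' : ∀ x : ℝ, Tendsto (fun n : ℕ => G^[n] x / (n : ℝ)) atTop (nhds ρF) := by
    rw [← heq]; exact hρG
  have keyF := fun {n : ℕ} (hn : 0 < n) (x : ℝ) => key_bounds_aux hFm hFl hρF hirr hn x
  have keyG := fun {n : ℕ} (hn : 0 < n) (x : ℝ) => key_bounds_aux hGm hGl hρG' hirr hn x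
  obtain ⟨θ, hθ⟩ := hdense
  -- the semiconjugacy H
  set u : ℝ → ℕ → ℝ := fun x n => F^[n] x - (n : ℝ) * ρF with hudef
  have hub : ∀ x n, u x n ≤ x + 1 := by
    intro x n
    rcases Nat.eq_zero_or_pos n with h0 | hn
    · subst h0; simp [hudef]
    · have h1 := (keyF hn x).2
      have h2 : ((⌊(n:ℝ)*ρF⌋ : ℝ)) ≤ (n:ℝ)*ρF := Int.floor_le _
      simp only [hudef]; linarith
  have hlb : ∀ x n, x - 1 ≤ u x n := by
    intro x n
    rcases Nat.eq_zero_or_pos n with h0 | hn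
    · subst h0; simp [hudef]
    · have h1 := (keyF hn x).1
      have h2 : (n:ℝ)*ρF - 1 < ((⌊(n:ℝ)*ρF⌋ : ℝ)) := Int.sub_one_lt_floor _
      simp only [hudef]; linarith
  have hbdd : ∀ x, IsBoundedUnder (· ≤ ·) atTop (u x) := fun x =>
    isBoundedUnder_of ⟨x + 1, hub x⟩
  have hcob : ∀ x, IsCoboundedUnder (· ≤ ·) atTop (u x) := fun x =>
    (isBoundedUnder_of ⟨x - 1, hlb x⟩ :
      IsBoundedUnder (· ≥ ·) atTop (u x)).isCoboundedUnder_le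
  set H : ℝ → ℝ := fun x => limsup (u x) atTop with hHdef
  have Hmono : Monotone H := by
    intro x y hxy
    refine limsup_le_limsup (Eventually.of_forall fun n => ?_) (hcob x) (hbdd y)
    simp only [hudef]
    have := (hFm.iterate n) hxy
    linarith
  have Hint : ∀ (m : ℤ) (x : ℝ), H (x + m) = H x + m := by
    intro m x
    have e : u (x + (m:ℝ)) = fun n => u x n + (m:ℝ) := by
      funext n; simp only [hudef, iterate_lift_aux hFl]; ring
    show limsup (u (x + (m:ℝ))) atTop = limsup (u x) atTop + (m:ℝ)
    rw [e]
    exact limsup_add_const atTop (u x) (m:ℝ) (hbdd x) (hcob x)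
  have HF : ∀ x, H (F x) = H x + ρF := by
    intro x
    have e : u (F x) = fun n => u x (n + 1) + ρF := by
      funext n
      simp only [hudef]
      rw [← Function.iterate_succ_apply F n x]
      push_cast
      ring
    have hbdd1 : IsBoundedUnder (· ≤ ·) atTop (fun n => u x (n+1)) :=
      isBoundedUnder_of ⟨x + 1, fun n => hub x (n+1)⟩
    have hcob1 : IsCoboundedUnder (· ≤ ·) atTop (fun n => u x (n+1)) :=
      (isBoundedUnder_of ⟨x - 1, fun n => hlb x (n+1)⟩ :
        IsBoundedUnder (· ≥ ·) atTop _).isCoboundedUnder_le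
    show limsup (u (F x)) atTop = limsup (u x) atTop + ρF
    rw [e, limsup_add_const atTop _ ρF hbdd1 hcob1, limsup_nat_add (u x) 1]
  have Horb : ∀ n : ℕ, H (F^[n] θ) = H θ + n * ρF := by
    intro n
    induction n with
    | zero => simp
    | succ n ih =>
      rw [Function.iterate_succ_apply', HF, ih]
      push_cast; ring
  have Hstrict : ∀ {x y : ℝ}, x < y → H x < H y := by
    intro x y hxy
    refine lt_of_le_of_ne (Hmono hxy.le) ?_
    intro hEq
    obtain ⟨w₁, hw₁S, hw₁I⟩ := hθ.exists_mem_open isOpen_Ioo (nonempty_Ioo.mpr hxy)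
    obtain ⟨w₂, hw₂S, hw₂I⟩ := hθ.exists_mem_open isOpen_Ioo
      (nonempty_Ioo.mpr (show x < w₁ from hw₁I.1))
    obtain ⟨n₁, k₁, hw₁⟩ := hw₁S
    obtain ⟨n₂, k₂, hw₂⟩ := hw₂S
    have hH₁ : H w₁ = H θ + n₁ * ρF + k₁ := by rw [hw₁, Hint, Horb]
    have hH₂ : H w₂ = H θ + n₂ * ρF + k₂ := by rw [hw₂, Hint, Horb]
    have hle1 : H x ≤ H w₂ := Hmono hw₂I.1.le
    have hle2 : H w₂ ≤ H w₁ := Hmono hw₂I.2.le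
    have hle3 : H w₁ ≤ H y := Hmono hw₁I.2.le
    have hEq2 : H w₁ = H w₂ := by rw [← hEq] at hle3; linarith
    have hlin : (n₁:ℝ) * ρF + (k₁:ℝ) = (n₂:ℝ) * ρF + (k₂:ℝ) := by
      rw [hH₁, hH₂] at hEq2; linarith
    by_cases hnn : n₁ = n₂
    · subst hnn
      have hk : (k₁:ℝ) = (k₂:ℝ) := by linarith
      have hk' : k₁ = k₂ := by exact_mod_cast hk
      subst hk'
      rw [← hw₂] at hw₁
      exact absurd (hw₁ ▸ hw₂I.2) (lt_irrefl _)
    · have hz : ((n₁ : ℤ) - (n₂ : ℤ)) ≠ 0 := by omega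
      have hIr : Irrational (ρF * (((n₁:ℤ) - (n₂:ℤ) : ℤ) : ℝ)) := hirr.mul_intCast hz
      exact hIr.ne_int (k₂ - k₁) (by push_cast; linarith)
  -- the gap interval
  obtain ⟨x₀, hx₀⟩ : ∃ x, G x ≠ F x := by
    by_contra hc; push_neg at hc
    exact hne (funext fun x => (hc x).symm)
  have hx₀' : G x₀ < F x₀ := (hge x₀).lt_of_ne hx₀
  set ε := (F x₀ - G x₀) / 2 with hεdef
  have hε : 0 < ε := by rw [hεdef]; linarith
  have hU : IsOpen {x : ℝ | ε < F x - G x} := isOpen_lt continuous_const (hFc.sub hGc)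
  have hx₀U : x₀ ∈ {x : ℝ | ε < F x - G x} := by
    simp only [mem_setOf_eq]; rw [hεdef]; linarith
  obtain ⟨δ, hδ, hball⟩ := Metric.isOpen_iff.mp hU x₀ hx₀U
  rw [Real.ball_eq_Ioo] at hball
  set a := x₀ - δ with hadef
  set b := x₀ + δ with hbdef
  have hab : a < b := by rw [hadef, hbdef]; linarith
  have hgap : ∀ t ∈ Ioo a b, ∀ m : ℤ, G (t + m) ≤ F (t + m) - ε := by
    intro t ht m
    rw [lift_int_aux hGl, lift_int_aux hFl]
    have h := hball ht
    simp only [mem_setOf_eq] at h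
    linarith
  -- the grid constant γ
  set N : ℕ := ⌈2 / ε⌉₊ + 1 with hNdef
  have hN0 : 0 < N := Nat.succ_pos _
  have hN0' : (0:ℝ) < (N:ℝ) := by exact_mod_cast hN0
  have hNε : 2 ≤ ε * (N:ℝ) := by
    have h1 : 2 / ε ≤ ((⌈2 / ε⌉₊ : ℕ) : ℝ) := Nat.le_ceil _
    have h2 : ((⌈2/ε⌉₊ : ℕ) : ℝ) + 1 = (N:ℝ) := by rw [hNdef]; push_cast; ring
    rw [div_le_iff₀ hε] at h1
    nlinarith
  have hNne : (Finset.range N).Nonempty := ⟨0, Finset.mem_range.mpr hN0⟩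
  set γ := (Finset.range N).inf' hNne (fun i => H (((i:ℝ) + 1) / N) - H ((i:ℝ) / N)) with hγdef
  have hγpos : 0 < γ := by
    rw [hγdef, Finset.lt_inf'_iff]
    intro i _
    have hlt : (i:ℝ)/(N:ℝ) < ((i:ℝ)+1)/(N:ℝ) := by
      rw [div_lt_div_iff₀ hN0' hN0']; nlinarith
    linarith [Hstrict hlt]
  have hgrid : ∀ z : ℝ, γ ≤ H z - H (z - ε) := by
    intro z
    set j : ℤ := ⌈((N:ℝ) * (z - ε) : ℝ)⌉ with hjdef
    have hj1 : (N:ℝ) * (z - ε) ≤ (j:ℝ) := Int.le_ceil _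
    have hj2 : (j:ℝ) < (N:ℝ)*(z-ε) + 1 := Int.ceil_lt_add_one _
    have hexp : (N:ℝ)*(z-ε) = (N:ℝ)*z - ε*(N:ℝ) := by ring
    have hz1 : z - ε ≤ (j:ℝ)/(N:ℝ) := by
      rw [le_div_iff₀ hN0']; linarith
    have hz2 : ((j:ℝ)+1)/(N:ℝ) ≤ z := by
      rw [div_le_iff₀ hN0']; linarith
    set i : ℤ := j % (N:ℤ) with hidef
    set m : ℤ := j / (N:ℤ) with hmdef
    have hdm : j = (N:ℤ) * m + i := (Int.mul_ediv_add_emod j N).symm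
    have hi0 : 0 ≤ i := Int.emod_nonneg j (by exact_mod_cast hN0.ne')
    have hiN : i < (N:ℤ) := Int.emod_lt_of_pos j (by exact_mod_cast hN0)
    have hiNat : i.toNat < N := by omega
    have hicast : ((i.toNat : ℕ) : ℝ) = (i : ℝ) := by
      exact_mod_cast congrArg (Int.cast : ℤ → ℝ) (Int.toNat_of_nonneg hi0)
    have hjN : (j:ℝ)/(N:ℝ) = (i:ℝ)/(N:ℝ) + (m:ℝ) := by
      rw [hdm]; push_cast; field_simp; ring
    have hjN1 : ((j:ℝ)+1)/(N:ℝ) = ((i:ℝ)+1)/(N:ℝ) + (m:ℝ) := by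
      rw [hdm]; push_cast; field_simp; ring
    have e1 : H ((j:ℝ)/(N:ℝ)) = H ((i:ℝ)/(N:ℝ)) + m := by rw [hjN]; exact Hint m _
    have e2 : H (((j:ℝ)+1)/(N:ℝ)) = H (((i:ℝ)+1)/(N:ℝ)) + m := by rw [hjN1]; exact Hint m _
    have hmem : i.toNat ∈ Finset.range N := Finset.mem_range.mpr hiNat
    have hinf := Finset.inf'_le (f := fun i : ℕ => H (((i:ℝ) + 1) / N) - H ((i:ℝ) / N)) hmem
    have key1 : H (z - ε) ≤ H ((j:ℝ)/(N:ℝ)) := Hmono hz1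
    have key2 : H (((j:ℝ)+1)/(N:ℝ)) ≤ H z := Hmono hz2
    calc γ ≤ H (((i.toNat:ℝ)+1)/(N:ℝ)) - H ((i.toNat:ℝ)/(N:ℝ)) := hinf
      _ = H (((i:ℝ)+1)/(N:ℝ)) - H ((i:ℝ)/(N:ℝ)) := by rw [hicast]
      _ = H (((j:ℝ)+1)/(N:ℝ)) - H ((j:ℝ)/(N:ℝ)) := by rw [e1, e2]; ring
      _ ≤ H z - H (z - ε) := by linarith
  -- the orbit sequence
  set c : ℕ → ℝ := fun k => H (G^[k] 0) - k * ρF with hcdef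
  have hstep : ∀ k, c (k+1) ≤ c k := by
    intro k
    have h1 : G^[k+1] (0:ℝ) = G (G^[k] 0) := Function.iterate_succ_apply' G k 0
    have h2 : H (G^[k+1] (0:ℝ)) ≤ H (F (G^[k] 0)) := by rw [h1]; exact Hmono (hge _)
    rw [HF] at h2
    simp only [hcdef]; push_cast; linarith
  have hanti : Antitone c := antitone_nat_of_succ_le hstep
  have hlow : ∀ k, H 0 - 1 ≤ c k := by
    intro k
    rcases Nat.eq_zero_or_pos k with h0 | hk
    · subst h0
      simp only [hcdef, Function.iterate_zero_apply, Nat.cast_zero, zero_mul, sub_zero]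
      linarith
    · have h1 := (keyG hk 0).1
      have h2 : H ((0:ℝ) + ((⌊(k:ℝ)*ρF⌋ : ℤ) : ℝ)) ≤ H (G^[k] 0) := Hmono (le_of_lt h1)
      rw [Hint] at h2
      have h3 : (k:ℝ)*ρF - 1 < ((⌊(k:ℝ)*ρF⌋ : ℤ) : ℝ) := Int.sub_one_lt_floor _
      simp only [hcdef]; linarith
  have hbb : BddBelow (Set.range c) := ⟨H 0 - 1, by rintro _ ⟨k, rfl⟩; exact hlow k⟩
  have htc : Tendsto c atTop (nhds (⨅ k, c k)) := tendsto_atTop_ciInf hanti hbb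
  set cinf := ⨅ k, c k with hcinfdef
  have hcinf_le : ∀ k, cinf ≤ c k := fun k => ciInf_le hbb k
  have hL : H a < H b := Hstrict hab
  set L := H b - H a with hLdef
  have hLpos : 0 < L := by rw [hLdef]; linarith
  set μ := min γ (L/4) with hμdef
  have hμpos : 0 < μ := lt_min hγpos (by linarith)
  have hev : ∀ᶠ k in atTop, c k < cinf + μ :=
    htc.eventually_lt_const (by linarith)
  obtain ⟨K, hK⟩ := eventually_atTop.mp hev
  obtain ⟨k, hkK, hk1, m, hm1, hm2⟩ := rot_dense_aux hirr cinf (H a) (H a + L/2) (by linarith) K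
  have hck : c k < cinf + μ := hK k hkK
  have hckl : cinf ≤ c k := hcinf_le k
  have hHGk : H (G^[k] 0) = c k + (k:ℝ) * ρF := by simp only [hcdef]; ring
  have hμL : μ ≤ L/4 := min_le_right _ _
  have hpos1 : H a + (m:ℝ) < H (G^[k] 0) := by rw [hHGk]; linarith
  have hpos2 : H (G^[k] 0) < H b + (m:ℝ) := by
    rw [hHGk]
    have : H b = H a + L := by rw [hLdef]; ring
    linarith
  have ha' : a + (m:ℝ) < G^[k] 0 := by
    by_contra hcon; push_neg at hcon
    have h := Hmono hcon
    rw [Hint] at h; linarith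
  have hb' : G^[k] 0 < b + (m:ℝ) := by
    by_contra hcon; push_neg at hcon
    have h := Hmono hcon
    rw [Hint] at h; linarith
  have hvisit : G (G^[k] 0) ≤ F (G^[k] 0) - ε := by
    have ht : G^[k] (0:ℝ) - (m:ℝ) ∈ Ioo a b := ⟨by linarith, by linarith⟩
    have h := hgap _ ht m
    rw [sub_add_cancel] at h
    exact h
  have hdrop : c (k+1) ≤ c k - γ := by
    have h1 : G^[k+1] (0:ℝ) = G (G^[k] 0) := Function.iterate_succ_apply' G k 0
    have h2 : H (G^[k+1] (0:ℝ)) ≤ H (F (G^[k] 0) - ε) := by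
      rw [h1]; exact Hmono (by linarith)
    have h3 := hgrid (F (G^[k] 0))
    have h4 : H (F (G^[k] 0)) = H (G^[k] 0) + ρF := HF _
    simp only [hcdef]; push_cast; linarith
  have hc1 : cinf ≤ c (k+1) := hcinf_le (k+1)
  have hμγ : μ ≤ γ := min_le_left _ _
  linarith
end

section
/- For any lift F (continuous F : ℝ → ℝ with F(x+1) = F(x)+1), one has inf_{x∈ℝ} liminf_{n→∞} F^n(x)/n = ρ(F^-) and sup_{x∈ℝ} limsup_{n→∞} F^n(x)/n = ρ(F^+); that is, the rotation interval satisfies I(F) = [ρ(F^-), ρ(F^+)]. -/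
open Real Filter Set Topology

/-- `α(F) = inf_x liminf_n F^n(x)/n`. -/
noncomputable def rotLow (F : ℝ → ℝ) : ℝ :=
  ⨅ x : ℝ, Filter.liminf (fun n : ℕ => F^[n] x / (n : ℝ)) Filter.atTop

/-- `β(F) = sup_x limsup_n F^n(x)/n`. -/
noncomputable def rotHigh (F : ℝ → ℝ) : ℝ :=
  ⨆ x : ℝ, Filter.limsup (fun n : ℕ => F^[n] x / (n : ℝ)) Filter.atTop

/-- The monotone upper bound `F⁺(x) = sup_{y ≤ x} F(y)` of a lift `F`. -/
noncomputable def upperBound (F : ℝ → ℝ) : ℝ → ℝ := fun x => sSup (F '' Set.Iic x)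

/-- The monotone lower bound `F⁻(x) = inf_{y ≥ x} F(y)` of a lift `F`. -/
noncomputable def lowerBound (F : ℝ → ℝ) : ℝ → ℝ := fun x => sInf (F '' Set.Ici x)

namespace Stmt8Aux

variable {F : ℝ → ℝ}

lemma le_of_forall_pos_le_add' {a b : ℝ} (h : ∀ ε : ℝ, 0 < ε → a ≤ b + ε) : a ≤ b := by
  by_contra hc
  push_neg at hc
  have := h ((a - b) / 2) (by linarith)
  linarith

lemma div_mono_num {a b c : ℝ} (h : a ≤ b) (hc : 0 ≤ c) : a / c ≤ b / c := by
  rcases eq_or_lt_of_le hc with h0 | h0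
  · rw [← h0, div_zero, div_zero]
  · exact (div_le_div_iff_of_pos_right h0).2 h

lemma map_add_int (hFl : ∀ x, F (x + 1) = F x + 1) (x : ℝ) (k : ℤ) :
    F (x + k) = F x + k := by
  have hg : Function.Periodic (fun y => F y - y) 1 := fun y => by
    simp only [hFl y]; ring
  have h2 : F (x + (k : ℝ)) - (x + (k : ℝ)) = F x - x := by
    simpa using hg.int_mul k x
  linarith

lemma iter_add_int (hFl : ∀ x, F (x + 1) = F x + 1) (n : ℕ) (x : ℝ) (k : ℤ) :
    F^[n] (x + k) = F^[n] x + k := by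
  induction n with
  | zero => simp
  | succ n ih =>
    rw [Function.iterate_succ_apply', Function.iterate_succ_apply', ih, map_add_int hFl]

lemma lower_spec (hFc : Continuous F) (hFl : ∀ x, F (x + 1) = F x + 1) (a : ℝ) :
    ∃ w, a ≤ w ∧ F w = lowerBound F a ∧ ∀ z, a ≤ z → lowerBound F a ≤ F z := by
  obtain ⟨w, hw, hmin⟩ := isCompact_Icc.exists_isMinOn
    (nonempty_Icc.2 (by linarith : a ≤ a + 1)) hFc.continuousOn
  have hmin' : ∀ z ∈ Set.Icc a (a + 1), F w ≤ F z := fun z hz => hmin hz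
  have hlb : ∀ z, a ≤ z → F w ≤ F z := by
    intro z hz
    set k := ⌊z - a⌋ with hk
    have hk0 : (0 : ℤ) ≤ k := Int.le_floor.2 (by simpa using sub_nonneg.2 hz)
    have hfl := Int.floor_le (z - a)
    have hfu := Int.lt_floor_add_one (z - a)
    have h1 : a ≤ z - k := by linarith
    have h2 : z - k ≤ a + 1 := by linarith
    have h3 : F (z - k) = F z - k := by
      have h := map_add_int hFl (z - k) k
      have h4 : z - (k : ℝ) + k = z := by ring
      rw [h4] at h
      linarith
    have hk0' : (0 : ℝ) ≤ (k : ℝ) := by exact_mod_cast hk0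
    calc F w ≤ F (z - k) := hmin' _ ⟨h1, h2⟩
      _ = F z - k := h3
      _ ≤ F z := by linarith
  have hleast : IsLeast (F '' Set.Ici a) (F w) :=
    ⟨⟨w, hw.1, rfl⟩, by rintro _ ⟨z, hz, rfl⟩; exact hlb z hz⟩
  have heq : lowerBound F a = F w := hleast.csInf_eq
  exact ⟨w, hw.1, heq.symm, fun z hz => heq ▸ hlb z hz⟩

lemma upper_spec (hFc : Continuous F) (hFl : ∀ x, F (x + 1) = F x + 1) (a : ℝ) :
    ∃ w, w ≤ a ∧ F w = upperBound F a ∧ ∀ z, z ≤ a → F z ≤ upperBound F a := by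
  obtain ⟨w, hw, hmax⟩ := isCompact_Icc.exists_isMaxOn
    (nonempty_Icc.2 (by linarith : a - 1 ≤ a)) hFc.continuousOn
  have hmax' : ∀ z ∈ Set.Icc (a - 1) a, F z ≤ F w := fun z hz => hmax hz
  have hub : ∀ z, z ≤ a → F z ≤ F w := by
    intro z hz
    set k := ⌊a - z⌋ with hk
    have hk0 : (0 : ℤ) ≤ k := Int.le_floor.2 (by simpa using sub_nonneg.2 hz)
    have hfl := Int.floor_le (a - z)
    have hfu := Int.lt_floor_add_one (a - z)
    have h1 : a - 1 ≤ z + k := by linarith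
    have h2 : z + k ≤ a := by linarith
    have h3 : F (z + k) = F z + k := map_add_int hFl z k
    have hk0' : (0 : ℝ) ≤ (k : ℝ) := by exact_mod_cast hk0
    calc F z ≤ F z + k := by linarith
      _ = F (z + k) := h3.symm
      _ ≤ F w := hmax' _ ⟨h1, h2⟩
  have hgreat : IsGreatest (F '' Set.Iic a) (F w) :=
    ⟨⟨w, hw.2, rfl⟩, by rintro _ ⟨z, hz, rfl⟩; exact hub z hz⟩
  have heq : upperBound F a = F w := hgreat.csSup_eq
  exact ⟨w, hw.2, heq.symm, fun z hz => heq ▸ hub z hz⟩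

lemma lower_mono (hFc : Continuous F) (hFl : ∀ x, F (x + 1) = F x + 1) :
    Monotone (lowerBound F) := by
  intro x x' hxx'
  obtain ⟨w', hw', hFw', _⟩ := lower_spec hFc hFl x'
  obtain ⟨_, _, _, hlb⟩ := lower_spec hFc hFl x
  rw [← hFw']
  exact hlb _ (le_trans hxx' hw')

lemma upper_mono (hFc : Continuous F) (hFl : ∀ x, F (x + 1) = F x + 1) :
    Monotone (upperBound F) := by
  intro x x' hxx'
  obtain ⟨w, hw, hFw, _⟩ := lower_spec hFc hFl x
  obtain ⟨w1, hw1, hFw1, _⟩ := upper_spec hFc hFl x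
  obtain ⟨_, _, _, hub⟩ := upper_spec hFc hFl x'
  rw [← hFw1]
  exact hub _ (le_trans hw1 hxx')

lemma lower_add_one (hFc : Continuous F) (hFl : ∀ x, F (x + 1) = F x + 1) (x : ℝ) :
    lowerBound F (x + 1) = lowerBound F x + 1 := by
  obtain ⟨w, hw, hFw, hlb⟩ := lower_spec hFc hFl x
  obtain ⟨w', hw', hFw', hlb'⟩ := lower_spec hFc hFl (x + 1)
  have h1 : lowerBound F (x + 1) ≤ lowerBound F x + 1 := by
    have h := hlb' (w + 1) (by linarith)
    rw [hFl w, hFw] at h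
    exact h
  have h2 : lowerBound F x + 1 ≤ lowerBound F (x + 1) := by
    have h := hlb (w' - 1) (by linarith)
    have h3 : F (w' - 1) + 1 = F w' := by
      have h4 := hFl (w' - 1)
      have h5 : w' - 1 + 1 = w' := by ring
      rw [h5] at h4
      linarith
    rw [hFw'] at h3
    linarith
  linarith

lemma upper_add_one (hFc : Continuous F) (hFl : ∀ x, F (x + 1) = F x + 1) (x : ℝ) :
    upperBound F (x + 1) = upperBound F x + 1 := by
  obtain ⟨w, hw, hFw, hub⟩ := upper_spec hFc hFl x
  obtain ⟨w', hw', hFw', hub'⟩ := upper_spec hFc hFl (x + 1)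
  have h1 : upperBound F x + 1 ≤ upperBound F (x + 1) := by
    have h := hub' (w + 1) (by linarith)
    rw [hFl w, hFw] at h
    exact h
  have h2 : upperBound F (x + 1) ≤ upperBound F x + 1 := by
    have h := hub (w' - 1) (by linarith)
    have h3 : F (w' - 1) + 1 = F w' := by
      have h4 := hFl (w' - 1)
      have h5 : w' - 1 + 1 = w' := by ring
      rw [h5] at h4
      linarith
    rw [hFw'] at h3
    linarith
  linarith

/-- `F⁻` as a `CircleDeg1Lift`. -/
noncomputable def lowerLift (F : ℝ → ℝ) (hFc : Continuous F)
    (hFl : ∀ x, F (x + 1) = F x + 1) : CircleDeg1Lift :=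
  ⟨⟨lowerBound F, lower_mono hFc hFl⟩, lower_add_one hFc hFl⟩

/-- `F⁺` as a `CircleDeg1Lift`. -/
noncomputable def upperLift (F : ℝ → ℝ) (hFc : Continuous F)
    (hFl : ∀ x, F (x + 1) = F x + 1) : CircleDeg1Lift :=
  ⟨⟨upperBound F, upper_mono hFc hFl⟩, upper_add_one hFc hFl⟩

lemma lower_le (hFc : Continuous F) (hFl : ∀ x, F (x + 1) = F x + 1) (x : ℝ) :
    lowerBound F x ≤ F x := by
  obtain ⟨_, _, _, hlb⟩ := lower_spec hFc hFl x
  exact hlb x le_rfl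

lemma le_upper (hFc : Continuous F) (hFl : ∀ x, F (x + 1) = F x + 1) (x : ℝ) :
    F x ≤ upperBound F x := by
  obtain ⟨_, _, _, hub⟩ := upper_spec hFc hFl x
  exact hub x le_rfl

lemma iter_lower_le (hFc : Continuous F) (hFl : ∀ x, F (x + 1) = F x + 1) (n : ℕ) (x : ℝ) :
    (lowerBound F)^[n] x ≤ F^[n] x := by
  induction n with
  | zero => exact le_rfl
  | succ n ih =>
    rw [Function.iterate_succ_apply', Function.iterate_succ_apply']
    calc (lowerBound F) ((lowerBound F)^[n] x) ≤ (lowerBound F) (F^[n] x) :=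
          lower_mono hFc hFl ih
      _ ≤ F (F^[n] x) := lower_le hFc hFl _

lemma iter_le_upper (hFc : Continuous F) (hFl : ∀ x, F (x + 1) = F x + 1) (n : ℕ) (x : ℝ) :
    F^[n] x ≤ (upperBound F)^[n] x := by
  induction n with
  | zero => exact le_rfl
  | succ n ih =>
    rw [Function.iterate_succ_apply', Function.iterate_succ_apply']
    calc F (F^[n] x) ≤ upperBound F (F^[n] x) := le_upper hFc hFl _
      _ ≤ upperBound F ((upperBound F)^[n] x) := upper_mono hFc hFl ih

lemma key_low (hFc : Continuous F) (hFl : ∀ x, F (x + 1) = F x + 1) (n : ℕ) (x : ℝ) :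
    ∃ y, x ≤ y ∧ F^[n] y ≤ (lowerBound F)^[n] x := by
  induction n with
  | zero => exact ⟨x, le_rfl, le_rfl⟩
  | succ n ih =>
    obtain ⟨y, hxy, hy⟩ := ih
    obtain ⟨w, haw, hFw, _⟩ := lower_spec hFc hFl ((lowerBound F)^[n] x)
    have hw0 : F^[n] y ≤ w := le_trans hy haw
    set m : ℕ := ⌈w - F^[n] y⌉₊ with hm
    have hmle : w ≤ F^[n] y + m := by
      have := Nat.le_ceil (w - F^[n] y)
      rw [← hm] at this
      linarith
    have himg : w ∈ F^[n] '' Set.Icc y (y + m) := by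
      apply intermediate_value_Icc (le_add_of_nonneg_right m.cast_nonneg)
        (hFc.iterate n).continuousOn
      refine ⟨hw0, ?_⟩
      have h := iter_add_int hFl n y (m : ℤ)
      push_cast at h
      rw [h]
      exact hmle
    obtain ⟨z, hz, hzw⟩ := himg
    refine ⟨z, le_trans hxy hz.1, ?_⟩
    rw [Function.iterate_succ_apply', Function.iterate_succ_apply', hzw, hFw]

lemma key_high (hFc : Continuous F) (hFl : ∀ x, F (x + 1) = F x + 1) (n : ℕ) (x : ℝ) :
    ∃ y, y ≤ x ∧ (upperBound F)^[n] x ≤ F^[n] y := by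
  induction n with
  | zero => exact ⟨x, le_rfl, le_rfl⟩
  | succ n ih =>
    obtain ⟨y, hxy, hy⟩ := ih
    obtain ⟨w, haw, hFw, _⟩ := upper_spec hFc hFl ((upperBound F)^[n] x)
    have hw0 : w ≤ F^[n] y := le_trans haw hy
    set m : ℕ := ⌈F^[n] y - w⌉₊ with hm
    have hmle : F^[n] y - m ≤ w := by
      have := Nat.le_ceil (F^[n] y - w)
      rw [← hm] at this
      linarith
    have himg : w ∈ F^[n] '' Set.Icc (y - m) y := by
      apply intermediate_value_Icc (sub_le_self y m.cast_nonneg)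
        (hFc.iterate n).continuousOn
      refine ⟨?_, hw0⟩
      have h := iter_add_int hFl n (y - (m : ℕ)) (m : ℤ)
      push_cast at h
      have h2 : y - (m : ℝ) + (m : ℝ) = y := by ring
      rw [h2] at h
      linarith
    obtain ⟨z, hz, hzw⟩ := himg
    refine ⟨z, le_trans hz.2 hxy, ?_⟩
    rw [Function.iterate_succ_apply', Function.iterate_succ_apply', hzw, hFw]

end Stmt8Aux

/-- For any lift `F`, one has `α(F) = ρ(F⁻)` and `β(F) = ρ(F⁺)`; in particular the
rotation numbers of the monotone bounds `F⁻`, `F⁺` exist (independently of the point),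
and `I(F) = [ρ(F⁻), ρ(F⁺)]`. -/
theorem stmt_8 (F : ℝ → ℝ) (hFc : Continuous F) (hFl : ∀ x, F (x + 1) = F x + 1) :
    ∃ ρm ρp : ℝ,
      (∀ x : ℝ, Filter.Tendsto (fun n : ℕ => (lowerBound F)^[n] x / (n : ℝ))
        Filter.atTop (nhds ρm)) ∧
      (∀ x : ℝ, Filter.Tendsto (fun n : ℕ => (upperBound F)^[n] x / (n : ℝ))
        Filter.atTop (nhds ρp)) ∧
      rotLow F = ρm ∧ rotHigh F = ρp := by
  classical
  set Fm := Stmt8Aux.lowerLift F hFc hFl with hFmdef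
  set Fp := Stmt8Aux.upperLift F hFc hFl with hFpdef
  set ρm := Fm.translationNumber with hρmdef
  set ρp := Fp.translationNumber with hρpdef
  -- generic: iterates over n of a CircleDeg1Lift divided by n tend to τ
  have htends : ∀ (G : CircleDeg1Lift) (x : ℝ),
      Tendsto (fun n : ℕ => (⇑G)^[n] x / (n : ℝ)) atTop (𝓝 G.translationNumber) := by
    intro G x
    have h1 := G.tendsto_translationNumber x
    have h2 := tendsto_const_div_atTop_nhds_zero_nat x
    have h3 := h1.add h2
    rw [add_zero] at h3
    refine h3.congr fun n => ?_
    rw [← add_div, sub_add_cancel, CircleDeg1Lift.coe_pow]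
  have hm : ∀ x : ℝ, Tendsto (fun n : ℕ => (lowerBound F)^[n] x / (n : ℝ)) atTop (𝓝 ρm) :=
    fun x => htends Fm x
  have hp : ∀ x : ℝ, Tendsto (fun n : ℕ => (upperBound F)^[n] x / (n : ℝ)) atTop (𝓝 ρp) :=
    fun x => htends Fp x
  have hcmp : ∀ (n : ℕ) (x : ℝ),
      (lowerBound F)^[n] x / (n : ℝ) ≤ F^[n] x / (n : ℝ) ∧
      F^[n] x / (n : ℝ) ≤ (upperBound F)^[n] x / (n : ℝ) := fun n x =>
    ⟨Stmt8Aux.div_mono_num (Stmt8Aux.iter_lower_le hFc hFl n x) n.cast_nonneg,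
     Stmt8Aux.div_mono_num (Stmt8Aux.iter_le_upper hFc hFl n x) n.cast_nonneg⟩
  have hBge : ∀ x : ℝ, IsBoundedUnder (· ≥ ·) atTop (fun n : ℕ => F^[n] x / (n : ℝ)) :=
    fun x => ((hm x).isBoundedUnder_ge).mono_ge (Eventually.of_forall fun n => (hcmp n x).1)
  have hBle : ∀ x : ℝ, IsBoundedUnder (· ≤ ·) atTop (fun n : ℕ => F^[n] x / (n : ℝ)) :=
    fun x => ((hp x).isBoundedUnder_le).mono_le (Eventually.of_forall fun n => (hcmp n x).2)
  have hliminf_ge : ∀ x : ℝ, ρm ≤ liminf (fun n : ℕ => F^[n] x / (n : ℝ)) atTop := by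
    intro x
    have h := liminf_le_liminf (Eventually.of_forall fun n => (hcmp n x).1)
      ((hm x).isBoundedUnder_ge) ((hBle x).isCoboundedUnder_ge)
    rwa [(hm x).liminf_eq] at h
  have hlimsup_le : ∀ x : ℝ, limsup (fun n : ℕ => F^[n] x / (n : ℝ)) atTop ≤ ρp := by
    intro x
    have h := limsup_le_limsup (Eventually.of_forall fun n => (hcmp n x).2)
      ((hBge x).isCoboundedUnder_le) ((hp x).isBoundedUnder_le)
    rwa [(hp x).limsup_eq] at h
  have hBddBelow : BddBelow (range fun x : ℝ =>
      liminf (fun n : ℕ => F^[n] x / (n : ℝ)) atTop) :=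
    ⟨ρm, by rintro _ ⟨x, rfl⟩; exact hliminf_ge x⟩
  have hBddAbove : BddAbove (range fun x : ℝ =>
      limsup (fun n : ℕ => F^[n] x / (n : ℝ)) atTop) :=
    ⟨ρp, by rintro _ ⟨x, rfl⟩; exact hlimsup_le x⟩
  have hrotLow_ge : ρm ≤ rotLow F := le_ciInf hliminf_ge
  have hrotHigh_le : rotHigh F ≤ ρp := ciSup_le hlimsup_le
  have hmp : ρm ≤ ρp := le_of_tendsto_of_tendsto' (hm 0) (hp 0)
    (fun n => le_trans (hcmp n 0).1 (hcmp n 0).2)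
  rcases eq_or_lt_of_le hmp with heq | hlt
  · -- degenerate case: everything converges
    have hux : ∀ x : ℝ, Tendsto (fun n : ℕ => F^[n] x / (n : ℝ)) atTop (𝓝 ρm) := fun x =>
      tendsto_of_tendsto_of_tendsto_of_le_of_le (hm x) (heq ▸ hp x)
        (fun n => (hcmp n x).1) (fun n => (hcmp n x).2)
    refine ⟨ρm, ρp, hm, hp, ?_, ?_⟩
    · exact le_antisymm ((ciInf_le hBddBelow 0).trans_eq (hux 0).liminf_eq) hrotLow_ge
    · refine le_antisymm hrotHigh_le ?_
      have h := le_ciSup hBddAbove (0 : ℝ)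
      rwa [(hux 0).limsup_eq, heq] at h
  · -- main case: find periodic points with rotation number p/q strictly inside
    have hexc : ∀ (p : ℤ) (q : ℕ), 0 < q → ρm < (p : ℝ) / q → (p : ℝ) / q < ρp →
        ∃ c : ℝ, F^[q] c = c + p := by
      intro p q hq h1 h2
      have hq' : (0 : ℝ) < q := by exact_mod_cast hq
      have hx1 : ∃ x : ℝ, (lowerBound F)^[q] x < x + p := by
        by_contra hcon
        push_neg at hcon
        have hle : (p : ℝ) ≤ (Fm ^ q).translationNumber :=
          (Fm ^ q).le_translationNumber_of_add_le fun x => by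
            rw [CircleDeg1Lift.coe_pow]; exact hcon x
        rw [CircleDeg1Lift.translationNumber_pow] at hle
        have : (p : ℝ) / q ≤ ρm := by rw [div_le_iff₀ hq']; linarith
        linarith
      have hx2 : ∃ x : ℝ, x + p < (upperBound F)^[q] x := by
        by_contra hcon
        push_neg at hcon
        have hle : (Fp ^ q).translationNumber ≤ (p : ℝ) :=
          (Fp ^ q).translationNumber_le_of_le_add fun x => by
            rw [CircleDeg1Lift.coe_pow]; exact hcon x
        rw [CircleDeg1Lift.translationNumber_pow] at hle
        have : ρp ≤ (p : ℝ) / q := by rw [le_div_iff₀ hq']; linarith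
        linarith
      obtain ⟨x₁, hx₁⟩ := hx1
      obtain ⟨y₁, hxy₁, hy₁⟩ := Stmt8Aux.key_low hFc hFl q x₁
      obtain ⟨x₂, hx₂⟩ := hx2
      obtain ⟨y₂, hxy₂, hy₂⟩ := Stmt8Aux.key_high hFc hFl q x₂
      have hg : Continuous fun x : ℝ => F^[q] x - (x + p) :=
        (hFc.iterate q).sub (continuous_id.add continuous_const)
      have h01 : F^[q] y₁ - (y₁ + (p : ℝ)) ≤ 0 := by linarith
      have h02 : (0 : ℝ) ≤ F^[q] y₂ - (y₂ + (p : ℝ)) := by linarith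
      have hsub := intermediate_value_uIcc (a := y₁) (b := y₂)
        (f := fun x : ℝ => F^[q] x - (x + p)) hg.continuousOn
      have hmem : (0 : ℝ) ∈ uIcc (F^[q] y₁ - (y₁ + (p : ℝ))) (F^[q] y₂ - (y₂ + (p : ℝ))) :=
        Set.mem_uIcc.2 (Or.inl ⟨h01, h02⟩)
      obtain ⟨c, -, hc⟩ := hsub hmem
      exact ⟨c, by dsimp at hc; linarith⟩
    -- from a periodic point: bounds on liminf/limsup at that point
    have hpt : ∀ (c : ℝ) (q : ℕ) (p : ℤ), 0 < q → F^[q] c = c + p →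
        liminf (fun n : ℕ => F^[n] c / (n : ℝ)) atTop ≤ (p : ℝ) / q ∧
        (p : ℝ) / q ≤ limsup (fun n : ℕ => F^[n] c / (n : ℝ)) atTop := by
      intro c q p hq hc
      have hq' : (0 : ℝ) < q := by exact_mod_cast hq
      have hiter : ∀ k : ℕ, F^[q * k] c = c + (k : ℝ) * (p : ℝ) := by
        intro k
        induction k with
        | zero => simp
        | succ k ih =>
          have hqe : q * (k + 1) = q * k + q := by ring
          rw [hqe, Function.iterate_add_apply, hc, Stmt8Aux.iter_add_int hFl, ih]
          push_cast
          ring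
      have hsubseq : Tendsto (fun k : ℕ => F^[q * k] c / ((q * k : ℕ) : ℝ)) atTop
          (𝓝 ((p : ℝ) / q)) := by
        have h0 : Tendsto (fun k : ℕ => (c / q) / (k : ℝ) + (p : ℝ) / q) atTop
            (𝓝 (0 + (p : ℝ) / q)) :=
          (tendsto_const_div_atTop_nhds_zero_nat (c / q)).add tendsto_const_nhds
        rw [zero_add] at h0
        refine h0.congr' ?_
        filter_upwards [eventually_ne_atTop 0] with k hk
        have hk' : (0 : ℝ) < (k : ℝ) := by
          exact_mod_cast Nat.pos_of_ne_zero hk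
        rw [hiter k]
        push_cast
        field_simp
      constructor
      · refine Stmt8Aux.le_of_forall_pos_le_add' fun ε hε => ?_
        have hev : ∀ᶠ k in atTop,
            F^[q * k] c / ((q * k : ℕ) : ℝ) < (p : ℝ) / q + ε :=
          hsubseq.eventually_lt_const (by linarith)
        obtain ⟨K, hK⟩ := eventually_atTop.1 hev
        refine liminf_le_of_frequently_le ?_ (hBge c)
        rw [frequently_atTop]
        intro N
        refine ⟨q * max K N, ?_, ?_⟩
        · calc N ≤ max K N := le_max_right _ _
            _ ≤ q * max K N := Nat.le_mul_of_pos_left _ hq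
        · exact (hK _ (le_max_left _ _)).le
      · refine Stmt8Aux.le_of_forall_pos_le_add' fun ε hε => ?_
        have hev : ∀ᶠ k in atTop,
            (p : ℝ) / q - ε < F^[q * k] c / ((q * k : ℕ) : ℝ) :=
          hsubseq.eventually_const_lt (by linarith)
        obtain ⟨K, hK⟩ := eventually_atTop.1 hev
        have hfreq : (p : ℝ) / q - ε ≤ limsup (fun n : ℕ => F^[n] c / (n : ℝ)) atTop := by
          refine le_limsup_of_frequently_le ?_ (hBle c)
          rw [frequently_atTop]
          intro N
          refine ⟨q * max K N, ?_, ?_⟩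
          · calc N ≤ max K N := le_max_right _ _
              _ ≤ q * max K N := Nat.le_mul_of_pos_left _ hq
          · exact (hK _ (le_max_left _ _)).le
        linarith
    have hrotLow_le : rotLow F ≤ ρm := by
      refine Stmt8Aux.le_of_forall_pos_le_add' fun ε hε => ?_
      obtain ⟨r, hr1, hr2⟩ := exists_rat_btwn (lt_min hlt (lt_add_of_pos_right ρm hε))
      rw [lt_min_iff] at hr2
      have hrq : 0 < r.den := r.pos
      have hcast : (r : ℝ) = (r.num : ℝ) / (r.den : ℝ) := by
        rw [Rat.cast_def]
      obtain ⟨c, hc⟩ := hexc r.num r.den hrq (by rw [← hcast]; exact hr1)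
        (by rw [← hcast]; exact hr2.1)
      have h1 := (hpt c r.den r.num hrq hc).1
      have h2 : rotLow F ≤ liminf (fun n : ℕ => F^[n] c / (n : ℝ)) atTop :=
        ciInf_le hBddBelow c
      have h3 := hr2.2
      rw [hcast] at h3
      linarith
    have hrotHigh_ge : ρp ≤ rotHigh F := by
      refine Stmt8Aux.le_of_forall_pos_le_add' fun ε hε => ?_
      obtain ⟨r, hr1, hr2⟩ := exists_rat_btwn
        (max_lt hlt (sub_lt_self ρp hε) : max ρm (ρp - ε) < ρp)
      rw [max_lt_iff] at hr1
      have hrq : 0 < r.den := r.pos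
      have hcast : (r : ℝ) = (r.num : ℝ) / (r.den : ℝ) := by
        rw [Rat.cast_def]
      obtain ⟨c, hc⟩ := hexc r.num r.den hrq (by rw [← hcast]; exact hr1.1)
        (by rw [← hcast]; exact hr2)
      have h1 := (hpt c r.den r.num hrq hc).2
      have h2 : limsup (fun n : ℕ => F^[n] c / (n : ℝ)) atTop ≤ rotHigh F :=
        le_ciSup hBddAbove c
      have h3 := hr1.2
      rw [hcast] at h3
      linarith
    exact ⟨ρm, ρp, hm, hp, le_antisymm hrotLow_le hrotLow_ge,
      le_antisymm hrotHigh_le hrotHigh_ge⟩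
end

section
/- Let F be a lift (continuous F : ℝ → ℝ with F(x+1) = F(x)+1). For each ω ∈ [ρ(F^-), ρ(F^+)], there exists a continuous nondecreasing lift G with ρ(G) = ω such that G coincides with F at every point where G is not locally constant: for every x ∈ ℝ such that G is non-constant on every neighborhood of x, G(x) = F(x). -/
set_option linter.unusedSectionVars false
set_option maxHeartbeats 1000000

open Real Filter Set

section lifts
variable {H : ℝ → ℝ}

lemma lift_add_int (hHl : ∀ x, H (x + 1) = H x + 1) : ∀ (n : ℤ) (x : ℝ), H (x + n) = H x + n := by
  intro n
  induction n using Int.induction_on with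
  | zero => simp
  | succ k ih =>
    intro x
    have e : x + ((k : ℤ) + 1 : ℤ) = (x + (k : ℤ)) + 1 := by push_cast; ring
    rw [e, hHl, ih x]; push_cast; ring
  | pred k ih =>
    intro x
    have e : x + (-(k : ℤ) - 1 : ℤ) + 1 = x + (-(k:ℤ) : ℤ) := by push_cast; ring
    have h2 := hHl (x + (-(k:ℤ) - 1 : ℤ))
    rw [e, ih x] at h2
    push_cast at h2 ⊢
    linarith

lemma lift_fract (hHl : ∀ x, H (x + 1) = H x + 1) (x : ℝ) :
    H x = H (Int.fract x) + ⌊x⌋ := by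
  have := lift_add_int hHl ⌊x⌋ (Int.fract x)
  rwa [Int.fract_add_floor] at this

lemma lift_bddAbove_Iic (hHc : Continuous H) (hHl : ∀ x, H (x + 1) = H x + 1) (x : ℝ) :
    BddAbove (H '' Set.Iic x) := by
  refine ⟨sSup (H '' Set.Icc (0:ℝ) 1) + x, ?_⟩
  rintro z ⟨y, hy, rfl⟩
  have h1 : H y = H (Int.fract y) + ⌊y⌋ := lift_fract hHl y
  have h2 : H (Int.fract y) ≤ sSup (H '' Set.Icc (0:ℝ) 1) :=
    le_csSup (isCompact_Icc.bddAbove_image hHc.continuousOn)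
      ⟨Int.fract y, ⟨Int.fract_nonneg y, (Int.fract_lt_one y).le⟩, rfl⟩
  have h3 : (⌊y⌋ : ℝ) ≤ x := (Int.floor_le y).trans hy
  linarith

lemma lift_bddBelow_Ici (hHc : Continuous H) (hHl : ∀ x, H (x + 1) = H x + 1) (x : ℝ) :
    BddBelow (H '' Set.Ici x) := by
  refine ⟨sInf (H '' Set.Icc (0:ℝ) 1) + (x - 1), ?_⟩
  rintro z ⟨y, hy, rfl⟩
  have h1 : H y = H (Int.fract y) + ⌊y⌋ := lift_fract hHl y
  have h2 : sInf (H '' Set.Icc (0:ℝ) 1) ≤ H (Int.fract y) :=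
    csInf_le (isCompact_Icc.bddBelow_image hHc.continuousOn)
      ⟨Int.fract y, ⟨Int.fract_nonneg y, (Int.fract_lt_one y).le⟩, rfl⟩
  have h3 : x - 1 ≤ (⌊y⌋ : ℝ) := by
    have := Int.sub_one_lt_floor y
    have : y - 1 < ⌊y⌋ := by linarith [Int.sub_one_lt_floor y]
    linarith [hy.out]
  linarith

end lifts

section ub
variable {H : ℝ → ℝ} (hHc : Continuous H) (hHl : ∀ x, H (x + 1) = H x + 1)
include hHc hHl

omit hHc hHl in
lemma ub_nonempty (x : ℝ) : (H '' Set.Iic x).Nonempty := ⟨H x, x, le_refl x, rfl⟩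

lemma le_ub' {x y : ℝ} (h : y ≤ x) : H y ≤ upperBound H x :=
  le_csSup (lift_bddAbove_Iic hHc hHl x) ⟨y, h, rfl⟩

lemma le_ub (x : ℝ) : H x ≤ upperBound H x := le_ub' hHc hHl (le_refl x)

omit hHc hHl in
lemma ub_le {x B : ℝ} (hB : ∀ y ≤ x, H y ≤ B) : upperBound H x ≤ B := by
  refine csSup_le (ub_nonempty x) ?_
  rintro z ⟨y, hy, rfl⟩; exact hB y hy

lemma ub_mono : Monotone (upperBound H) := by
  intro a b hab
  refine ub_le fun y hy => le_ub' hHc hHl (hy.trans hab)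

lemma ub_lift (x : ℝ) : upperBound H (x + 1) = upperBound H x + 1 := by
  refine le_antisymm ?_ ?_
  · refine ub_le fun y hy => ?_
    have : H (y - 1) ≤ upperBound H x := le_ub' hHc hHl (by linarith : y - 1 ≤ x)
    have h2 : H ((y - 1) + 1) = H (y-1) + 1 := hHl _
    simp only [sub_add_cancel] at h2
    linarith
  · have : upperBound H x ≤ upperBound H (x+1) - 1 := by
      refine ub_le fun y hy => ?_
      have : H (y + 1) ≤ upperBound H (x+1) := le_ub' hHc hHl (by linarith : y + 1 ≤ x + 1)
      rw [hHl] at this; linarith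
    linarith

lemma lift_uc (ε : ℝ) (hε : 0 < ε) :
    ∃ δ > 0, ∀ x y : ℝ, |x - y| ≤ δ → |H x - H y| ≤ ε := by
  have huc : UniformContinuousOn H (Set.Icc (-1 : ℝ) 2) :=
    isCompact_Icc.uniformContinuousOn_of_continuous hHc.continuousOn
  rw [Metric.uniformContinuousOn_iff] at huc
  obtain ⟨δ0, hδ0, hδ⟩ := huc ε hε
  refine ⟨min (δ0 / 2) (1/2), by positivity, fun x y hxy => ?_⟩
  have h1 : |x - y| ≤ 1/2 := hxy.trans (min_le_right _ _)
  have h2 : |x - y| < δ0 := lt_of_le_of_lt (hxy.trans (min_le_left _ _)) (by linarith)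
  set n := ⌊x⌋ with hn
  have hx1 : Int.fract x ∈ Set.Icc (-1 : ℝ) 2 :=
    ⟨by linarith [Int.fract_nonneg x], by linarith [(Int.fract_lt_one x).le]⟩
  have hy1 : y - n ∈ Set.Icc (-1 : ℝ) 2 := by
    have hfx : x - n = Int.fract x := rfl
    have := Int.fract_nonneg x
    have := (Int.fract_lt_one x).le
    constructor
    · have : -(1:ℝ)/2 ≤ y - x := by cases abs_le.1 h1; linarith
      have : x - n ≥ 0 := by rw [hfx]; exact Int.fract_nonneg x
      linarith
    · have : y - x ≤ 1/2 := by cases abs_le.1 h1; linarith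
      have hub : x - n < 1 := by rw [hfx]; exact Int.fract_lt_one x
      linarith
  have hdist : dist (x - (n:ℝ)) (y - n) < δ0 := by
    simp only [Real.dist_eq]
    have : x - n - (y - n) = x - y := by ring
    rw [this]; exact h2
  have := hδ (x - n) hx1 (y - n) hy1 hdist
  have ex : H (x - n) = H x - n := by
    have := lift_add_int hHl (-n) x
    push_cast at this
    rw [show x + -(n:ℝ) = x - n by ring] at this
    rw [this]; ring
  have ey : H (y - n) = H y - n := by
    have := lift_add_int hHl (-n) y
    push_cast at this
    rw [show y + -(n:ℝ) = y - n by ring] at this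
    rw [this]; ring
  rw [Real.dist_eq, ex, ey] at this
  have : |H x - H y| < ε := by
    have e : H x - (n:ℝ) - (H y - n) = H x - H y := by ring
    rwa [e] at this
  linarith

lemma ub_cont : Continuous (upperBound H) := by
  rw [Metric.continuous_iff]
  intro x ε hε
  obtain ⟨δ, hδ, hδ2⟩ := lift_uc hHc hHl (ε/2) (by linarith)
  refine ⟨δ, hδ, fun y hy => ?_⟩
  rw [Real.dist_eq] at hy ⊢
  have key : ∀ a b : ℝ, a ≤ b → b - a ≤ δ → upperBound H b ≤ upperBound H a + ε/2 := by
    intro a b hab hd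
    refine ub_le fun z hz => ?_
    rcases le_or_gt z a with h | h
    · linarith [le_ub' hHc hHl h]
    · have : |z - a| ≤ δ := by rw [abs_of_nonneg (by linarith)]; linarith
      have := hδ2 z a this
      have h2 := abs_le.1 this
      linarith [le_ub hHc hHl a]
  have habs := abs_le.1 hy.le
  rcases le_total y x with h | h
  · have h1 := key y x h (by cases habs; linarith)
    have h2 := ub_mono hHc hHl h
    rw [abs_of_nonpos (by linarith)]; linarith
  · have h1 := key x y h (by cases habs; linarith)
    have h2 := ub_mono hHc hHl h
    rw [abs_of_nonneg (by linarith)]; linarith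

end ub

section lb
variable {H : ℝ → ℝ} (hHc : Continuous H) (hHl : ∀ x, H (x + 1) = H x + 1)
include hHc hHl

omit hHc hHl in
lemma lb_nonempty (x : ℝ) : (H '' Set.Ici x).Nonempty := ⟨H x, x, le_refl x, rfl⟩

lemma lb_le' {x y : ℝ} (h : x ≤ y) : lowerBound H x ≤ H y :=
  csInf_le (lift_bddBelow_Ici hHc hHl x) ⟨y, h, rfl⟩

lemma lb_le (x : ℝ) : lowerBound H x ≤ H x := lb_le' hHc hHl (le_refl x)

omit hHc hHl in
lemma le_lb {x B : ℝ} (hB : ∀ y, x ≤ y → B ≤ H y) : B ≤ lowerBound H x := by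
  refine le_csInf (lb_nonempty x) ?_
  rintro z ⟨y, hy, rfl⟩; exact hB y hy

lemma lb_mono : Monotone (lowerBound H) := by
  intro a b hab
  exact le_lb fun y hy => lb_le' hHc hHl (hab.trans hy)

lemma lb_lift (x : ℝ) : lowerBound H (x + 1) = lowerBound H x + 1 := by
  refine le_antisymm ?_ ?_
  · have : lowerBound H (x+1) - 1 ≤ lowerBound H x := by
      refine le_lb fun y hy => ?_
      have h1 : lowerBound H (x+1) ≤ H (y + 1) := lb_le' hHc hHl (by linarith)
      rw [hHl] at h1; linarith
    linarith
  · refine le_lb fun y hy => ?_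
    have h1 : lowerBound H x ≤ H (y - 1) := lb_le' hHc hHl (by linarith)
    have h2 : H ((y - 1) + 1) = H (y - 1) + 1 := hHl _
    simp only [sub_add_cancel] at h2
    linarith

lemma lb_cont : Continuous (lowerBound H) := by
  rw [Metric.continuous_iff]
  intro x ε hε
  obtain ⟨δ, hδ, hδ2⟩ := lift_uc hHc hHl (ε/2) (by linarith)
  refine ⟨δ, hδ, fun y hy => ?_⟩
  rw [Real.dist_eq] at hy ⊢
  have key : ∀ a b : ℝ, a ≤ b → b - a ≤ δ → lowerBound H b - ε/2 ≤ lowerBound H a := by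
    intro a b hab hd
    refine le_lb fun z hz => ?_
    rcases le_or_gt b z with h | h
    · linarith [lb_le' hHc hHl h]
    · have : |z - b| ≤ δ := by rw [abs_of_nonpos (by linarith)]; linarith
      have h2 := abs_le.1 (hδ2 z b this)
      linarith [lb_le hHc hHl b]
  have habs := abs_le.1 hy.le
  rcases le_total y x with h | h
  · have h1 := key y x h (by cases habs; linarith)
    have h2 := lb_mono hHc hHl h
    rw [abs_of_nonpos (by linarith)]; linarith
  · have h1 := key x y h (by cases habs; linarith)
    have h2 := lb_mono hHc hHl h
    rw [abs_of_nonneg (by linarith)]; linarith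

/-- If `F⁺(x) ≠ F(x)` then `F⁺` is locally constant at `x`. -/
lemma ub_locally_const {x : ℝ} (hne : upperBound H x ≠ H x) :
    ∃ δ > 0, ∀ y, |y - x| < δ → upperBound H y = upperBound H x := by
  have hlt : H x < upperBound H x := lt_of_le_of_ne (le_ub hHc hHl x) (fun h => hne h.symm)
  obtain ⟨δ, hδ, hδ2⟩ : ∃ δ > 0, ∀ y, |y - x| ≤ δ → H y < upperBound H x := by
    obtain ⟨δ, hδ, h2⟩ := Metric.continuous_iff.1 hHc x (upperBound H x - H x) (by linarith)
    refine ⟨δ/2, by linarith, fun y hy => ?_⟩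
    have := h2 y (by rw [Real.dist_eq]; linarith)
    rw [Real.dist_eq] at this
    have := abs_lt.1 this
    linarith
  refine ⟨δ, hδ, fun y hy => ?_⟩
  have habs := abs_lt.1 hy
  rcases le_total x y with h | h
  · refine le_antisymm ?_ (ub_mono hHc hHl h)
    refine ub_le fun z hz => ?_
    rcases le_or_gt z x with h2 | h2
    · exact le_ub' hHc hHl h2
    · exact (hδ2 z (by rw [abs_of_nonneg (by linarith)]; linarith)).le.trans (le_refl _)
  · refine le_antisymm (ub_mono hHc hHl h) ?_
    -- sup over [y, x] is attained and < upperBound H x, so upperBound H x ≤ upperBound H y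
    rcases eq_or_lt_of_le h with rfl | hlt2
    · exact le_refl _
    obtain ⟨w, hw, hwmax⟩ := isCompact_Icc.exists_isMaxOn (Set.nonempty_Icc.2 h)
      hHc.continuousOn
    have hw2 : H w < upperBound H x := hδ2 w (by
      have := hw.1; have := hw.2
      rw [abs_le]; constructor <;> linarith)
    have hxle : upperBound H x ≤ max (upperBound H y) (H w) := by
      refine ub_le fun z hz => ?_
      rcases le_or_gt z y with h3 | h3
      · exact le_max_of_le_left (le_ub' hHc hHl h3)
      · exact le_max_of_le_right (hwmax ⟨h3.le, hz⟩)
    rcases max_cases (upperBound H y) (H w) with ⟨he, _⟩ | ⟨he, _⟩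
    · rwa [he] at hxle
    · rw [he] at hxle; linarith

/-- If `F⁻(x) ≠ F(x)` then `F⁻` is locally constant at `x`. -/
lemma lb_locally_const {x : ℝ} (hne : lowerBound H x ≠ H x) :
    ∃ δ > 0, ∀ y, |y - x| < δ → lowerBound H y = lowerBound H x := by
  have hlt : lowerBound H x < H x := lt_of_le_of_ne (lb_le hHc hHl x) hne
  obtain ⟨δ, hδ, hδ2⟩ : ∃ δ > 0, ∀ y, |y - x| ≤ δ → lowerBound H x < H y := by
    obtain ⟨δ, hδ, h2⟩ := Metric.continuous_iff.1 hHc x (H x - lowerBound H x) (by linarith)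
    refine ⟨δ/2, by linarith, fun y hy => ?_⟩
    have := h2 y (by rw [Real.dist_eq]; linarith)
    rw [Real.dist_eq] at this
    have := abs_lt.1 this
    linarith
  refine ⟨δ, hδ, fun y hy => ?_⟩
  have habs := abs_lt.1 hy
  rcases le_total y x with h | h
  · refine le_antisymm (lb_mono hHc hHl h) ?_
    refine le_lb fun z hz => ?_
    rcases le_or_gt x z with h2 | h2
    · exact lb_le' hHc hHl h2
    · exact (hδ2 z (by rw [abs_of_nonpos (by linarith)]; linarith)).le
  · refine le_antisymm ?_ (lb_mono hHc hHl h)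
    rcases eq_or_lt_of_le h with rfl | hlt2
    · exact le_refl _
    obtain ⟨w, hw, hwmin⟩ := isCompact_Icc.exists_isMinOn (Set.nonempty_Icc.2 h)
      hHc.continuousOn
    have hw2 : lowerBound H x < H w := hδ2 w (by
      have := hw.1; have := hw.2
      rw [abs_le]; constructor <;> linarith)
    have hxge : min (lowerBound H y) (H w) ≤ lowerBound H x := by
      refine le_lb fun z hz => ?_
      rcases le_or_gt y z with h3 | h3
      · exact min_le_of_left_le (lb_le' hHc hHl h3)
      · exact min_le_of_right_le (hwmin ⟨hz, h3.le⟩)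
    rcases min_cases (lowerBound H y) (H w) with ⟨he, _⟩ | ⟨he, _⟩
    · rwa [he] at hxge
    · rw [he] at hxge; linarith

end lb

lemma ub_of_monotone {H : ℝ → ℝ} (hm : Monotone H) : upperBound H = H := by
  funext x
  refine le_antisymm (csSup_le (ub_nonempty x) ?_) (le_csSup ⟨H x, ?_⟩ ⟨x, le_refl x, rfl⟩)
  · rintro z ⟨y, hy, rfl⟩; exact hm hy
  · rintro z ⟨y, hy, rfl⟩; exact hm hy

/-- Let `F` be a lift with `ρ(F⁻) = ρm`, `ρ(F⁺) = ρp`.  For each `ω ∈ [ρm, ρp]` there is a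
continuous nondecreasing lift `G` with `ρ(G) = ω` which coincides with `F` at every point
where `G` is not locally constant. -/
theorem stmt_9 (F : ℝ → ℝ) (hFc : Continuous F) (hFl : ∀ x, F (x + 1) = F x + 1)
    (ρm ρp : ℝ)
    (hρm : ∀ x : ℝ, Filter.Tendsto (fun n : ℕ => (lowerBound F)^[n] x / (n : ℝ))
      Filter.atTop (nhds ρm))
    (hρp : ∀ x : ℝ, Filter.Tendsto (fun n : ℕ => (upperBound F)^[n] x / (n : ℝ))
      Filter.atTop (nhds ρp))
    (ω : ℝ) (hω : ω ∈ Set.Icc ρm ρp) :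
    ∃ G : ℝ → ℝ, Continuous G ∧ Monotone G ∧ (∀ x, G (x + 1) = G x + 1) ∧
      (∀ x : ℝ, Filter.Tendsto (fun n : ℕ => G^[n] x / (n : ℝ)) Filter.atTop (nhds ω)) ∧
      (∀ x : ℝ, (∀ U ∈ nhds x, ∃ y ∈ U, G y ≠ G x) → G x = F x) := by
  obtain ⟨hρmω, hωρp⟩ := hω
  set lo := lowerBound F with hlo
  have hloC : Continuous lo := lb_cont hFc hFl
  have hloL : ∀ x, lo (x + 1) = lo x + 1 := lb_lift hFc hFl
  have hloM : Monotone lo := lb_mono hFc hFl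
  have hlole : ∀ x, lo x ≤ F x := lb_le hFc hFl
  set h : ℝ → ℝ → ℝ := fun t y => min (F y) (lo y + t) with hh
  have hhc : ∀ t, Continuous (h t) := fun t => hFc.min (hloC.add continuous_const)
  have hhl : ∀ t x, h t (x + 1) = h t x + 1 := by
    intro t x
    simp only [hh, hFl, hloL]
    rw [show lo x + 1 + t = (lo x + t) + 1 by ring, min_add_add_right]
  set G : ℝ → ℝ → ℝ := fun t => upperBound (h t) with hG
  have hGc : ∀ t, Continuous (G t) := fun t => ub_cont (hhc t) (hhl t)
  have hGm : ∀ t, Monotone (G t) := fun t => ub_mono (hhc t) (hhl t)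
  have hGl : ∀ t x, G t (x + 1) = G t x + 1 := fun t => ub_lift (hhc t) (hhl t)
  -- coincidence
  have hcoin : ∀ t, 0 ≤ t → ∀ x, (∀ U ∈ nhds x, ∃ y ∈ U, G t y ≠ G t x) → G t x = F x := by
    intro t ht x hx
    have h1 : G t x = h t x := by
      by_contra hne
      obtain ⟨δ, hδ, hc⟩ := ub_locally_const (hhc t) (hhl t) hne
      obtain ⟨y, hy, hyne⟩ := hx (Metric.ball x δ) (Metric.ball_mem_nhds x hδ)
      exact hyne (hc y (by simpa [Real.dist_eq] using hy))
    rcases min_cases (F x) (lo x + t) with ⟨hmin, _⟩ | ⟨hmin, hlt⟩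
    · rw [h1]; exact hmin
    · exfalso
      have hne2 : lo x ≠ F x := by intro he; rw [he] at hlt; linarith
      obtain ⟨δ1, hδ1, hc1⟩ := lb_locally_const hFc hFl hne2
      obtain ⟨δ2, hδ2, hc2⟩ : ∃ δ > 0, ∀ y, |y - x| < δ → lo x + t < F y := by
        obtain ⟨δ, hδ, h2⟩ := Metric.continuous_iff.1 hFc x (F x - (lo x + t)) (by linarith)
        refine ⟨δ, hδ, fun y hy => ?_⟩
        have := h2 y (by rwa [Real.dist_eq])
        rw [Real.dist_eq] at this
        have := abs_lt.1 this
        linarith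
      set δ := min δ1 δ2 with hδdef
      have hδpos : 0 < δ := lt_min hδ1 hδ2
      have hconst : ∀ y, |y - x| < δ → h t y = lo x + t := by
        intro y hy
        have e1 : lo y = lo x := hc1 y (hy.trans_le (min_le_left _ _))
        have e2 : lo x + t < F y := hc2 y (hy.trans_le (min_le_right _ _))
        simp only [hh, e1]
        exact min_eq_right e2.le
      have hGconst : ∀ y, |y - x| < δ → G t y = G t x := by
        intro y hy
        have hGx : G t x = lo x + t := by rw [h1]; rw [hconst x (by simpa using hδpos)]
        have habs := abs_lt.1 hy
        rcases le_total x y with hxy | hxy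
        · refine le_antisymm ?_ (hGm t hxy)
          refine ub_le fun z hz => ?_
          rcases le_or_gt z x with h2 | h2
          · exact le_ub' (hhc t) (hhl t) h2
          · have : |z - x| < δ := by rw [abs_of_nonneg (by linarith)]; linarith
            rw [hconst z this, ← hGx]
        · refine le_antisymm (hGm t hxy) ?_
          have : h t y ≤ G t y := le_ub (hhc t) (hhl t) y
          rw [hconst y hy, ← hGx] at this
          exact this
      obtain ⟨y, hy, hyne⟩ := hx (Metric.ball x δ) (Metric.ball_mem_nhds x hδpos)
      exact hyne (hGconst y (by simpa [Real.dist_eq] using hy))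
  -- bundle
  obtain ⟨g, hg⟩ : ∃ g : ℝ → CircleDeg1Lift, ∀ t, ⇑(g t) = G t :=
    ⟨fun t => ⟨⟨G t, hGm t⟩, hGl t⟩, fun t => rfl⟩
  -- endpoints
  have hG0 : G 0 = lo := by
    have : h 0 = lo := by
      funext y; simp only [hh, add_zero]
      exact min_eq_right (hlole y)
    rw [hG]  -- G = fun t => upperBound (h t)
    show upperBound (h 0) = lo
    rw [this, ub_of_monotone hloM]
  set T : ℝ := sSup ((fun y => F y - lo y) '' Set.Icc (0:ℝ) 1) with hT
  have hbddT : BddAbove ((fun y => F y - lo y) '' Set.Icc (0:ℝ) 1) :=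
    isCompact_Icc.bddAbove_image (hFc.sub hloC).continuousOn
  have hTbig : ∀ y, F y - lo y ≤ T := by
    intro y
    have e1 := lift_fract hFl y
    have e2 := lift_fract hloL y
    have : F y - lo y = F (Int.fract y) - lo (Int.fract y) := by rw [e1, e2]; ring
    rw [this]
    exact le_csSup hbddT ⟨Int.fract y, ⟨Int.fract_nonneg y, (Int.fract_lt_one y).le⟩, rfl⟩
  have hT0 : 0 ≤ T := by
    have := hTbig 0
    have h0 := hlole 0
    have := le_csSup hbddT ⟨0, ⟨le_refl 0, zero_le_one⟩, rfl⟩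
    linarith [hlole 0, le_csSup hbddT (⟨0, ⟨le_refl (0:ℝ), zero_le_one⟩, rfl⟩ :
      F 0 - lo 0 ∈ (fun y => F y - lo y) '' Set.Icc (0:ℝ) 1)]
  have hGT : G T = upperBound F := by
    have : h T = F := by
      funext y
      exact min_eq_left (by linarith [hTbig y])
    show upperBound (h T) = upperBound F
    rw [this]
  -- translation numbers at the endpoints
  have hτ0 : (g 0).translationNumber = ρm := by
    have t1 := (g 0).tendsto_translation_number₀
    have t2 := hρm 0
    refine tendsto_nhds_unique ?_ t2
    convert t1 using 2 with n
    rw [CircleDeg1Lift.coe_pow, hg, hG0]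
  have hτT : (g T).translationNumber = ρp := by
    have t1 := (g T).tendsto_translation_number₀
    have t2 := hρp 0
    refine tendsto_nhds_unique ?_ t2
    convert t1 using 2 with n
    rw [CircleDeg1Lift.coe_pow, hg, hGT]
  -- Lipschitz in t
  have hLip : ∀ s t x, G s x ≤ G t x + |s - t| := by
    intro s t x
    refine ub_le fun y hy => ?_
    have h1 : h s y ≤ h t y + |s - t| := by
      have : s ≤ t + |s - t| := by cases abs_cases (s - t) <;> linarith
      calc h s y ≤ min (F y + |s - t|) (lo y + t + |s - t|) := by
            refine le_min ((min_le_left _ _).trans (by linarith [abs_nonneg (s - t)]))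
              ((min_le_right _ _).trans (by linarith))
        _ = min (F y) (lo y + t) + |s - t| := by rw [← min_add_add_right]
    exact h1.trans (by linarith [le_ub' (hhc t) (hhl t) hy])
  -- iterates continuous in t
  have hiter : ∀ n : ℕ, Continuous fun t => (g t)^[n] 0 := by
    intro n
    induction n with
    | zero => simpa using continuous_const
    | succ n ih =>
      have e : (fun t => (g t)^[n+1] 0) = fun t => G t ((g t)^[n] 0) := by
        funext t
        rw [Function.iterate_succ_apply', ← hg t]
      rw [e]
      rw [continuous_iff_continuousAt]
      intro t₀
      have e2 : (fun t => G t ((g t)^[n] 0)) =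
          fun t => (G t ((g t)^[n] 0) - G t₀ ((g t)^[n] 0)) + G t₀ ((g t)^[n] 0) := by
        funext t; ring
      rw [e2]
      have c2 : ContinuousAt (fun t => G t₀ ((g t)^[n] 0)) t₀ :=
        ((hGc t₀).comp ih).continuousAt
      have c1 : Filter.Tendsto (fun t => G t ((g t)^[n] 0) - G t₀ ((g t)^[n] 0)) (nhds t₀)
          (nhds 0) := by
        apply squeeze_zero_norm (a := fun t => |t - t₀|)
        · intro t
          have b1 := hLip t t₀ ((g t)^[n] 0)
          have b2 := hLip t₀ t ((g t)^[n] 0)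
          rw [Real.norm_eq_abs, abs_sub_le_iff]
          constructor
          · linarith [b1]
          · have : |t₀ - t| = |t - t₀| := abs_sub_comm _ _
            linarith [b2, this.le]
        · have : Filter.Tendsto (fun t : ℝ => |t - t₀|) (nhds t₀) (nhds (|t₀ - t₀|)) :=
            (continuous_abs.comp (continuous_id.sub continuous_const)).continuousAt
          simpa using this
      have := c1.add c2
      simpa [ContinuousAt] using this
  -- continuity of the translation number
  have hτcont : Continuous fun t => (g t).translationNumber := by
    rw [continuous_iff_continuousAt]
    intro t₀
    rw [ContinuousAt, tendsto_order]
    constructor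
    · intro b hb
      obtain ⟨q, hq1, hq2⟩ := exists_rat_btwn hb
      have hden : (0:ℝ) < q.den := by exact_mod_cast q.pos
      have hnum : (q.den : ℝ) * (q:ℝ) = q.num := by
        rw [Rat.cast_def]; field_simp
      have hτpow : (q.num : ℝ) < ((g t₀) ^ q.den).translationNumber := by
        rw [CircleDeg1Lift.translationNumber_pow, ← hnum]
        exact mul_lt_mul_of_pos_left hq2 hden
      have hpt : (q.num : ℝ) < ((g t₀) ^ q.den) 0 := by
        have := ((g t₀) ^ q.den).lt_map_of_int_lt_translationNumber hτpow 0
        simpa using this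
      have hev : ∀ᶠ t in nhds t₀, (q.num : ℝ) < (g t)^[q.den] 0 := by
        have hc := hiter q.den
        have : (g t₀)^[q.den] 0 ∈ Set.Ioi ((q.num : ℝ)) := by
          rw [← CircleDeg1Lift.coe_pow]; exact hpt
        exact hc.continuousAt.eventually_mem (Ioi_mem_nhds this)
      filter_upwards [hev] with t ht
      have : (q.num : ℝ) ≤ ((g t) ^ q.den).translationNumber := by
        apply CircleDeg1Lift.le_translationNumber_of_add_int_le (x := 0)
        rw [CircleDeg1Lift.coe_pow]
        simpa using ht.le
      rw [CircleDeg1Lift.translationNumber_pow] at this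
      have : (q:ℝ) ≤ (g t).translationNumber := by
        rw [← hnum] at this
        exact le_of_mul_le_mul_left this hden
      linarith
    · intro b hb
      obtain ⟨q, hq1, hq2⟩ := exists_rat_btwn hb
      have hden : (0:ℝ) < q.den := by exact_mod_cast q.pos
      have hnum : (q.den : ℝ) * (q:ℝ) = q.num := by
        rw [Rat.cast_def]; field_simp
      have hτpow : ((g t₀) ^ q.den).translationNumber < q.num := by
        rw [CircleDeg1Lift.translationNumber_pow]
        calc (q.den : ℝ) * (g t₀).translationNumber < (q.den : ℝ) * (q:ℝ) := by
              apply mul_lt_mul_of_pos_left hq1 hden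
          _ = q.num := hnum
      have hpt : ((g t₀) ^ q.den) 0 < (q.num : ℝ) := by
        have := ((g t₀) ^ q.den).map_lt_of_translationNumber_lt_int hτpow 0
        simpa using this
      have hev : ∀ᶠ t in nhds t₀, (g t)^[q.den] 0 < (q.num : ℝ) := by
        have hc := hiter q.den
        have : (g t₀)^[q.den] 0 ∈ Set.Iio ((q.num : ℝ)) := by
          rw [← CircleDeg1Lift.coe_pow]; exact hpt
        exact hc.continuousAt.eventually_mem (Iio_mem_nhds this)
      filter_upwards [hev] with t ht
      have h5 : ((g t) ^ q.den).translationNumber ≤ (q.num : ℝ) := by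
        have : ((g t) ^ q.den) 0 ≤ 0 + (q.num : ℝ) := by
          rw [CircleDeg1Lift.coe_pow]
          simpa using ht.le
        exact_mod_cast ((g t) ^ q.den).translationNumber_le_of_le_add_int this
      rw [CircleDeg1Lift.translationNumber_pow] at h5
      have h6 : (g t).translationNumber ≤ (q:ℝ) := by
        rw [← hnum] at h5
        exact le_of_mul_le_mul_left h5 hden
      linarith
  -- IVT
  have hωmem : ω ∈ Set.Icc ((g 0).translationNumber) ((g T).translationNumber) := by
    rw [hτ0, hτT]; exact ⟨hρmω, hωρp⟩
  obtain ⟨t, htmem, htω⟩ := intermediate_value_Icc hT0 hτcont.continuousOn hωmem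
  have htω' : (g t).translationNumber = ω := htω
  refine ⟨G t, hGc t, hGm t, hGl t, ?_, hcoin t htmem.1⟩
  intro x
  have t1 := (g t).tendsto_translationNumber x
  have t2 : Filter.Tendsto (fun n : ℕ => x / (n:ℝ)) Filter.atTop (nhds 0) :=
    tendsto_const_div_atTop_nhds_zero_nat x
  have t3 := t1.add t2
  rw [htω', add_zero] at t3
  refine t3.congr fun n => ?_
  rw [CircleDeg1Lift.coe_pow, hg]
  ring
end

section
/- For every ω ∈ ℝ and every b ≥ 0, the set A_ω(b) = {a ∈ ℝ : ω ∈ I(F_{a,b})} is a nonempty compact interval [a^l_ω(b), a^r_ω(b)], and the endpoint functions b ↦ a^l_ω(b) and b ↦ a^r_ω(b) are Lipschitz on [0,∞) with constant 1/(2π): |a^l_ω(b) − a^l_ω(b′)| ≤ (1/(2π))|b − b′| and |a^r_ω(b) − a^r_ω(b′)| ≤ (1/(2π))|b − b′| for all b, b′ ≥ 0. -/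
open Real Filter Set

/-- The standard family of lifts `F_{a,b}(x) = x + a + (b/(2π))·sin(2πx)`. -/
noncomputable def stdLift (a b : ℝ) : ℝ → ℝ :=
  fun x => x + a + b / (2 * π) * Real.sin (2 * π * x)

/-- The rotation interval `I(F) = [α(F), β(F)]`. -/
noncomputable def rotInterval (F : ℝ → ℝ) : Set ℝ :=
  Set.Icc (rotLow F) (rotHigh F)

open Topology

namespace RotProof

variable {F G H : ℝ → ℝ}

/-- commuting with integer translations, from commuting with `+1` -/
lemma lift_add_nat (hl : ∀ x, F (x + 1) = F x + 1) (x : ℝ) (n : ℕ) :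
    F (x + n) = F x + n := by
  induction n with
  | zero => simp
  | succ n ih =>
    have : x + (n + 1 : ℕ) = (x + n) + 1 := by push_cast; ring
    rw [this, hl, ih]; push_cast; ring

lemma lift_add_int (hl : ∀ x, F (x + 1) = F x + 1) (x : ℝ) (k : ℤ) :
    F (x + k) = F x + k := by
  rcases k with n | n
  · exact_mod_cast lift_add_nat hl x n
  · have h1 : (x + Int.negSucc n) + (n+1 : ℕ) = x := by
      push_cast [Int.negSucc_eq]; ring
    have := lift_add_nat hl (x + Int.negSucc n) (n+1)
    rw [h1] at this
    have : F (x + Int.negSucc n) = F x - (n+1 : ℕ) := by linarith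
    rw [this]; push_cast [Int.negSucc_eq]; ring

lemma iterate_lift (hl : ∀ x, F (x + 1) = F x + 1) (n : ℕ) :
    ∀ x, F^[n] (x + 1) = F^[n] x + 1 := by
  induction n with
  | zero => simp
  | succ n ih =>
    intro x
    rw [Function.iterate_succ_apply', Function.iterate_succ_apply', ih, hl]

lemma iterate_lift_int (hl : ∀ x, F (x + 1) = F x + 1) (n : ℕ) (x : ℝ) (k : ℤ) :
    F^[n] (x + k) = F^[n] x + k :=
  lift_add_int (iterate_lift hl n) x k

/-- The (upper) rotation number of a monotone lift, defined via Fekete's lemma. -/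
noncomputable def rho (G : ℝ → ℝ) : ℝ :=
  sInf ((fun n : ℕ => (G^[n] 0 + 1) / (n : ℝ)) '' Set.Ici 1)

section MonoLift

variable (hm : Monotone G) (hl : ∀ x, G (x + 1) = G x + 1)

include hm hl

lemma mono_iter_le_ceil (n : ℕ) (x : ℝ) : G^[n] x ≤ G^[n] 0 + ⌈x⌉ := by
  have h1 : G^[n] x ≤ G^[n] (0 + (⌈x⌉ : ℤ)) := by
    apply hm.iterate n
    simpa using Int.le_ceil x
  calc G^[n] x ≤ G^[n] (0 + (⌈x⌉ : ℤ)) := h1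
    _ = G^[n] 0 + ⌈x⌉ := iterate_lift_int hl n 0 ⌈x⌉

lemma mono_iter_ge_floor (n : ℕ) (x : ℝ) : G^[n] 0 + ⌊x⌋ ≤ G^[n] x := by
  have h1 : G^[n] (0 + (⌊x⌋ : ℤ)) ≤ G^[n] x := by
    apply hm.iterate n
    simpa using Int.floor_le x
  calc G^[n] 0 + (⌊x⌋ : ℝ) = G^[n] (0 + (⌊x⌋ : ℤ)) := (iterate_lift_int hl n 0 ⌊x⌋).symm
    _ ≤ G^[n] x := h1

lemma mono_subadd : Subadditive (fun n : ℕ => G^[n] 0 + 1) := by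
  intro m n
  have h1 : G^[m + n] 0 = G^[m] (G^[n] 0) := by
    rw [Function.iterate_add_apply]
  have h2 : G^[m] (G^[n] 0) ≤ G^[m] 0 + ⌈G^[n] 0⌉ := mono_iter_le_ceil hm hl m _
  have h3 : (⌈G^[n] 0⌉ : ℝ) < G^[n] 0 + 1 := Int.ceil_lt_add_one _
  simp only [h1]
  linarith

lemma mono_supadd : Subadditive (fun n : ℕ => -(G^[n] 0) + 1) := by
  intro m n
  have h1 : G^[m + n] 0 = G^[m] (G^[n] 0) := by
    rw [Function.iterate_add_apply]
  have h2 : G^[m] 0 + ⌊G^[n] 0⌋ ≤ G^[m] (G^[n] 0) := mono_iter_ge_floor hm hl m _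
  have h3 : G^[n] 0 - 1 < (⌊G^[n] 0⌋ : ℝ) := Int.sub_one_lt_floor _
  simp only [h1]
  linarith

lemma mono_iter_zero_ge (n : ℕ) : (n : ℝ) * (G 0 - 1) ≤ G^[n] 0 := by
  induction n with
  | zero => simp
  | succ n ih =>
    have h1 : G^[n + 1] 0 = G (G^[n] 0) := Function.iterate_succ_apply' G n 0
    have h2 : G 0 + ⌊G^[n] 0⌋ ≤ G (G^[n] 0) := by
      have := mono_iter_ge_floor hm hl 1 (G^[n] 0)
      simpa using this
    have h3 : G^[n] 0 - 1 < (⌊G^[n] 0⌋ : ℝ) := Int.sub_one_lt_floor _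
    push_cast
    rw [h1]
    nlinarith

lemma mono_iter_zero_le (n : ℕ) : G^[n] 0 ≤ (n : ℝ) * (G 0 + 1) := by
  induction n with
  | zero => simp
  | succ n ih =>
    have h1 : G^[n + 1] 0 = G (G^[n] 0) := Function.iterate_succ_apply' G n 0
    have h2 : G (G^[n] 0) ≤ G 0 + ⌈G^[n] 0⌉ := by
      have := mono_iter_le_ceil hm hl 1 (G^[n] 0)
      simpa using this
    have h3 : (⌈G^[n] 0⌉ : ℝ) < G^[n] 0 + 1 := Int.ceil_lt_add_one _
    push_cast
    rw [h1]
    nlinarith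

lemma mono_bdd_sub : BddBelow (Set.range fun n : ℕ => (G^[n] 0 + 1) / (n : ℝ)) := by
  refine ⟨min (G 0 - 1) 0, ?_⟩
  rintro y ⟨n, rfl⟩
  rcases Nat.eq_zero_or_pos n with rfl | hn
  · simp
  · have hn' : (0 : ℝ) < n := by exact_mod_cast hn
    have h1 : (n : ℝ) * (G 0 - 1) ≤ G^[n] 0 := mono_iter_zero_ge hm hl n
    have : G 0 - 1 ≤ (G^[n] 0 + 1) / n := by
      rw [le_div_iff₀ hn']
      nlinarith
    exact le_trans (min_le_left _ _) this

lemma mono_bdd_sup : BddBelow (Set.range fun n : ℕ => (-(G^[n] 0) + 1) / (n : ℝ)) := by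
  refine ⟨min (-(G 0) - 1) 0, ?_⟩
  rintro y ⟨n, rfl⟩
  rcases Nat.eq_zero_or_pos n with rfl | hn
  · simp
  · have hn' : (0 : ℝ) < n := by exact_mod_cast hn
    have h1 : G^[n] 0 ≤ (n : ℝ) * (G 0 + 1) := mono_iter_zero_le hm hl n
    have : -(G 0) - 1 ≤ (-(G^[n] 0) + 1) / n := by
      rw [le_div_iff₀ hn']
      nlinarith
    exact le_trans (min_le_left _ _) this

lemma tendsto_rho : Tendsto (fun n : ℕ => G^[n] 0 / (n : ℝ)) atTop (𝓝 (rho G)) := by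
  have h1 := (mono_subadd hm hl).tendsto_lim (mono_bdd_sub hm hl)
  have hlim : (mono_subadd hm hl).lim = rho G := by rw [Subadditive.lim]; rfl
  rw [hlim] at h1
  have h2 : Tendsto (fun n : ℕ => (1 : ℝ) / n) atTop (𝓝 0) :=
    tendsto_one_div_atTop_nhds_zero_nat
  have h3 := h1.sub h2
  rw [sub_zero] at h3
  refine h3.congr' ?_
  filter_upwards [eventually_ne_atTop 0] with n hn
  have hn' : (n : ℝ) ≠ 0 := Nat.cast_ne_zero.mpr hn
  field_simp
  ring

lemma tendsto_neg_rho :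
    Tendsto (fun n : ℕ => (-(G^[n] 0) + 1) / (n : ℝ)) atTop (𝓝 (-(rho G))) := by
  have h1 := (mono_supadd hm hl).tendsto_lim (mono_bdd_sup hm hl)
  have h2 : Tendsto (fun n : ℕ => (-(G^[n] 0) + 1) / (n : ℝ)) atTop (𝓝 (-(rho G))) := by
    have h3 : Tendsto (fun n : ℕ => -(G^[n] 0 / (n : ℝ)) + 1 / n) atTop (𝓝 (-(rho G) + 0)) :=
      ((tendsto_rho hm hl).neg).add tendsto_one_div_atTop_nhds_zero_nat
    rw [add_zero] at h3
    refine h3.congr' ?_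
    filter_upwards [eventually_ne_atTop 0] with n hn
    have hn' : (n : ℝ) ≠ 0 := Nat.cast_ne_zero.mpr hn
    field_simp
  exact h2

lemma rho_le_iter (n : ℕ) (hn : n ≠ 0) : (n : ℝ) * rho G - 1 ≤ G^[n] 0 := by
  have h := (mono_subadd hm hl).lim_le_div (mono_bdd_sub hm hl) hn
  have hlim : (mono_subadd hm hl).lim = rho G := by rw [Subadditive.lim]; rfl
  rw [hlim] at h
  have hn' : (0 : ℝ) < n := by positivity
  rw [le_div_iff₀ hn'] at h
  linarith

lemma iter_le_rho (n : ℕ) (hn : n ≠ 0) : G^[n] 0 ≤ (n : ℝ) * rho G + 1 := by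
  have h := (mono_supadd hm hl).lim_le_div (mono_bdd_sup hm hl) hn
  have hlim : (mono_supadd hm hl).lim = -(rho G) := by
    have := (mono_supadd hm hl).tendsto_lim (mono_bdd_sup hm hl)
    exact tendsto_nhds_unique this (tendsto_neg_rho hm hl)
  rw [hlim] at h
  have hn' : (0 : ℝ) < n := by positivity
  rw [le_div_iff₀ hn'] at h
  linarith

end MonoLift

lemma iter_le_iter_of_le (hGH : ∀ x, G x ≤ H x) (hmH : Monotone H) (n : ℕ) :
    G^[n] 0 ≤ H^[n] 0 := by
  induction n with
  | zero => simp
  | succ n ih =>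
    rw [Function.iterate_succ_apply', Function.iterate_succ_apply']
    exact le_trans (hGH _) (hmH ih)

lemma rho_mono (hmG : Monotone G) (hlG : ∀ x, G (x + 1) = G x + 1)
    (hmH : Monotone H) (hlH : ∀ x, H (x + 1) = H x + 1)
    (hGH : ∀ x, G x ≤ H x) : rho G ≤ rho H := by
  refine le_of_tendsto_of_tendsto' (tendsto_rho hmG hlG) (tendsto_rho hmH hlH) fun n => ?_
  exact div_le_div_of_nonneg_right (iter_le_iter_of_le hGH hmH n) (Nat.cast_nonneg n)

lemma rho_translation (t : ℝ) : rho (fun x => x + t) = t := by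
  have hm : Monotone (fun x : ℝ => x + t) := fun a b h => by simpa using h
  have hl : ∀ x : ℝ, (fun x : ℝ => x + t) (x + 1) = (fun x : ℝ => x + t) x + 1 := by
    intro x; simp; ring
  have hiter : ∀ n : ℕ, (fun x : ℝ => x + t)^[n] 0 = n * t := by
    intro n
    induction n with
    | zero => simp
    | succ n ih => rw [Function.iterate_succ_apply', ih]; push_cast; ring
  have h1 : Tendsto (fun n : ℕ => (fun x : ℝ => x + t)^[n] 0 / (n : ℝ)) atTop (𝓝 t) := by
    have : Tendsto (fun n : ℕ => (t : ℝ)) atTop (𝓝 t) := tendsto_const_nhds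
    refine this.congr' ?_
    filter_upwards [eventually_ne_atTop 0] with n hn
    have hn' : (n : ℝ) ≠ 0 := Nat.cast_ne_zero.mpr hn
    rw [hiter n, mul_comm, mul_div_assoc, div_self hn', mul_one]
  exact tendsto_nhds_unique (tendsto_rho hm hl) h1



variable {F G : ℝ → ℝ}

/-- upper envelope -/
noncomputable def env (F : ℝ → ℝ) : ℝ → ℝ := fun x => sSup (F '' Set.Icc (x - 1) x)

section Env
variable (hc : Continuous F) (hl : ∀ x, F (x + 1) = F x + 1)

lemma env_attained (hc : Continuous F) (x : ℝ) :
    ∃ y ∈ Set.Icc (x - 1) x, F y = env F x ∧ ∀ z ∈ Set.Icc (x - 1) x, F z ≤ F y := by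
  obtain ⟨y, hy, hmax⟩ := isCompact_Icc.exists_isMaxOn (by norm_num : (Set.Icc (x-1) x).Nonempty)
    hc.continuousOn
  refine ⟨y, hy, ?_, fun z hz => hmax hz⟩
  have hg : IsGreatest (F '' Set.Icc (x - 1) x) (F y) :=
    ⟨Set.mem_image_of_mem F hy, by rintro z ⟨w, hw, rfl⟩; exact hmax hw⟩
  exact (hg.csSup_eq).symm

include hc hl in
lemma le_env {y x : ℝ} (hyx : y ≤ x) : F y ≤ env F x := by
  set k : ℤ := ⌊x - y⌋ with hk
  have hk0 : (0 : ℤ) ≤ k := Int.floor_nonneg.mpr (by linarith)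
  have h1 : y + (k : ℝ) ≤ x := by
    have := Int.floor_le (x - y); linarith
  have h2 : x - 1 ≤ y + (k : ℝ) := by
    have := Int.sub_one_lt_floor (x - y); linarith
  have h3 : F y ≤ F (y + (k : ℝ)) := by
    rw [show F (y + (k:ℝ)) = F (y + k) from rfl, lift_add_int hl]
    have : (0:ℝ) ≤ (k:ℝ) := by exact_mod_cast hk0
    linarith
  refine h3.trans (le_csSup ?_ ?_)
  · exact (isCompact_Icc.image hc).bddAbove
  · exact Set.mem_image_of_mem F ⟨h2, h1⟩

include hc hl in
lemma self_le_env (x : ℝ) : F x ≤ env F x := le_env hc hl le_rfl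

include hc hl in
lemma env_mono : Monotone (env F) := by
  intro x x' hx
  obtain ⟨y, hy, hFy, -⟩ := env_attained hc x
  rw [← hFy]
  exact le_env hc hl (hy.2.trans hx)

include hc hl in
lemma env_lift (x : ℝ) : env F (x + 1) = env F x + 1 := by
  apply le_antisymm
  · obtain ⟨y, hy, hFy, -⟩ := env_attained hc (x + 1)
    rw [← hFy]
    have h1 : F y = F (y - 1) + 1 := by
      have := hl (y - 1); rw [sub_add_cancel] at this; linarith
    rw [h1]
    have : F (y - 1) ≤ env F x := le_env hc hl (by have := hy.2; linarith)
    linarith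
  · obtain ⟨y, hy, hFy, -⟩ := env_attained hc x
    rw [← hFy]
    have h1 : F y + 1 = F (y + 1) := (hl y).symm
    rw [h1]
    exact le_env hc hl (by have := hy.2; linarith)

lemma env_le_env_of_le (hc : Continuous F) {F' : ℝ → ℝ} (hc' : Continuous F')
    (hl' : ∀ x, F' (x + 1) = F' x + 1) (hFF' : ∀ x, F x ≤ F' x) (x : ℝ) :
    env F x ≤ env F' x := by
  obtain ⟨y, hy, hFy, -⟩ := env_attained hc x
  rw [← hFy]
  exact (hFF' y).trans (le_env hc' hl' hy.2)

lemma env_of_monotone (hm : Monotone F) (x : ℝ) : env F x = F x := by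
  have hg : IsGreatest (F '' Set.Icc (x - 1) x) (F x) :=
    ⟨Set.mem_image_of_mem F (by constructor <;> linarith), by
      rintro z ⟨w, hw, rfl⟩; exact hm hw.2⟩
  exact hg.csSup_eq

include hc hl in
lemma iter_le_env_iter (n : ℕ) (x : ℝ) : F^[n] x ≤ (env F)^[n] x := by
  induction n with
  | zero => simp
  | succ n ih =>
    rw [Function.iterate_succ_apply', Function.iterate_succ_apply']
    exact (self_le_env hc hl _).trans (env_mono hc hl ih)

include hc hl in
lemma env_iter_le_iter_env (n : ℕ) (x : ℝ) : (env F)^[n] x ≤ env (F^[n]) x := by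
  induction n generalizing x with
  | zero =>
    simp only [Function.iterate_zero, id_eq]
    have himg : (fun y : ℝ => y) '' Set.Icc (x - 1) x = Set.Icc (x-1) x := Set.image_id _
    show x ≤ sSup ((fun y : ℝ => y) '' Set.Icc (x - 1) x)
    rw [himg, csSup_Icc (by linarith : x - 1 ≤ x)]
  | succ n ih =>
    have hcn : Continuous (F^[n]) := hc.iterate n
    have hln := iterate_lift hl n
    have hcn1 : Continuous (F^[n + 1]) := hc.iterate (n + 1)
    have hln1 := iterate_lift hl (n + 1)
    rw [Function.iterate_succ_apply']
    obtain ⟨y₀, hy₀, hFy₀, -⟩ := env_attained hcn x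
    set M := env (F^[n]) x with hM
    have step1 : (env F) ((env F)^[n] x) ≤ env F M :=
      env_mono hc hl (ih x)
    refine step1.trans ?_
    obtain ⟨z₀, hz₀, hFz₀, -⟩ := env_attained hc M
    rw [← hFz₀]
    -- find w ≤ y₀ with F^[n] w = z₀ by IVT
    set k : ℕ := ⌈M - z₀⌉₊ with hk
    have hz₀M : z₀ ≤ M := hz₀.2
    have hkge : M - z₀ ≤ (k : ℝ) := Nat.le_ceil _
    have hlow : F^[n] (y₀ - k) = M - k := by
      have h' : F^[n] (y₀ + (-(k:ℤ) : ℤ)) = F^[n] y₀ + (-(k:ℤ) : ℤ) := lift_add_int hln y₀ _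
      push_cast at h'
      rw [hFy₀] at h'
      rw [show y₀ - (k:ℝ) = y₀ + -(k:ℝ) by ring, h']
      ring
    have hle : F^[n] (y₀ - k) ≤ z₀ := by rw [hlow]; linarith
    have hub : z₀ ≤ F^[n] y₀ := by rw [hFy₀]; exact hz₀.2
    have hky : y₀ - (k:ℝ) ≤ y₀ := by
      have : (0:ℝ) ≤ (k:ℝ) := Nat.cast_nonneg k
      linarith
    obtain ⟨w, hw, hFw⟩ := intermediate_value_Icc hky (hcn.continuousOn) ⟨hle, hub⟩
    have hz : F z₀ = F^[n+1] w := by rw [Function.iterate_succ_apply', hFw]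
    rw [hz]
    exact le_env hcn1 hln1 (hw.2.trans hy₀.2)

include hc hl in
lemma iter_env_le_env_iter (n : ℕ) (x : ℝ) : env (F^[n]) x ≤ (env F)^[n] x := by
  obtain ⟨y, hy, hFy, -⟩ := env_attained (hc.iterate n) x
  rw [← hFy]
  calc F^[n] y ≤ (env F)^[n] y := iter_le_env_iter hc hl n y
    _ ≤ (env F)^[n] x := ((env_mono hc hl).iterate n) hy.2

include hc hl in
lemma env_iter_eq (n : ℕ) (x : ℝ) : (env F)^[n] x = env (F^[n]) x :=
  le_antisymm (env_iter_le_iter_env hc hl n x) (iter_env_le_env_iter hc hl n x)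

lemma iter_dist {C : ℝ} (hbd : ∀ x, |F x - x| ≤ C) (n : ℕ) (x : ℝ) :
    |F^[n] x - x| ≤ n * C := by
  induction n with
  | zero => simp
  | succ n ih =>
    have h1 := hbd (F^[n] x)
    have h2 : |F (F^[n] x) - x| ≤ |F (F^[n] x) - F^[n] x| + |F^[n] x - x| := abs_sub_le _ _ _
    rw [Function.iterate_succ_apply']
    push_cast
    linarith

lemma bounded_under_of_dist {C : ℝ} (hbd : ∀ x, |F x - x| ≤ C) (x : ℝ) :
    IsBoundedUnder (· ≤ ·) atTop (fun n : ℕ => F^[n] x / (n : ℝ)) ∧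
    IsBoundedUnder (· ≥ ·) atTop (fun n : ℕ => F^[n] x / (n : ℝ)) := by
  have key : ∀ n : ℕ, |F^[n] x / (n : ℝ)| ≤ |x| + |C| := by
    intro n
    rcases Nat.eq_zero_or_pos n with rfl | hn
    · simp; positivity
    · have hn' : (0:ℝ) < n := by exact_mod_cast hn
      have h1 : |F^[n] x - x| ≤ n * C := iter_dist hbd n x
      have h2 : |F^[n] x| ≤ |x| + n * |C| := by
        have := abs_sub_abs_le_abs_sub (F^[n] x) x
        have hC : (n:ℝ) * C ≤ n * |C| := by
          have := le_abs_self C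
          nlinarith
        linarith
      rw [abs_div, abs_of_pos hn', div_le_iff₀ hn']
      have hn1 : (1:ℝ) ≤ n := by exact_mod_cast hn
      nlinarith [abs_nonneg x]
  constructor
  · exact Filter.isBoundedUnder_of ⟨|x| + |C|, fun n => (le_abs_self _).trans (key n)⟩
  · refine Filter.isBoundedUnder_of ⟨-(|x| + |C|), fun n => ?_⟩
    have h1 := key n
    have h2 := neg_abs_le (F^[n] x / (n : ℝ))
    simp only [ge_iff_le]
    linarith

include hc hl in
lemma limsup_le_rho {C : ℝ} (hbd : ∀ x, |F x - x| ≤ C) (x : ℝ) :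
    Filter.limsup (fun n : ℕ => F^[n] x / (n : ℝ)) Filter.atTop ≤ rho (env F) := by
  set ρ := rho (env F) with hρ
  have hm := env_mono hc hl
  have hlm := env_lift hc hl
  have hle : ∀ᶠ n : ℕ in atTop, F^[n] x / (n:ℝ) ≤ ρ + (1 + (⌈x⌉:ℝ)) / n := by
    filter_upwards [eventually_ne_atTop 0] with n hn
    have hn' : (0:ℝ) < n := by
      have : 0 < n := Nat.pos_of_ne_zero hn
      exact_mod_cast this
    have h1 : F^[n] x ≤ (env F)^[n] x := iter_le_env_iter hc hl n x
    have h2 : (env F)^[n] x ≤ (env F)^[n] 0 + ⌈x⌉ := mono_iter_le_ceil hm hlm n x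
    have h3 : (env F)^[n] 0 ≤ n * ρ + 1 := iter_le_rho hm hlm n hn
    rw [div_le_iff₀ hn']
    have : (ρ + (1 + (⌈x⌉:ℝ)) / n) * n = ρ * n + (1 + (⌈x⌉:ℝ)) := by
      field_simp
    rw [this]
    linarith
  have htend : Tendsto (fun n : ℕ => ρ + (1 + (⌈x⌉:ℝ)) / n) atTop (𝓝 ρ) := by
    have h0 : Tendsto (fun n : ℕ => (1 + (⌈x⌉:ℝ)) / n) atTop (𝓝 0) :=
      tendsto_const_nhds.div_atTop tendsto_natCast_atTop_atTop
    have := (tendsto_const_nhds : Tendsto (fun _ : ℕ => ρ) atTop (𝓝 ρ)).add h0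
    simpa using this
  calc Filter.limsup (fun n : ℕ => F^[n] x / (n:ℝ)) atTop
      ≤ Filter.limsup (fun n : ℕ => ρ + (1 + (⌈x⌉:ℝ)) / n) atTop := by
        exact limsup_le_limsup hle ((bounded_under_of_dist hbd x).2.isCoboundedUnder_le)
          htend.isBoundedUnder_le
    _ = ρ := htend.limsup_eq

include hc hl in
lemma rotHigh_le_rho {C : ℝ} (hbd : ∀ x, |F x - x| ≤ C) : rotHigh F ≤ rho (env F) :=
  ciSup_le fun x => limsup_le_rho hc hl hbd x

include hc hl in
lemma rho_le_rotHigh {C : ℝ} (hbd : ∀ x, |F x - x| ≤ C) : rho (env F) ≤ rotHigh F := by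
  set ρ := rho (env F) with hρ
  have hm := env_mono hc hl
  have hlm := env_lift hc hl
  have hbddAbove : BddAbove (Set.range fun x : ℝ =>
      Filter.limsup (fun n : ℕ => F^[n] x / (n : ℝ)) Filter.atTop) := by
    refine ⟨ρ, ?_⟩
    rintro _ ⟨x, rfl⟩
    exact limsup_le_rho hc hl hbd x
  have key : ∀ N : ℕ, 1 ≤ N → ρ - 3 / N ≤ rotHigh F := by
    intro N hN
    set H := F^[N] with hH
    have hcH : Continuous H := hc.iterate N
    have hlH : ∀ x, H (x + 1) = H x + 1 := iterate_lift hl N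
    set M : ℕ → ℝ := fun k => (env H)^[k] 0 with hMdef
    have hM0 : M 0 = 0 := rfl
    have hMrec : ∀ k, M (k + 1) = env H (M k) := fun k =>
      Function.iterate_succ_apply' (env H) k 0
    have henvH : ∀ t : ℝ, t + ((N : ℝ) * ρ - 2) ≤ env H t := by
      intro t
      have h1 : (env F)^[N] t ≤ env (F^[N]) t := env_iter_le_iter_env hc hl N t
      have h2 : (env F)^[N] 0 + (⌊t⌋ : ℝ) ≤ (env F)^[N] t := mono_iter_ge_floor hm hlm N t
      have h3 : (N : ℝ) * ρ - 1 ≤ (env F)^[N] 0 := rho_le_iter hm hlm N (by omega)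
      have h4 : t - 1 < (⌊t⌋ : ℝ) := Int.sub_one_lt_floor t
      have : env (F^[N]) t = env H t := rfl
      linarith
    have hMgrow : ∀ k : ℕ, (k : ℝ) * ((N : ℝ) * ρ - 2) ≤ M k := by
      intro k
      induction k with
      | zero => simp [hM0]
      | succ k ih =>
        have := henvH (M k)
        rw [hMrec]
        push_cast
        nlinarith
    have hIt : ∀ k : ℕ, ∀ t ∈ Set.Icc (M k - 1) (M k),
        ∃ x ∈ Set.Icc (-1 : ℝ) 0, H^[k] x = t ∧ ∀ j, j ≤ k → M j - 1 ≤ H^[j] x := by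
      intro k
      induction k with
      | zero =>
        intro t ht
        rw [hM0] at ht
        refine ⟨t, by simpa using ht, by simp, ?_⟩
        intro j hj
        rw [Nat.le_zero] at hj
        subst hj
        rw [hM0]
        simpa using ht.1
      | succ k ih =>
        intro t ht
        obtain ⟨s₀, hs₀, hHs₀, -⟩ := env_attained hcH (M k)
        have h1 : H (M k - 1) = H (M k) - 1 := by
          have := hlH (M k - 1); rw [sub_add_cancel] at this; linarith
        have h2 : H (M k) ≤ env H (M k) := self_le_env hcH hlH (M k)
        have h3 : H (M k - 1) ≤ t := by
          rw [h1]
          have := ht.1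
          rw [hMrec] at this
          linarith
        have h4 : t ≤ H s₀ := by
          rw [hHs₀, ← hMrec]; exact ht.2
        obtain ⟨s, hs, hHs⟩ := intermediate_value_Icc hs₀.1 hcH.continuousOn ⟨h3, h4⟩
        have hsIcc : s ∈ Set.Icc (M k - 1) (M k) := ⟨hs.1, hs.2.trans hs₀.2⟩
        obtain ⟨x, hx, hHkx, hall⟩ := ih s hsIcc
        refine ⟨x, hx, ?_, ?_⟩
        · rw [Function.iterate_succ_apply', hHkx, hHs]
        · intro j hj
          rcases Nat.lt_succ_iff_lt_or_eq.mp (Nat.lt_succ_of_le hj) with hj' | hj'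
          · exact hall j (Nat.lt_succ_iff.mp hj')
          · subst hj'
            rw [Function.iterate_succ_apply', hHkx, hHs]
            exact ht.1
    set Cs : ℕ → Set ℝ := fun k =>
      Set.Icc (-1 : ℝ) 0 ∩ ⋂ j ∈ Set.Iic k, (H^[j]) ⁻¹' Set.Ici (M j - 1) with hCs
    have hCne : ∀ k, (Cs k).Nonempty := by
      intro k
      obtain ⟨x, hx, -, hall⟩ := hIt k (M k) ⟨by linarith, le_rfl⟩
      refine ⟨x, hx, ?_⟩
      rw [Set.mem_iInter₂]
      intro j hj
      exact hall j hj
    have hCsub : ∀ k, Cs (k + 1) ⊆ Cs k := by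
      intro k
      apply Set.inter_subset_inter_right
      exact Set.biInter_subset_biInter_left (Set.Iic_subset_Iic.mpr (Nat.le_succ k))
    have hCcl : ∀ k, IsClosed (Cs k) := by
      intro k
      exact isClosed_Icc.inter (isClosed_biInter fun j _ =>
        IsClosed.preimage (hcH.iterate j) isClosed_Ici)
    have hC0 : IsCompact (Cs 0) :=
      isCompact_Icc.of_isClosed_subset (hCcl 0) Set.inter_subset_left
    obtain ⟨x₀, hx₀⟩ := IsCompact.nonempty_iInter_of_sequence_nonempty_isCompact_isClosed
      Cs hCsub hCne hC0 hCcl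
    have hxk : ∀ k : ℕ, M k - 1 ≤ H^[k] x₀ := by
      intro k
      have hx := Set.mem_iInter.mp hx₀ k
      have := hx.2
      rw [Set.mem_iInter₂] at this
      exact this k (Set.mem_Iic.mpr le_rfl)
    set u : ℕ → ℝ := fun n => F^[n] x₀ / (n : ℝ) with hu
    have hfreq : ∃ᶠ n in atTop, ρ - 3 / N ≤ u n := by
      rw [frequently_atTop]
      intro m
      set k := max m 1 with hk
      have hk1 : 1 ≤ k := le_max_right m 1
      refine ⟨N * k, ?_, ?_⟩
      · calc m ≤ k := le_max_left m 1
          _ = 1 * k := (one_mul k).symm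
          _ ≤ N * k := Nat.mul_le_mul_right k hN
      · have hiter : F^[N * k] x₀ = H^[k] x₀ := by
          rw [hH, ← Function.iterate_mul]
        have hval : (k : ℝ) * ((N : ℝ) * ρ - 2) - 1 ≤ F^[N * k] x₀ := by
          rw [hiter]
          have := hMgrow k
          have := hxk k
          linarith
        have hNk : (0 : ℝ) < ((N * k : ℕ) : ℝ) := by
          have : 0 < N * k := Nat.mul_pos (by omega) (by omega)
          exact_mod_cast this
        show ρ - 3 / N ≤ F^[N * k] x₀ / ((N * k : ℕ) : ℝ)
        rw [le_div_iff₀ hNk]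
        have hNr : (0 : ℝ) < (N : ℝ) := by exact_mod_cast (by omega : 0 < N)
        have hkr : (1 : ℝ) ≤ (k : ℝ) := by exact_mod_cast hk1
        have hcast : ((N * k : ℕ) : ℝ) = (N : ℝ) * (k : ℝ) := by push_cast; ring
        rw [hcast]
        have hexp : (ρ - 3 / N) * ((N : ℝ) * k) = ρ * N * k - 3 * k := by
          field_simp
        rw [hexp]
        nlinarith
    have hbdd : IsBoundedUnder (· ≤ ·) atTop u := (bounded_under_of_dist hbd x₀).1
    have hls : ρ - 3 / N ≤ Filter.limsup u atTop :=
      le_limsup_of_frequently_le hfreq hbdd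
    have hfin : Filter.limsup u atTop ≤ rotHigh F := le_ciSup hbddAbove x₀
    linarith
  have htend : Tendsto (fun N : ℕ => ρ - 3 / (N : ℝ)) atTop (𝓝 ρ) := by
    have h0 : Tendsto (fun N : ℕ => (3 : ℝ) / N) atTop (𝓝 0) :=
      tendsto_const_nhds.div_atTop tendsto_natCast_atTop_atTop
    have := (tendsto_const_nhds : Tendsto (fun _ : ℕ => ρ) atTop (𝓝 ρ)).sub h0
    simpa using this
  refine le_of_tendsto htend ?_
  filter_upwards [eventually_ge_atTop 1] with N hN
  exact key N hN

include hc hl in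
lemma rotHigh_eq_rho {C : ℝ} (hbd : ∀ x, |F x - x| ≤ C) : rotHigh F = rho (env F) :=
  le_antisymm (rotHigh_le_rho hc hl hbd) (rho_le_rotHigh hc hl hbd)

end Env

lemma mirror_iterate (F : ℝ → ℝ) (n : ℕ) (x : ℝ) :
    (fun y => -F (-y))^[n] x = -F^[n] (-x) := by
  induction n generalizing x with
  | zero => simp
  | succ n ih =>
    rw [Function.iterate_succ_apply, Function.iterate_succ_apply]
    show (fun y => -F (-y))^[n] (-F (-x)) = -F^[n] (F (-x))
    rw [ih, neg_neg]

lemma liminf_neg_eq (v : ℕ → ℝ) :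
    Filter.liminf (fun n => -(v n)) Filter.atTop = -Filter.limsup v Filter.atTop := by
  rw [Filter.liminf_eq, Filter.limsup_eq, Real.sInf_def, neg_neg]
  congr 1
  ext a
  simp only [Set.mem_setOf_eq, Set.mem_neg]
  exact eventually_congr (Eventually.of_forall fun n => by constructor <;> intro h <;> linarith)

lemma rotLow_eq_neg_rotHigh (F : ℝ → ℝ) :
    rotLow F = -rotHigh (fun y => -F (-y)) := by
  set G := fun y => -F (-y) with hG
  have hpt : ∀ x : ℝ, Filter.liminf (fun n : ℕ => F^[n] x / (n : ℝ)) atTop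
      = -Filter.limsup (fun n : ℕ => G^[n] (-x) / (n : ℝ)) atTop := by
    intro x
    have h1 : (fun n : ℕ => F^[n] x / (n : ℝ)) = fun n => -(G^[n] (-x) / (n : ℝ)) := by
      funext n
      rw [hG, mirror_iterate F n (-x), neg_neg]
      ring
    rw [h1]
    exact liminf_neg_eq _
  rw [rotLow, rotHigh, ← sInf_range, ← sSup_range]
  have hr : (Set.range fun x : ℝ => Filter.liminf (fun n : ℕ => F^[n] x / (n : ℝ)) atTop)
      = -(Set.range fun x : ℝ => Filter.limsup (fun n : ℕ => G^[n] x / (n : ℝ)) atTop) := by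
    ext y
    simp only [Set.mem_range, Set.mem_neg]
    constructor
    · rintro ⟨x, rfl⟩
      exact ⟨-x, by rw [hpt x, neg_neg]⟩
    · rintro ⟨x, hx⟩
      exact ⟨-x, by rw [hpt (-x), neg_neg, hx]; exact neg_neg y⟩
  rw [hr, Real.sInf_def, neg_neg]

/-! ### facts about the standard family -/

lemma stdLift_lift (a b : ℝ) : ∀ x, stdLift a b (x + 1) = stdLift a b x + 1 := by
  intro x
  simp only [stdLift]
  have h : Real.sin (2 * π * (x + 1)) = Real.sin (2 * π * x) := by
    rw [show 2 * π * (x + 1) = 2 * π * x + 2 * π by ring, Real.sin_add_two_pi]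
  rw [h]; ring

lemma stdLift_cont (a b : ℝ) : Continuous (stdLift a b) := by
  unfold stdLift; fun_prop

lemma stdLift_bd (a b : ℝ) (hb : 0 ≤ b) :
    ∀ x, |stdLift a b x - x| ≤ |a| + b / (2 * π) := by
  intro x
  have hc : 0 ≤ b / (2 * π) := by positivity
  have h1 : stdLift a b x - x = a + b / (2 * π) * Real.sin (2 * π * x) := by
    simp only [stdLift]; ring
  rw [h1]
  have h2 : |b / (2 * π) * Real.sin (2 * π * x)| ≤ b / (2 * π) := by
    rw [abs_mul, abs_of_nonneg hc]
    have := abs_sin_le_one (2 * π * x)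
    nlinarith
  calc |a + b / (2 * π) * Real.sin (2 * π * x)|
      ≤ |a| + |b / (2 * π) * Real.sin (2 * π * x)| := abs_add_le _ _
    _ ≤ |a| + b / (2 * π) := by linarith

lemma stdLift_add_const (a b t x : ℝ) : stdLift a b x + t = stdLift (a + t) b x := by
  simp only [stdLift]; ring

lemma stdLift_le_of_le {a a' b : ℝ} (h : a ≤ a') (x : ℝ) : stdLift a b x ≤ stdLift a' b x := by
  simp only [stdLift]; linarith

lemma stdLift_compare {a b b' : ℝ} (x : ℝ) :
    stdLift a b x ≤ stdLift (a + |b - b'| / (2 * π)) b' x := by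
  rw [← stdLift_add_const]
  simp only [stdLift]
  have hpi : (0:ℝ) < 2 * π := by positivity
  have h1 : b / (2 * π) * Real.sin (2 * π * x) - b' / (2 * π) * Real.sin (2 * π * x)
      = (b - b') / (2 * π) * Real.sin (2 * π * x) := by ring
  have h2 : (b - b') / (2 * π) * Real.sin (2 * π * x) ≤ |b - b'| / (2 * π) := by
    calc (b - b') / (2 * π) * Real.sin (2 * π * x)
        ≤ |(b - b') / (2 * π) * Real.sin (2 * π * x)| := le_abs_self _
      _ = |b - b'| / (2 * π) * |Real.sin (2 * π * x)| := by
          rw [abs_mul, abs_div, abs_of_pos hpi]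
      _ ≤ |b - b'| / (2 * π) * 1 := by
          have := abs_sin_le_one (2 * π * x)
          have : 0 ≤ |b - b'| / (2 * π) := by positivity
          nlinarith [abs_sin_le_one (2 * π * x)]
      _ = |b - b'| / (2 * π) := mul_one _
  linarith


lemma abs_sin_le_abs' (t : ℝ) : |Real.sin t| ≤ |t| := by
  have key : ∀ s : ℝ, 0 ≤ s → |Real.sin s| ≤ s := by
    intro s hs
    rcases le_or_gt s π with h | h
    · rw [abs_of_nonneg (Real.sin_nonneg_of_nonneg_of_le_pi hs h)]
      exact Real.sin_le hs
    · calc |Real.sin s| ≤ 1 := abs_sin_le_one s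
        _ ≤ π := by linarith [Real.pi_gt_three]
        _ ≤ s := le_of_lt h
  rcases le_or_gt 0 t with h | h
  · rw [abs_of_nonneg h]; exact key t h
  · rw [abs_of_neg h]
    have := key (-t) (by linarith)
    rwa [Real.sin_neg, abs_neg] at this

lemma abs_sin_sub_sin_le (A B : ℝ) : |Real.sin A - Real.sin B| ≤ |A - B| := by
  rw [Real.sin_sub_sin, abs_mul, abs_mul]
  have h1 : |Real.sin ((A - B) / 2)| ≤ |A - B| / 2 := by
    have := abs_sin_le_abs' ((A - B) / 2)
    rwa [abs_div, abs_two] at this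
  have h2 : |Real.cos ((A + B) / 2)| ≤ 1 := abs_cos_le_one _
  have h0 : (0:ℝ) ≤ |Real.sin ((A - B) / 2)| := abs_nonneg _
  have h0' : (0:ℝ) ≤ |Real.cos ((A + B) / 2)| := abs_nonneg _
  rw [abs_two]
  nlinarith [abs_nonneg (A - B)]

lemma stdLift_lipschitz {a b : ℝ} (hb : 0 ≤ b) (u v : ℝ) :
    |stdLift a b u - stdLift a b v| ≤ (1 + b) * |u - v| := by
  have hpi : (0:ℝ) < 2 * π := by positivity
  have hsin : |Real.sin (2 * π * u) - Real.sin (2 * π * v)| ≤ |2 * π * u - 2 * π * v| :=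
    abs_sin_sub_sin_le _ _
  have h1 : stdLift a b u - stdLift a b v
      = (u - v) + b / (2 * π) * (Real.sin (2 * π * u) - Real.sin (2 * π * v)) := by
    simp only [stdLift]; ring
  have h2 : |b / (2 * π) * (Real.sin (2 * π * u) - Real.sin (2 * π * v))| ≤ b * |u - v| := by
    rw [abs_mul, abs_of_nonneg (by positivity : (0:ℝ) ≤ b / (2 * π))]
    have h3 : |2 * π * u - 2 * π * v| = 2 * π * |u - v| := by
      rw [show 2 * π * u - 2 * π * v = 2 * π * (u - v) by ring, abs_mul, abs_of_pos hpi]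
    have h4 : |Real.sin (2 * π * u) - Real.sin (2 * π * v)| ≤ 2 * π * |u - v| := by
      rw [← h3]; exact hsin
    calc b / (2 * π) * |Real.sin (2 * π * u) - Real.sin (2 * π * v)|
        ≤ b / (2 * π) * (2 * π * |u - v|) := by
          apply mul_le_mul_of_nonneg_left h4 (by positivity)
      _ = b * |u - v| := by field_simp
  calc |stdLift a b u - stdLift a b v|
      ≤ |u - v| + |b / (2 * π) * (Real.sin (2 * π * u) - Real.sin (2 * π * v))| := by
        rw [h1]; exact abs_add_le _ _
    _ ≤ |u - v| + b * |u - v| := by linarith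
    _ = (1 + b) * |u - v| := by ring

lemma stdLift_iter_close {a e b : ℝ} (hb : 0 ≤ b) (he : 0 ≤ e) (n : ℕ) (y : ℝ) :
    |(stdLift (a + e) b)^[n] y - (stdLift a b)^[n] y| ≤ e * ((n : ℝ) * (1 + b) ^ n) := by
  induction n with
  | zero => simp
  | succ n ih =>
    rw [Function.iterate_succ_apply', Function.iterate_succ_apply']
    set u := (stdLift (a + e) b)^[n] y
    set v := (stdLift a b)^[n] y
    have h1 : stdLift (a + e) b u = stdLift a b u + e := by
      rw [stdLift_add_const]
    have h2 : |stdLift a b u - stdLift a b v| ≤ (1 + b) * |u - v| := stdLift_lipschitz hb u v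
    have h3 : |stdLift (a + e) b u - stdLift a b v| ≤ (1 + b) * |u - v| + e := by
      rw [h1]
      calc |stdLift a b u + e - stdLift a b v| ≤ |stdLift a b u - stdLift a b v| + |e| := by
            have := abs_add_le (stdLift a b u - stdLift a b v) e
            rw [show stdLift a b u + e - stdLift a b v = (stdLift a b u - stdLift a b v) + e by ring]
            exact this
        _ ≤ (1 + b) * |u - v| + e := by rw [abs_of_nonneg he]; linarith
    have hL1 : (1:ℝ) ≤ 1 + b := by linarith
    have hLn1 : (1:ℝ) ≤ (1 + b) ^ (n + 1) := one_le_pow₀ hL1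
    have hstep : (1 + b) * ((n : ℝ) * (1 + b) ^ n) = (n : ℝ) * (1 + b) ^ (n + 1) := by
      rw [pow_succ]; ring
    have h4 : (1 + b) * |u - v| ≤ e * ((n : ℝ) * (1 + b) ^ (n + 1)) := by
      calc (1 + b) * |u - v| ≤ (1 + b) * (e * ((n : ℝ) * (1 + b) ^ n)) :=
            mul_le_mul_of_nonneg_left ih (by linarith)
        _ = e * ((n : ℝ) * (1 + b) ^ (n + 1)) := by rw [← hstep]; ring
    have h5 : e * ((n : ℝ) * (1 + b) ^ (n + 1)) + e ≤ e * (((n : ℕ) + 1 : ℝ) * (1 + b) ^ (n + 1)) := by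
      nlinarith
    calc |stdLift (a + e) b u - stdLift a b v| ≤ (1 + b) * |u - v| + e := h3
      _ ≤ e * ((n : ℝ) * (1 + b) ^ (n + 1)) + e := by linarith
      _ ≤ e * (((n : ℕ) + 1 : ℝ) * (1 + b) ^ (n + 1)) := h5
      _ = e * (((n + 1 : ℕ) : ℝ) * (1 + b) ^ (n + 1)) := by push_cast; ring


/-! ### the function `mu` -/

noncomputable def mu (a b : ℝ) : ℝ := rho (env (stdLift a b))

lemma mirror_stdLift (a b : ℝ) : (fun y => -(stdLift a b (-y))) = stdLift (-a) b := by
  funext y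
  simp only [stdLift]
  rw [show 2 * π * (-y) = -(2 * π * y) by ring, Real.sin_neg]
  ring

lemma rotHigh_stdLift (a b : ℝ) (hb : 0 ≤ b) : rotHigh (stdLift a b) = mu a b :=
  rotHigh_eq_rho (stdLift_cont a b) (stdLift_lift a b) (stdLift_bd a b hb)

lemma rotLow_stdLift (a b : ℝ) (hb : 0 ≤ b) : rotLow (stdLift a b) = -mu (-a) b := by
  rw [rotLow_eq_neg_rotHigh, show (fun y => -(stdLift a b (-y))) = stdLift (-a) b from
    mirror_stdLift a b, rotHigh_stdLift (-a) b hb]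

lemma mu_mono_of_le {a a' b b' : ℝ} (h : ∀ x, stdLift a b x ≤ stdLift a' b' x) :
    mu a b ≤ mu a' b' := by
  apply rho_mono (env_mono (stdLift_cont a b) (stdLift_lift a b))
    (env_lift (stdLift_cont a b) (stdLift_lift a b))
    (env_mono (stdLift_cont a' b') (stdLift_lift a' b'))
    (env_lift (stdLift_cont a' b') (stdLift_lift a' b'))
  intro x
  exact env_le_env_of_le (stdLift_cont a b) (stdLift_cont a' b') (stdLift_lift a' b') h x

lemma mu_le_bound (a b : ℝ) (hb : 0 ≤ b) : mu a b ≤ a + b / (2 * π) := by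
  have hmT : Monotone (fun x : ℝ => x + (a + b / (2 * π))) := fun u v h => by simpa using h
  have hlT : ∀ x : ℝ, (fun x : ℝ => x + (a + b / (2 * π))) (x + 1)
      = (fun x : ℝ => x + (a + b / (2 * π))) x + 1 := fun x => by simp; ring
  have h1 : rho (env (stdLift a b)) ≤ rho (fun x : ℝ => x + (a + b / (2 * π))) := by
    apply rho_mono (env_mono (stdLift_cont a b) (stdLift_lift a b))
      (env_lift (stdLift_cont a b) (stdLift_lift a b)) hmT hlT
    intro x
    obtain ⟨y, hy, hFy, -⟩ := env_attained (stdLift_cont a b) x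
    rw [← hFy]
    have := stdLift_bd a b hb y
    have h2 : stdLift a b y ≤ y + (|a| + b / (2 * π)) := by
      have := abs_le.mp this
      linarith [this.2]
    have h3 : stdLift a b y - y = a + b / (2 * π) * Real.sin (2 * π * y) := by
      simp only [stdLift]; ring
    have h4 : b / (2 * π) * Real.sin (2 * π * y) ≤ b / (2 * π) := by
      have h5 : 0 ≤ b / (2 * π) := by positivity
      nlinarith [Real.sin_le_one (2 * π * y)]
    have : stdLift a b y ≤ y + (a + b / (2 * π)) := by linarith
    calc stdLift a b y ≤ y + (a + b / (2 * π)) := this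
      _ ≤ x + (a + b / (2 * π)) := by linarith [hy.2]
  calc mu a b = rho (env (stdLift a b)) := rfl
    _ ≤ rho (fun x : ℝ => x + (a + b / (2 * π))) := h1
    _ = a + b / (2 * π) := rho_translation _

lemma bound_le_mu (a b : ℝ) (hb : 0 ≤ b) : a - b / (2 * π) ≤ mu a b := by
  have hmT : Monotone (fun x : ℝ => x + (a - b / (2 * π))) := fun u v h => by simpa using h
  have hlT : ∀ x : ℝ, (fun x : ℝ => x + (a - b / (2 * π))) (x + 1)
      = (fun x : ℝ => x + (a - b / (2 * π))) x + 1 := fun x => by simp; ring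
  have h1 : rho (fun x : ℝ => x + (a - b / (2 * π))) ≤ rho (env (stdLift a b)) := by
    apply rho_mono hmT hlT (env_mono (stdLift_cont a b) (stdLift_lift a b))
      (env_lift (stdLift_cont a b) (stdLift_lift a b))
    intro x
    have h4 : -(b / (2 * π)) ≤ b / (2 * π) * Real.sin (2 * π * x) := by
      have h5 : 0 ≤ b / (2 * π) := by positivity
      nlinarith [Real.neg_one_le_sin (2 * π * x)]
    have h2 : x + (a - b / (2 * π)) ≤ stdLift a b x := by
      simp only [stdLift]; linarith
    exact h2.trans (self_le_env (stdLift_cont a b) (stdLift_lift a b) x)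
  calc a - b / (2 * π) = rho (fun x : ℝ => x + (a - b / (2 * π))) := (rho_translation _).symm
    _ ≤ mu a b := h1

lemma mu_closed {b ω l : ℝ} (hb : 0 ≤ b) (h : ∀ a, l < a → ω ≤ mu a b) : ω ≤ mu l b := by
  set F := stdLift l b with hF
  have hFc : Continuous F := stdLift_cont l b
  have hFl := stdLift_lift l b
  have hm := env_mono hFc hFl
  have hlm := env_lift hFc hFl
  have key : ∀ n : ℕ, 1 ≤ n → (n : ℝ) * ω - 1 ≤ (env F)^[n] 0 := by
    intro n hn
    have he : ∀ e : ℝ, 0 < e →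
        (n : ℝ) * ω - 1 - e * ((n : ℝ) * (1 + b) ^ n) ≤ (env F)^[n] 0 := by
      intro e hepos
      set F' := stdLift (l + e) b with hF'
      have hF'c : Continuous F' := stdLift_cont (l + e) b
      have hF'l := stdLift_lift (l + e) b
      have h1 : (n : ℝ) * mu (l + e) b - 1 ≤ (env F')^[n] 0 :=
        rho_le_iter (env_mono hF'c hF'l) (env_lift hF'c hF'l) n (by omega)
      have h2 : ω ≤ mu (l + e) b := h _ (by linarith)
      have h2' : (n : ℝ) * ω ≤ (n : ℝ) * mu (l + e) b :=
        mul_le_mul_of_nonneg_left h2 (Nat.cast_nonneg n)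
      rw [env_iter_eq hF'c hF'l n 0] at h1
      obtain ⟨y₀, hy₀, hFy₀, -⟩ := env_attained (hF'c.iterate n) 0
      rw [← hFy₀] at h1
      have h3 : |F'^[n] y₀ - F^[n] y₀| ≤ e * ((n : ℝ) * (1 + b) ^ n) :=
        stdLift_iter_close hb (le_of_lt hepos) n y₀
      have h4 : F^[n] y₀ ≤ (env F)^[n] 0 := by
        rw [env_iter_eq hFc hFl n 0]
        exact le_env (hFc.iterate n) (iterate_lift hFl n) hy₀.2
      have := abs_le.mp h3
      linarith [this.1]
    by_contra hcon
    push_neg at hcon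
    set ε := (n : ℝ) * ω - 1 - (env F)^[n] 0 with hε
    have hεpos : 0 < ε := by rw [hε]; linarith
    set Bn := (n : ℝ) * (1 + b) ^ n with hBn
    have hBnpos : 0 < Bn := by
      rw [hBn]
      have : (0:ℝ) < n := by exact_mod_cast (by omega : 0 < n)
      positivity
    have := he (ε / (2 * Bn)) (by positivity)
    rw [show ε / (2 * Bn) * Bn = ε / 2 from by field_simp] at this
    rw [hε] at this
    linarith
  have h5 : ∀ n : ℕ, 1 ≤ n → (n : ℝ) * ω - 1 ≤ (n : ℝ) * mu l b + 1 := fun n hn =>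
    (key n hn).trans (iter_le_rho hm hlm n (by omega))
  by_contra hcon
  push_neg at hcon
  obtain ⟨n, hn⟩ := exists_nat_gt (2 / (ω - mu l b))
  have hd : 0 < ω - mu l b := by linarith
  have hn1 : 1 ≤ n := by
    by_contra hn1
    push_neg at hn1
    interval_cases n
    · simp at hn
      have : 0 < 2 / (ω - mu l b) := by positivity
      linarith
  have h6 := h5 n hn1
  have hnr : (0:ℝ) < n := by exact_mod_cast (by omega : 0 < n)
  have h7 : (n : ℝ) * (ω - mu l b) ≤ 2 := by nlinarith
  have h8 : 2 < (n : ℝ) * (ω - mu l b) := by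
    rw [div_lt_iff₀ hd] at hn
    linarith
  linarith

/-! ### endpoint functions -/

lemma liminf_mirror (F : ℝ → ℝ) (x : ℝ) :
    Filter.liminf (fun n : ℕ => F^[n] x / (n : ℝ)) Filter.atTop
      = -Filter.limsup (fun n : ℕ => (fun y => -F (-y))^[n] (-x) / (n : ℝ)) Filter.atTop := by
  have h1 : (fun n : ℕ => F^[n] x / (n : ℝ))
      = fun n => -((fun y => -F (-y))^[n] (-x) / (n : ℝ)) := by
    funext n
    rw [mirror_iterate F n (-x), neg_neg]
    ring
  rw [h1]
  exact liminf_neg_eq _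

lemma rotLow_le_rotHigh_std {a b : ℝ} (hb : 0 ≤ b) :
    rotLow (stdLift a b) ≤ rotHigh (stdLift a b) := by
  have hbd := stdLift_bd a b hb
  have hbd' := stdLift_bd (-a) b hb
  have hG : (fun y => -(stdLift a b (-y))) = stdLift (-a) b := mirror_stdLift a b
  have hBB : BddBelow (Set.range fun x : ℝ =>
      Filter.liminf (fun n : ℕ => (stdLift a b)^[n] x / (n : ℝ)) Filter.atTop) := by
    refine ⟨-(rho (env (stdLift (-a) b))), ?_⟩
    rintro _ ⟨x, rfl⟩
    show -(rho (env (stdLift (-a) b)))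
      ≤ Filter.liminf (fun n : ℕ => (stdLift a b)^[n] x / (n : ℝ)) Filter.atTop
    rw [liminf_mirror (stdLift a b) x, hG]
    have := limsup_le_rho (stdLift_cont (-a) b) (stdLift_lift (-a) b) hbd' (-x)
    linarith
  have hBA : BddAbove (Set.range fun x : ℝ =>
      Filter.limsup (fun n : ℕ => (stdLift a b)^[n] x / (n : ℝ)) Filter.atTop) := by
    refine ⟨rho (env (stdLift a b)), ?_⟩
    rintro _ ⟨x, rfl⟩
    show Filter.limsup (fun n : ℕ => (stdLift a b)^[n] x / (n : ℝ)) Filter.atTop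
      ≤ rho (env (stdLift a b))
    exact limsup_le_rho (stdLift_cont a b) (stdLift_lift a b) hbd x
  calc rotLow (stdLift a b)
      ≤ Filter.liminf (fun n : ℕ => (stdLift a b)^[n] 0 / (n : ℝ)) Filter.atTop :=
        ciInf_le hBB 0
    _ ≤ Filter.limsup (fun n : ℕ => (stdLift a b)^[n] 0 / (n : ℝ)) Filter.atTop :=
        liminf_le_limsup (bounded_under_of_dist hbd 0).1 (bounded_under_of_dist hbd 0).2
    _ ≤ rotHigh (stdLift a b) := le_ciSup hBA 0

noncomputable def lep (ω b : ℝ) : ℝ := sInf {a : ℝ | ω ≤ mu a b}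

lemma S_up (ω : ℝ) {b a a' : ℝ} (ha : ω ≤ mu a b) (haa : a ≤ a') : ω ≤ mu a' b :=
  ha.trans (mu_mono_of_le fun x => stdLift_le_of_le haa x)

lemma S_nonempty (ω : ℝ) {b : ℝ} (hb : 0 ≤ b) :
    (ω + b / (2 * π)) ∈ {a : ℝ | ω ≤ mu a b} := by
  have := bound_le_mu (ω + b / (2 * π)) b hb
  simp only [Set.mem_setOf_eq]
  linarith

lemma S_bddBelow (ω : ℝ) {b : ℝ} (hb : 0 ≤ b) : BddBelow {a : ℝ | ω ≤ mu a b} := by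
  refine ⟨ω - b / (2 * π), fun a ha => ?_⟩
  have := mu_le_bound a b hb
  simp only [Set.mem_setOf_eq] at ha
  linarith

lemma lep_mem (ω : ℝ) {b : ℝ} (hb : 0 ≤ b) : ω ≤ mu (lep ω b) b := by
  apply mu_closed hb
  intro a ha
  obtain ⟨a'', ha'', ha''lt⟩ := exists_lt_of_csInf_lt ⟨_, S_nonempty ω hb⟩ ha
  exact S_up ω ha'' (le_of_lt ha''lt)

lemma lep_lipschitz (ω : ℝ) {b b' : ℝ} (hb : 0 ≤ b) (hb' : 0 ≤ b') :
    lep ω b' ≤ lep ω b + |b - b'| / (2 * π) := by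
  have hstep : ∀ a, ω ≤ mu a b → ω ≤ mu (a + |b - b'| / (2 * π)) b' := by
    intro a ha
    exact ha.trans (mu_mono_of_le fun x => stdLift_compare x)
  have h1 : ∀ a ∈ {a : ℝ | ω ≤ mu a b}, lep ω b' - |b - b'| / (2 * π) ≤ a := by
    intro a ha
    simp only [Set.mem_setOf_eq] at ha
    have h2 : lep ω b' ≤ a + |b - b'| / (2 * π) :=
      csInf_le (S_bddBelow ω hb') (hstep a ha)
    linarith
  have h3 : lep ω b' - |b - b'| / (2 * π) ≤ lep ω b :=
    le_csInf ⟨_, S_nonempty ω hb⟩ h1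
  linarith

end RotProof

/-- For every `ω ∈ ℝ`, there are endpoint functions `aˡ_ω, aʳ_ω` such that for every
`b ≥ 0` the set `A_ω(b) = {a : ω ∈ I(F_{a,b})}` is the nonempty compact interval
`[aˡ_ω(b), aʳ_ω(b)]`, and both endpoint functions are `1/(2π)`-Lipschitz on `[0,∞)`. -/
theorem stmt_10 (ω : ℝ) :
    ∃ al ar : ℝ → ℝ,
      (∀ b : ℝ, 0 ≤ b → al b ≤ ar b ∧
        {a : ℝ | ω ∈ rotInterval (stdLift a b)} = Set.Icc (al b) (ar b)) ∧
      (∀ b b' : ℝ, 0 ≤ b → 0 ≤ b' →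
        |al b - al b'| ≤ (1 / (2 * π)) * |b - b'| ∧
        |ar b - ar b'| ≤ (1 / (2 * π)) * |b - b'|) := by
  refine ⟨fun b => RotProof.lep ω b, fun b => -(RotProof.lep (-ω) b), ?_, ?_⟩
  · intro b hb
    constructor
    · -- al b ≤ ar b
      by_contra hcon
      push_neg at hcon
      obtain ⟨a, ha1, ha2⟩ := exists_between hcon
      have hmu1 : RotProof.mu a b < ω := by
        by_contra h'
        push_neg at h'
        have : RotProof.lep ω b ≤ a :=
          csInf_le (RotProof.S_bddBelow ω hb) (Set.mem_setOf_eq ▸ h')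
        linarith
      have hmu2 : RotProof.mu (-a) b < -ω := by
        by_contra h'
        push_neg at h'
        have : RotProof.lep (-ω) b ≤ -a :=
          csInf_le (RotProof.S_bddBelow (-ω) hb) (Set.mem_setOf_eq ▸ h')
        linarith
      have h3 := RotProof.rotLow_le_rotHigh_std (a := a) hb
      rw [RotProof.rotLow_stdLift a b hb, RotProof.rotHigh_stdLift a b hb] at h3
      linarith
    · ext a
      simp only [Set.mem_setOf_eq, rotInterval, Set.mem_Icc]
      rw [RotProof.rotLow_stdLift a b hb, RotProof.rotHigh_stdLift a b hb]
      constructor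
      · rintro ⟨h1, h2⟩
        constructor
        · exact csInf_le (RotProof.S_bddBelow ω hb) (Set.mem_setOf_eq ▸ h2)
        · have h4 : -ω ≤ RotProof.mu (-a) b := by linarith
          have : RotProof.lep (-ω) b ≤ -a :=
            csInf_le (RotProof.S_bddBelow (-ω) hb) (Set.mem_setOf_eq ▸ h4)
          linarith
      · rintro ⟨h1, h2⟩
        constructor
        · have h3 : -ω ≤ RotProof.mu (-a) b :=
            RotProof.S_up (-ω) (RotProof.lep_mem (-ω) hb) (by linarith)
          linarith
        · exact RotProof.S_up ω (RotProof.lep_mem ω hb) h1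
  · intro b b' hb hb'
    have hpi : (0:ℝ) < π := Real.pi_pos
    have habs : |b - b'| / (2 * π) = 1 / (2 * π) * |b - b'| := by ring
    have h1 := RotProof.lep_lipschitz ω hb hb'
    have h2 := RotProof.lep_lipschitz ω hb' hb
    rw [abs_sub_comm b' b] at h2
    have h1' := RotProof.lep_lipschitz (-ω) hb hb'
    have h2' := RotProof.lep_lipschitz (-ω) hb' hb
    rw [abs_sub_comm b' b] at h2'
    constructor
    · rw [← habs, abs_le]
      constructor <;> linarith
    · rw [← habs, abs_le]
      constructor <;> linarith
end

section
/- For every ω ∈ ℝ and every a ∈ ℝ, there exists B ≥ 0 such that for all b > B, ω lies in the interior of the rotation interval of F_{a,b}: α(F_{a,b}) < ω < β(F_{a,b}). -/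
open Real Filter Set

lemma iter_lower' {F : ℝ → ℝ} {L : ℝ} (h : ∀ y, y + L ≤ F y) :
    ∀ (n : ℕ) (x : ℝ), x + n * L ≤ F^[n] x := by
  intro n
  induction n with
  | zero => intro x; simp
  | succ n ih =>
    intro x
    rw [Function.iterate_succ_apply]
    have h1 := h x
    have h2 := ih (F x)
    have he : x + (↑(n + 1) : ℝ) * L = (x + L) + n * L := by push_cast; ring
    rw [he]; linarith

lemma iter_upper' {F : ℝ → ℝ} {U : ℝ} (h : ∀ y, F y ≤ y + U) :
    ∀ (n : ℕ) (x : ℝ), F^[n] x ≤ x + n * U := by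
  intro n
  induction n with
  | zero => intro x; simp
  | succ n ih =>
    intro x
    rw [Function.iterate_succ_apply]
    have h1 := h x
    have h2 := ih (F x)
    have he : x + (↑(n + 1) : ℝ) * U = (x + U) + n * U := by push_cast; ring
    rw [he]; linarith

lemma tendsto_div_aux' (x L : ℝ) :
    Tendsto (fun n : ℕ => x / n + L) atTop (nhds L) := by
  have := (tendsto_const_div_atTop_nhds_zero_nat x).add_const L
  simpa using this

lemma liminf_ge_of_bounds' {F : ℝ → ℝ} {L U : ℝ}
    (hL : ∀ y, y + L ≤ F y) (hU : ∀ y, F y ≤ y + U) (x : ℝ) :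
    L ≤ Filter.liminf (fun n : ℕ => F^[n] x / (n : ℝ)) Filter.atTop := by
  have hvlo : ∀ᶠ n : ℕ in atTop, x / n + L ≤ F^[n] x / n := by
    filter_upwards [eventually_gt_atTop 0] with n hn
    have hn' : (0:ℝ) < n := by exact_mod_cast hn
    have h1 := iter_lower' hL n x
    have he : x / n + L = (x + n * L) / n := by field_simp
    rw [he]
    gcongr
  have hvhi : ∀ᶠ n : ℕ in atTop, F^[n] x / n ≤ |x| + U := by
    filter_upwards [eventually_gt_atTop 0] with n hn
    have hn' : (0:ℝ) < n := by exact_mod_cast hn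
    have hn1 : (1:ℝ) ≤ n := by exact_mod_cast hn
    have h1 := iter_upper' hU n x
    have h2 : F^[n] x / n ≤ (x + n * U) / n := by gcongr
    have he : (x + n * U) / n = x / n + U := by field_simp
    have habs : |x / (n:ℝ)| ≤ |x| := by
      rw [abs_div, abs_of_pos hn']
      exact div_le_self (abs_nonneg x) hn1
    have hx : x / n ≤ |x| := le_trans (le_abs_self _) habs
    linarith [he ▸ h2]
  have htu : Tendsto (fun n : ℕ => x / n + L) atTop (nhds L) := tendsto_div_aux' x L
  calc L = Filter.liminf (fun n : ℕ => x / n + L) atTop := htu.liminf_eq.symm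
    _ ≤ _ := Filter.liminf_le_liminf hvlo htu.isBoundedUnder_ge
        (isCoboundedUnder_ge_of_eventually_le atTop hvhi)

lemma limsup_le_of_bounds' {F : ℝ → ℝ} {L U : ℝ}
    (hL : ∀ y, y + L ≤ F y) (hU : ∀ y, F y ≤ y + U) (x : ℝ) :
    Filter.limsup (fun n : ℕ => F^[n] x / (n : ℝ)) Filter.atTop ≤ U := by
  have hvhi : ∀ᶠ n : ℕ in atTop, F^[n] x / n ≤ x / n + U := by
    filter_upwards [eventually_gt_atTop 0] with n hn
    have hn' : (0:ℝ) < n := by exact_mod_cast hn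
    have h1 := iter_upper' hU n x
    have he : x / n + U = (x + n * U) / n := by field_simp
    rw [he]
    gcongr
  have hvlo : ∀ᶠ n : ℕ in atTop, -|x| + L ≤ F^[n] x / n := by
    filter_upwards [eventually_gt_atTop 0] with n hn
    have hn' : (0:ℝ) < n := by exact_mod_cast hn
    have hn1 : (1:ℝ) ≤ n := by exact_mod_cast hn
    have h1 := iter_lower' hL n x
    have h2 : (x + n * L) / n ≤ F^[n] x / n := by gcongr
    have he : (x + n * L) / n = x / n + L := by field_simp
    have habs : |x / (n:ℝ)| ≤ |x| := by
      rw [abs_div, abs_of_pos hn']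
      exact div_le_self (abs_nonneg x) hn1
    have hx : -|x| ≤ x / n := by
      have := neg_abs_le (x / (n:ℝ)); linarith
    linarith [he ▸ h2]
  have htu : Tendsto (fun n : ℕ => x / n + U) atTop (nhds U) := tendsto_div_aux' x U
  calc Filter.limsup (fun n : ℕ => F^[n] x / (n : ℝ)) Filter.atTop
      ≤ Filter.limsup (fun n : ℕ => x / n + U) atTop :=
        Filter.limsup_le_limsup hvhi
          (isCoboundedUnder_le_of_eventually_le atTop hvlo) htu.isBoundedUnder_le
    _ = U := htu.limsup_eq

lemma stdLift_bounds' {a b : ℝ} (hb : 0 ≤ b) (y : ℝ) :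
    y + (a - b / (2 * π)) ≤ stdLift a b y ∧ stdLift a b y ≤ y + (a + b / (2 * π)) := by
  have hπ : (0:ℝ) < 2 * π := by positivity
  have hc : 0 ≤ b / (2 * π) := by positivity
  have hs1 := Real.neg_one_le_sin (2 * π * y)
  have hs2 := Real.sin_le_one (2 * π * y)
  constructor <;> · simp only [stdLift]; nlinarith

lemma stdLift_add_int (a b x : ℝ) (m : ℤ) :
    stdLift a b (x + m) = stdLift a b x + m := by
  simp only [stdLift]
  have he : 2 * π * (x + m) = 2 * π * x + m * (2 * π) := by ring
  rw [he, Real.sin_add_int_mul_two_pi]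
  ring

lemma stdLift_iter_of_fixed {a b x : ℝ} {m : ℤ} (hfix : stdLift a b x = x + m) :
    ∀ n : ℕ, (stdLift a b)^[n] x = x + n * m := by
  intro n
  induction n with
  | zero => simp
  | succ n ih =>
    rw [Function.iterate_succ_apply', ih]
    have : x + (n : ℝ) * m = x + ((n * m : ℤ) : ℝ) := by push_cast; ring
    rw [this, stdLift_add_int a b x (n * m), hfix]
    push_cast; ring

lemma exists_fixed_shift {a b : ℝ} (hb : 0 < b) (m : ℤ) (hm : |(m : ℝ) - a| ≤ b / (2 * π)) :
    ∃ x : ℝ, stdLift a b x = x + m := by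
  have hπ : (0:ℝ) < 2 * π := by positivity
  have hc : (0:ℝ) < b / (2 * π) := by positivity
  set s : ℝ := ((m : ℝ) - a) / (b / (2 * π)) with hs
  have hs1 : s ∈ Set.Icc (-1 : ℝ) 1 := by
    constructor
    · rw [hs, le_div_iff₀ hc]
      have := neg_abs_le ((m : ℝ) - a)
      nlinarith [abs_nonneg ((m:ℝ) - a)]
    · rw [hs, div_le_one hc]
      exact le_trans (le_abs_self _) hm
  obtain ⟨t, _, ht⟩ := Real.surjOn_sin hs1
  refine ⟨t / (2 * π), ?_⟩
  have he : 2 * π * (t / (2 * π)) = t := by field_simp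
  simp only [stdLift, he, ht, hs]
  field_simp
  ring

/-- For every `ω ∈ ℝ` and `a ∈ ℝ`, there exists `B ≥ 0` such that for all `b > B`, `ω`
lies in the interior of the rotation interval of `F_{a,b}`:
`α(F_{a,b}) < ω < β(F_{a,b})`. -/
theorem stmt_14 (ω a : ℝ) :
    ∃ B : ℝ, 0 ≤ B ∧ ∀ b : ℝ, B < b →
      rotLow (stdLift a b) < ω ∧ ω < rotHigh (stdLift a b) := by
  set m₁ : ℤ := ⌊ω⌋ - 1 with hm1
  set m₂ : ℤ := ⌊ω⌋ + 1 with hm2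
  refine ⟨2 * π * (|(m₁ : ℝ) - a| + |(m₂ : ℝ) - a| + 1), by positivity, ?_⟩
  intro b hbB
  have hπ : (0:ℝ) < 2 * π := by positivity
  have hb : 0 < b := lt_of_le_of_lt (by positivity) hbB
  have hc : (0:ℝ) < b / (2 * π) := by positivity
  have hbc : |(m₁ : ℝ) - a| + |(m₂ : ℝ) - a| + 1 < b / (2 * π) := by
    rw [lt_div_iff₀ hπ]
    nlinarith
  have hbound1 : |(m₁ : ℝ) - a| ≤ b / (2 * π) := by
    have := abs_nonneg ((m₂ : ℝ) - a); linarith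
  have hbound2 : |(m₂ : ℝ) - a| ≤ b / (2 * π) := by
    have := abs_nonneg ((m₁ : ℝ) - a); linarith
  obtain ⟨x₁, hx₁⟩ := exists_fixed_shift hb m₁ hbound1
  obtain ⟨x₂, hx₂⟩ := exists_fixed_shift hb m₂ hbound2
  have hL : ∀ y, y + (a - b / (2 * π)) ≤ stdLift a b y :=
    fun y => (stdLift_bounds' hb.le y).1
  have hU : ∀ y, stdLift a b y ≤ y + (a + b / (2 * π)) :=
    fun y => (stdLift_bounds' hb.le y).2
  -- liminf at x₁ equals m₁
  have hlim1 : Filter.liminf (fun n : ℕ => (stdLift a b)^[n] x₁ / (n : ℝ)) Filter.atTop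
      = (m₁ : ℝ) := by
    have ht : Tendsto (fun n : ℕ => (stdLift a b)^[n] x₁ / (n : ℝ)) atTop (nhds (m₁ : ℝ)) := by
      have h1 : ∀ᶠ n : ℕ in atTop, x₁ / n + (m₁ : ℝ) = (stdLift a b)^[n] x₁ / (n : ℝ) := by
        filter_upwards [eventually_gt_atTop 0] with n hn
        have hn' : (0:ℝ) < n := by exact_mod_cast hn
        rw [stdLift_iter_of_fixed hx₁ n]
        field_simp
      exact Tendsto.congr' h1 (tendsto_div_aux' x₁ (m₁ : ℝ))
    exact ht.liminf_eq
  have hlim2 : Filter.limsup (fun n : ℕ => (stdLift a b)^[n] x₂ / (n : ℝ)) Filter.atTop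
      = (m₂ : ℝ) := by
    have ht : Tendsto (fun n : ℕ => (stdLift a b)^[n] x₂ / (n : ℝ)) atTop (nhds (m₂ : ℝ)) := by
      have h1 : ∀ᶠ n : ℕ in atTop, x₂ / n + (m₂ : ℝ) = (stdLift a b)^[n] x₂ / (n : ℝ) := by
        filter_upwards [eventually_gt_atTop 0] with n hn
        have hn' : (0:ℝ) < n := by exact_mod_cast hn
        rw [stdLift_iter_of_fixed hx₂ n]
        field_simp
      exact Tendsto.congr' h1 (tendsto_div_aux' x₂ (m₂ : ℝ))
    exact ht.limsup_eq
  constructor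
  · -- rotLow ≤ m₁ < ω
    have hbdd : BddBelow (Set.range fun x : ℝ =>
        Filter.liminf (fun n : ℕ => (stdLift a b)^[n] x / (n : ℝ)) Filter.atTop) := by
      refine ⟨a - b / (2 * π), ?_⟩
      rintro l ⟨x, rfl⟩
      exact liminf_ge_of_bounds' hL hU x
    have h1 : rotLow (stdLift a b) ≤ (m₁ : ℝ) := by
      rw [← hlim1]; exact ciInf_le hbdd x₁
    have h2 : (m₁ : ℝ) < ω := by
      have := Int.floor_le ω
      have : ((⌊ω⌋ : ℤ) : ℝ) ≤ ω := Int.floor_le ω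
      simp only [hm1]; push_cast; linarith
    linarith
  · have hbdd : BddAbove (Set.range fun x : ℝ =>
        Filter.limsup (fun n : ℕ => (stdLift a b)^[n] x / (n : ℝ)) Filter.atTop) := by
      refine ⟨a + b / (2 * π), ?_⟩
      rintro l ⟨x, rfl⟩
      exact limsup_le_of_bounds' hL hU x
    have h1 : (m₂ : ℝ) ≤ rotHigh (stdLift a b) := by
      rw [← hlim2]; exact le_ciSup hbdd x₂
    have h2 : ω < (m₂ : ℝ) := by
      have := Int.lt_floor_add_one ω
      simp only [hm2]; push_cast; linarith
    linarith
end

section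
/- For any real numbers ω < θ, there exist a ∈ ℝ and b > 0 such that ρ(F_{a,b}^-) = ω and ρ(F_{a,b}^+) = θ; that is, the rotation interval of the standard lift F_{a,b} is exactly [ω, θ]. -/
open Real Filter Set

namespace Stmt15
open Topology
open CircleDeg1Lift Topology

local notation "τ" => CircleDeg1Lift.translationNumber

lemma sin_lip (x y : ℝ) : |Real.sin x - Real.sin y| ≤ |x - y| := by
  rw [Real.sin_sub_sin]
  have h1 : |Real.sin ((x-y)/2)| ≤ |(x-y)/2| := Real.abs_sin_le_abs
  have h2 : |Real.cos ((x+y)/2)| ≤ 1 := Real.abs_cos_le_one _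
  calc |2 * Real.sin ((x-y)/2) * Real.cos ((x+y)/2)|
      = 2 * |Real.sin ((x-y)/2)| * |Real.cos ((x+y)/2)| := by rw [abs_mul, abs_mul]; norm_num
    _ ≤ 2 * |(x-y)/2| * 1 := by
        nlinarith [abs_nonneg (Real.sin ((x-y)/2)), abs_nonneg ((x-y)/2)]
    _ = |x - y| := by rw [mul_one, abs_div, abs_two]; ring

lemma two_pi_pos : 0 < 2 * π := by positivity

lemma stdLift_dist (a b x y : ℝ) : |stdLift a b x - stdLift a b y| ≤ (1 + |b|) * |x - y| := by
  have h : stdLift a b x - stdLift a b y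
      = (x - y) + b / (2*π) * (Real.sin (2*π*x) - Real.sin (2*π*y)) := by
    simp only [stdLift]; ring
  have hs : |Real.sin (2*π*x) - Real.sin (2*π*y)| ≤ (2*π) * |x - y| := by
    calc |Real.sin (2*π*x) - Real.sin (2*π*y)| ≤ |2*π*x - 2*π*y| := sin_lip _ _
      _ = (2*π) * |x - y| := by
          rw [← mul_sub, abs_mul, abs_of_pos two_pi_pos]
  calc |stdLift a b x - stdLift a b y|
      ≤ |x - y| + |b / (2*π)| * |Real.sin (2*π*x) - Real.sin (2*π*y)| := by
        rw [h]; exact (abs_add_le _ _).trans (by rw [abs_mul])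
    _ ≤ |x - y| + (|b| / (2*π)) * ((2*π) * |x - y|) := by
        rw [abs_div, abs_of_pos two_pi_pos]
        gcongr
    _ = (1 + |b|) * |x - y| := by field_simp

lemma stdLift_add_one (a b x : ℝ) : stdLift a b (x + 1) = stdLift a b x + 1 := by
  have : 2 * π * (x + 1) = 2 * π * x + (1:ℤ) * (2 * π) := by push_cast; ring
  simp only [stdLift, this, Real.sin_add_int_mul_two_pi]
  ring

lemma stdLift_le (a b x : ℝ) : stdLift a b x ≤ x + a + |b| / (2*π) := by
  have h : b / (2*π) * Real.sin (2*π*x) ≤ |b| / (2*π) := by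
    have := abs_mul (b / (2*π)) (Real.sin (2*π*x))
    have h2 : |b / (2*π) * Real.sin (2*π*x)| ≤ |b| / (2*π) * 1 := by
      rw [this, abs_div, abs_of_pos two_pi_pos]
      gcongr
      exact Real.abs_sin_le_one _
    calc b / (2*π) * Real.sin (2*π*x) ≤ |b / (2*π) * Real.sin (2*π*x)| := le_abs_self _
      _ ≤ |b| / (2*π) := by linarith
  simp only [stdLift]; linarith

lemma le_stdLift (a b x : ℝ) : x + a - |b| / (2*π) ≤ stdLift a b x := by
  have h : -(|b| / (2*π)) ≤ b / (2*π) * Real.sin (2*π*x) := by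
    have h2 : |b / (2*π) * Real.sin (2*π*x)| ≤ |b| / (2*π) * 1 := by
      rw [abs_mul, abs_div, abs_of_pos two_pi_pos]
      gcongr
      exact Real.abs_sin_le_one _
    have := neg_abs_le (b / (2*π) * Real.sin (2*π*x))
    linarith
  simp only [stdLift]; linarith

lemma stdLift_mono (a : ℝ) {b : ℝ} (hb0 : 0 ≤ b) (hb1 : b ≤ 1) : Monotone (stdLift a b) := by
  intro x y hxy
  have hs : |Real.sin (2*π*y) - Real.sin (2*π*x)| ≤ (2*π) * (y - x) := by
    calc |Real.sin (2*π*y) - Real.sin (2*π*x)| ≤ |2*π*y - 2*π*x| := sin_lip _ _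
      _ = (2*π) * (y - x) := by
          rw [← mul_sub, abs_mul, abs_of_pos two_pi_pos, abs_of_nonneg (by linarith)]
  have h2 : b / (2*π) * (Real.sin (2*π*x) - Real.sin (2*π*y)) ≤ b * (y - x) := by
    have hb2 : 0 ≤ b / (2*π) := by positivity
    calc b / (2*π) * (Real.sin (2*π*x) - Real.sin (2*π*y))
        ≤ b / (2*π) * |Real.sin (2*π*x) - Real.sin (2*π*y)| :=
          mul_le_mul_of_nonneg_left (le_abs_self _) hb2
      _ ≤ b / (2*π) * ((2*π) * (y - x)) := by
          apply mul_le_mul_of_nonneg_left _ hb2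
          rw [abs_sub_comm]; exact hs
      _ = b * (y - x) := by field_simp
  have : stdLift a b y - stdLift a b x = (y - x) - b / (2*π) * (Real.sin (2*π*x) - Real.sin (2*π*y)) := by
    simp only [stdLift]; ring
  nlinarith [h2]


section envelopes
variable (a b : ℝ)

lemma bddAbove_img (x : ℝ) : BddAbove (stdLift a b '' Iic x) := by
  refine ⟨x + a + |b| / (2*π), ?_⟩
  rintro z ⟨y, hy, rfl⟩
  exact (stdLift_le a b y).trans (by simp only [mem_Iic] at hy; linarith)

lemma bddBelow_img (x : ℝ) : BddBelow (stdLift a b '' Ici x) := by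
  refine ⟨x + a - |b| / (2*π), ?_⟩
  rintro z ⟨y, hy, rfl⟩
  refine le_trans ?_ (le_stdLift a b y)
  simp only [mem_Ici] at hy; linarith

lemma img_nonempty_upper (x : ℝ) : (stdLift a b '' Iic x).Nonempty :=
  ⟨stdLift a b x, mem_image_of_mem _ self_mem_Iic⟩

lemma img_nonempty_lower (x : ℝ) : (stdLift a b '' Ici x).Nonempty :=
  ⟨stdLift a b x, mem_image_of_mem _ self_mem_Ici⟩

lemma le_upper {x y : ℝ} (h : y ≤ x) : stdLift a b y ≤ upperBound (stdLift a b) x :=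
  le_csSup (bddAbove_img a b x) (mem_image_of_mem _ h)

lemma upper_le {x z : ℝ} (h : ∀ y ≤ x, stdLift a b y ≤ z) : upperBound (stdLift a b) x ≤ z :=
  csSup_le (img_nonempty_upper a b x) (by rintro w ⟨y, hy, rfl⟩; exact h y hy)

lemma lower_le {x y : ℝ} (h : x ≤ y) : lowerBound (stdLift a b) x ≤ stdLift a b y :=
  csInf_le (bddBelow_img a b x) (mem_image_of_mem _ h)

lemma le_lower {x z : ℝ} (h : ∀ y, x ≤ y → z ≤ stdLift a b y) : z ≤ lowerBound (stdLift a b) x :=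
  le_csInf (img_nonempty_lower a b x) (by rintro w ⟨y, hy, rfl⟩; exact h y hy)

lemma upper_mono : Monotone (upperBound (stdLift a b)) := by
  intro x y hxy
  exact upper_le a b (fun z hz => le_upper a b (hz.trans hxy))

lemma lower_mono : Monotone (lowerBound (stdLift a b)) := by
  intro x y hxy
  exact le_lower a b (fun z hz => lower_le a b (hxy.trans hz))

lemma upper_add_one (x : ℝ) :
    upperBound (stdLift a b) (x + 1) = upperBound (stdLift a b) x + 1 := by
  apply le_antisymm
  · apply upper_le
    intro y hy
    have : stdLift a b (y - 1) ≤ upperBound (stdLift a b) x := le_upper a b (by linarith)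
    have h2 : stdLift a b y = stdLift a b (y - 1) + 1 := by
      rw [← stdLift_add_one a b (y - 1)]; norm_num
    linarith
  · have : ∀ y ≤ x, stdLift a b y + 1 ≤ upperBound (stdLift a b) (x + 1) := by
      intro y hy
      rw [← stdLift_add_one a b y]
      exact le_upper a b (by linarith)
    have h2 : upperBound (stdLift a b) x ≤ upperBound (stdLift a b) (x + 1) - 1 :=
      upper_le a b (fun y hy => by linarith [this y hy])
    linarith

lemma lower_add_one (x : ℝ) :
    lowerBound (stdLift a b) (x + 1) = lowerBound (stdLift a b) x + 1 := by
  apply le_antisymm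
  · have : ∀ y, x ≤ y → stdLift a b y + 1 ≥ lowerBound (stdLift a b) (x + 1) := by
      intro y hy
      rw [← stdLift_add_one a b y]
      exact lower_le a b (by linarith)
    have h2 : lowerBound (stdLift a b) (x+1) - 1 ≤ lowerBound (stdLift a b) x :=
      le_lower a b (fun y hy => by linarith [this y hy])
    linarith
  · apply le_lower
    intro y hy
    have : lowerBound (stdLift a b) x ≤ stdLift a b (y - 1) := lower_le a b (by linarith)
    have h2 : stdLift a b y = stdLift a b (y - 1) + 1 := by
      rw [← stdLift_add_one a b (y - 1)]; norm_num
    linarith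

/-- upper envelope as a `CircleDeg1Lift` -/
noncomputable def upperLift : CircleDeg1Lift :=
  ⟨⟨upperBound (stdLift a b), upper_mono a b⟩, upper_add_one a b⟩

noncomputable def lowerLift : CircleDeg1Lift :=
  ⟨⟨lowerBound (stdLift a b), lower_mono a b⟩, lower_add_one a b⟩

@[simp] lemma upperLift_coe : ⇑(upperLift a b) = upperBound (stdLift a b) := rfl
@[simp] lemma lowerLift_coe : ⇑(lowerLift a b) = lowerBound (stdLift a b) := rfl

end envelopes

section taubounds
variable (a : ℝ) {b : ℝ}

lemma upper_le_bound (hb : 0 ≤ b) (x : ℝ) :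
    upperBound (stdLift a b) x ≤ x + (a + b / (2*π)) := by
  apply upper_le
  intro y hy
  have := stdLift_le a b y
  rw [abs_of_nonneg hb] at this
  linarith

lemma lower_ge_bound (hb : 0 ≤ b) (x : ℝ) :
    x + (a - b / (2*π)) ≤ lowerBound (stdLift a b) x := by
  apply le_lower
  intro y hy
  have := le_stdLift a b y
  rw [abs_of_nonneg hb] at this
  linarith

lemma upper_ge_peak (hb : 0 ≤ b) (x : ℝ) :
    x + (a + b / (2*π) - 1) ≤ upperBound (stdLift a b) x := by
  set y : ℝ := ⌊x - 4⁻¹⌋ + 4⁻¹ with hy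
  clear_value y
  have hyx : y ≤ x := by
    have := Int.floor_le (x - 4⁻¹)
    rw [hy]; linarith
  have hyx1 : x - 1 ≤ y := by
    have := Int.lt_floor_add_one (x - 4⁻¹)
    rw [hy]; push_cast; linarith
  have hsin : Real.sin (2 * π * y) = 1 := by
    have h2 : 2 * π * y = π/2 + (⌊x - 4⁻¹⌋ : ℤ) * (2 * π) := by rw [hy]; push_cast; ring
    rw [h2, Real.sin_add_int_mul_two_pi, Real.sin_pi_div_two]
  have hval : stdLift a b y = y + a + b / (2*π) := by
    simp only [stdLift, hsin, mul_one]
  have := le_upper a b hyx (x := x)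
  rw [hval] at this
  linarith

lemma lower_le_trough (hb : 0 ≤ b) (x : ℝ) :
    lowerBound (stdLift a b) x ≤ x + (a - b / (2*π) + 1) := by
  set y : ℝ := ⌈x + 4⁻¹⌉ - 4⁻¹ with hy
  clear_value y
  have hyx : x ≤ y := by
    have := Int.le_ceil (x + 4⁻¹)
    rw [hy]; linarith
  have hyx1 : y ≤ x + 1 := by
    have := Int.ceil_lt_add_one (x + 4⁻¹)
    rw [hy]; push_cast; linarith
  have hsin : Real.sin (2 * π * y) = -1 := by
    have h2 : 2 * π * y = -(π/2) + (⌈x + 4⁻¹⌉ : ℤ) * (2 * π) := by rw [hy]; push_cast; ring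
    rw [h2, Real.sin_add_int_mul_two_pi, Real.sin_neg, Real.sin_pi_div_two]
  have hval : stdLift a b y = y + a - b / (2*π) := by
    simp only [stdLift, hsin, mul_neg_one]; ring
  have := lower_le a b hyx (x := x)
  rw [hval] at this
  linarith

lemma tau_upper_le (hb : 0 ≤ b) : τ (upperLift a b) ≤ a + b / (2*π) :=
  translationNumber_le_of_le_add _ (fun x => upper_le_bound a hb x)

lemma tau_upper_ge (hb : 0 ≤ b) : a + b / (2*π) - 1 ≤ τ (upperLift a b) :=
  le_translationNumber_of_add_le _ (fun x => upper_ge_peak a hb x)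

lemma tau_lower_ge (hb : 0 ≤ b) : a - b / (2*π) ≤ τ (lowerLift a b) :=
  le_translationNumber_of_add_le _ (fun x => lower_ge_bound a hb x)

lemma tau_lower_le (hb : 0 ≤ b) : τ (lowerLift a b) ≤ a - b / (2*π) + 1 :=
  translationNumber_le_of_le_add _ (fun x => lower_le_trough a hb x)

lemma tau_upper_ge' (hb : 0 ≤ b) : a - b / (2*π) ≤ τ (upperLift a b) := by
  apply le_translationNumber_of_add_le
  intro x
  have h1 := le_stdLift a b x
  rw [abs_of_nonneg hb] at h1
  have h2 := le_upper a b (le_refl x)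
  show x + (a - b/(2*π)) ≤ upperBound (stdLift a b) x
  linarith

end taubounds

section lipschitz
variable (a b a' b' : ℝ)

lemma upper_lip_le {u v : ℝ} (huv : u ≤ v) :
    upperBound (stdLift a b) v ≤ upperBound (stdLift a b) u + (1 + |b|) * (v - u) := by
  apply upper_le
  intro y hy
  have hKnn : (0:ℝ) ≤ (1 + |b|) * (v - u) := mul_nonneg (by positivity) (by linarith)
  rcases le_or_gt y u with h | h
  · have := le_upper a b h (x := u)
    linarith
  · have hd := stdLift_dist a b y u
    rw [abs_of_pos (by linarith : (0:ℝ) < y - u)] at hd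
    have h1 : stdLift a b y - stdLift a b u ≤ (1 + |b|) * (y - u) :=
      (le_abs_self _).trans hd
    have hUu := le_upper a b (le_refl u)
    have h2 : (1 + |b|) * (y - u) ≤ (1 + |b|) * (v - u) :=
      mul_le_mul_of_nonneg_left (by linarith) (by positivity)
    linarith

lemma upper_lip (u v : ℝ) :
    |upperBound (stdLift a b) u - upperBound (stdLift a b) v| ≤ (1 + |b|) * |u - v| := by
  rcases le_total u v with h | h
  · have h1 := upper_lip_le a b h
    have h2 := upper_mono a b h
    have h3 : |u - v| = v - u := by rw [abs_sub_comm]; exact abs_of_nonneg (sub_nonneg.2 h)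
    rw [h3, abs_sub_comm (upperBound (stdLift a b) u), abs_of_nonneg (sub_nonneg.2 h2)]
    linarith
  · have h1 := upper_lip_le a b h
    have h2 := upper_mono a b h
    have h3 : |u - v| = u - v := abs_of_nonneg (sub_nonneg.2 h)
    rw [h3, abs_of_nonneg (sub_nonneg.2 h2)]
    linarith

lemma lower_lip_le {u v : ℝ} (huv : u ≤ v) :
    lowerBound (stdLift a b) v ≤ lowerBound (stdLift a b) u + (1 + |b|) * (v - u) := by
  have key : lowerBound (stdLift a b) v - (1 + |b|) * (v - u) ≤ lowerBound (stdLift a b) u := by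
    apply le_lower
    intro y hy
    have hKnn : (0:ℝ) ≤ (1 + |b|) * (v - u) := mul_nonneg (by positivity) (by linarith)
    rcases le_or_gt v y with h | h
    · have := lower_le a b h (x := v)
      linarith
    · have hd := stdLift_dist a b v y
      rw [abs_of_pos (by linarith : (0:ℝ) < v - y)] at hd
      have h1 : stdLift a b v - stdLift a b y ≤ (1 + |b|) * (v - y) :=
        (le_abs_self _).trans hd
      have hLv := lower_le a b (le_refl v)
      have h2 : (1 + |b|) * (v - y) ≤ (1 + |b|) * (v - u) :=
        mul_le_mul_of_nonneg_left (by linarith) (by positivity)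
      linarith
  linarith

lemma lower_lip (u v : ℝ) :
    |lowerBound (stdLift a b) u - lowerBound (stdLift a b) v| ≤ (1 + |b|) * |u - v| := by
  rcases le_total u v with h | h
  · have h1 := lower_lip_le a b h
    have h2 := lower_mono a b h
    have h3 : |u - v| = v - u := by rw [abs_sub_comm]; exact abs_of_nonneg (sub_nonneg.2 h)
    rw [h3, abs_sub_comm (lowerBound (stdLift a b) u), abs_of_nonneg (sub_nonneg.2 h2)]
    linarith
  · have h1 := lower_lip_le a b h
    have h2 := lower_mono a b h
    have h3 : |u - v| = u - v := abs_of_nonneg (sub_nonneg.2 h)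
    rw [h3, abs_of_nonneg (sub_nonneg.2 h2)]
    linarith

lemma stdLift_param_dist (y : ℝ) :
    |stdLift a b y - stdLift a' b' y| ≤ |a - a'| + |b - b'| / (2*π) := by
  have h : stdLift a b y - stdLift a' b' y
      = (a - a') + (b - b') / (2*π) * Real.sin (2*π*y) := by
    simp only [stdLift]; ring
  rw [h]
  refine (abs_add_le _ _).trans ?_
  have h2 : |(b - b') / (2*π) * Real.sin (2*π*y)| ≤ |b - b'| / (2*π) * 1 := by
    rw [abs_mul, abs_div, abs_of_pos two_pi_pos]
    gcongr
    exact Real.abs_sin_le_one _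
  linarith

lemma upper_param_le (x : ℝ) :
    upperBound (stdLift a b) x ≤ upperBound (stdLift a' b') x + (|a - a'| + |b - b'| / (2*π)) := by
  apply upper_le
  intro y hy
  have h1 := stdLift_param_dist a b a' b' y
  have h2 : stdLift a b y - stdLift a' b' y ≤ |a - a'| + |b - b'| / (2*π) :=
    (le_abs_self _).trans h1
  have h3 := le_upper a' b' hy
  linarith

lemma lower_param_le (x : ℝ) :
    lowerBound (stdLift a b) x ≤ lowerBound (stdLift a' b') x + (|a - a'| + |b - b'| / (2*π)) := by
  have key : lowerBound (stdLift a b) x - (|a - a'| + |b - b'| / (2*π))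
      ≤ lowerBound (stdLift a' b') x := by
    apply le_lower
    intro y hy
    have h1 := stdLift_param_dist a b a' b' y
    have h2 : stdLift a b y - stdLift a' b' y ≤ |a - a'| + |b - b'| / (2*π) :=
      (le_abs_self _).trans h1
    have h3 := lower_le a b hy
    linarith
  linarith

end lipschitz

section iterclose

lemma iter_close (f g : CircleDeg1Lift) (K δ : ℝ) (hK : 1 ≤ K) (hδ : 0 ≤ δ)
    (hf : ∀ u v, |f u - f v| ≤ K * |u - v|) (hfg : ∀ z, |f z - g z| ≤ δ) :
    ∀ (n : ℕ) (x : ℝ), |f^[n] x - g^[n] x| ≤ δ * n * K ^ n := by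
  intro n
  induction n with
  | zero => intro x; simp
  | succ n ih =>
    intro x
    have hKn : (0:ℝ) < K ^ n := by positivity
    have e1 : |f (f^[n] x) - f (g^[n] x)| ≤ K * (δ * n * K ^ n) :=
      (hf _ _).trans (mul_le_mul_of_nonneg_left (ih x) (by linarith))
    have e2 := hfg (g^[n] x)
    have habs := abs_add_le (f (f^[n] x) - f (g^[n] x)) (f (g^[n] x) - g (g^[n] x))
    have e3 : |f (f^[n] x) - g (g^[n] x)| ≤ K * (δ * n * K ^ n) + δ := by
      calc |f (f^[n] x) - g (g^[n] x)|
          = |(f (f^[n] x) - f (g^[n] x)) + (f (g^[n] x) - g (g^[n] x))| := by ring_nf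
        _ ≤ _ := (abs_add_le _ _)
        _ ≤ K * (δ * n * K ^ n) + δ := add_le_add e1 e2
    rw [Function.iterate_succ_apply', Function.iterate_succ_apply']
    refine e3.trans ?_
    have hδK : δ ≤ δ * K ^ (n+1) := by
      nlinarith [one_le_pow₀ hK (n := n+1)]
    have : K * (δ * n * K ^ n) = δ * n * K ^ (n+1) := by ring
    rw [this]
    push_cast
    nlinarith [pow_nonneg (by linarith : (0:ℝ) ≤ K) (n+1)]

lemma tau_close (f g : CircleDeg1Lift) (K δ : ℝ) (hK : 1 ≤ K) (hδ : 0 ≤ δ)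
    (hf : ∀ u v, |f u - f v| ≤ K * |u - v|) (hfg : ∀ z, |f z - g z| ≤ δ)
    (n : ℕ) (hn : 1 ≤ n) :
    |τ f - τ g| ≤ δ * K ^ n + 2 / n := by
  have hn' : (0:ℝ) < n := by exact_mod_cast hn
  have h1 : |(f ^ n) 0 - n * τ f| ≤ 1 := by
    have := f.dist_pow_map_zero_mul_translationNumber_le n
    rwa [Real.dist_eq] at this
  have h2 : |(g ^ n) 0 - n * τ g| ≤ 1 := by
    have := g.dist_pow_map_zero_mul_translationNumber_le n
    rwa [Real.dist_eq] at this
  have h3 : |(f ^ n) 0 - (g ^ n) 0| ≤ δ * n * K ^ n := by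
    rw [coe_pow, coe_pow]
    exact iter_close f g K δ hK hδ hf hfg n 0
  have key : (n:ℝ) * |τ f - τ g| ≤ 2 + δ * n * K ^ n := by
    have e : (n:ℝ) * |τ f - τ g| = |(n:ℝ) * τ f - n * τ g| := by
      rw [← mul_sub, abs_mul, abs_of_nonneg (le_of_lt hn')]
    rw [e]
    calc |(n:ℝ) * τ f - n * τ g|
        = |(-((f ^ n) 0 - (n:ℝ) * τ f)) + (((f ^ n) 0 - (g ^ n) 0) + ((g ^ n) 0 - n * τ g))| := by
          ring_nf
      _ ≤ |(-((f ^ n) 0 - (n:ℝ) * τ f))| + |((f ^ n) 0 - (g ^ n) 0) + ((g ^ n) 0 - n * τ g)| :=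
          abs_add_le _ _
      _ ≤ |(-((f ^ n) 0 - (n:ℝ) * τ f))| + (|(f ^ n) 0 - (g ^ n) 0| + |(g ^ n) 0 - n * τ g|) :=
          by gcongr; exact abs_add_le _ _
      _ ≤ 1 + (δ * n * K ^ n + 1) := by rw [abs_neg]; exact add_le_add h1 (add_le_add h3 h2)
      _ = 2 + δ * n * K ^ n := by ring
  have hfin : |τ f - τ g| ≤ (2 + δ * n * K ^ n) / n := by
    rw [le_div_iff₀ hn']
    linarith [key]
  refine hfin.trans ?_
  rw [add_div]
  have h4 : δ * n * K ^ n / n = δ * K ^ n := by field_simp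
  rw [h4]
  linarith

end iterclose

noncomputable def Phi (a b : ℝ) : ℝ := τ (upperLift a b)
noncomputable def Psi (a b : ℝ) : ℝ := τ (lowerLift a b)

lemma Phi_le (a : ℝ) {b : ℝ} (hb : 0 ≤ b) : Phi a b ≤ a + b / (2*π) := tau_upper_le a hb
lemma le_Phi (a : ℝ) {b : ℝ} (hb : 0 ≤ b) : a + b / (2*π) - 1 ≤ Phi a b := tau_upper_ge a hb
lemma le_Phi' (a : ℝ) {b : ℝ} (hb : 0 ≤ b) : a - b / (2*π) ≤ Phi a b := tau_upper_ge' a hb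
lemma le_Psi (a : ℝ) {b : ℝ} (hb : 0 ≤ b) : a - b / (2*π) ≤ Psi a b := tau_lower_ge a hb
lemma Psi_le (a : ℝ) {b : ℝ} (hb : 0 ≤ b) : Psi a b ≤ a - b / (2*π) + 1 := tau_lower_le a hb

lemma stdLift_mono_a {a a' : ℝ} (b : ℝ) (h : a ≤ a') (y : ℝ) : stdLift a b y ≤ stdLift a' b y := by
  simp only [stdLift]; linarith

lemma Phi_mono_a {a a' : ℝ} (b : ℝ) (h : a ≤ a') : Phi a b ≤ Phi a' b := by
  apply translationNumber_mono
  intro x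
  show upperBound (stdLift a b) x ≤ upperBound (stdLift a' b) x
  exact upper_le a b (fun y hy => (stdLift_mono_a b h y).trans (le_upper a' b hy))

lemma Psi_le_Phi (a b : ℝ) : Psi a b ≤ Phi a b := by
  apply translationNumber_mono
  intro x
  show lowerBound (stdLift a b) x ≤ upperBound (stdLift a b) x
  exact (lower_le a b (le_refl x)).trans (le_upper a b (le_refl x))

lemma abs_Phi_sub_le (a b a' b' K : ℝ) (hK : 1 + |b| ≤ K) (n : ℕ) (hn : 1 ≤ n) :
    |Phi a b - Phi a' b'| ≤ (|a - a'| + |b - b'| / (2*π)) * K ^ n + 2 / n := by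
  have h1K : (1:ℝ) ≤ K := le_trans (by linarith [abs_nonneg b]) hK
  have hδ : (0:ℝ) ≤ |a - a'| + |b - b'| / (2*π) := by positivity
  apply tau_close (upperLift a b) (upperLift a' b') K _ h1K hδ _ _ n hn
  · intro u v
    exact (upper_lip a b u v).trans (mul_le_mul_of_nonneg_right hK (abs_nonneg _))
  · intro z
    rw [abs_le]
    constructor
    · have := upper_param_le a' b' a b z
      rw [abs_sub_comm a' a, abs_sub_comm b' b] at this
      show _ ≤ _
      simp only [upperLift_coe]
      linarith
    · have := upper_param_le a b a' b' z
      simp only [upperLift_coe]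
      linarith

lemma abs_Psi_sub_le (a b a' b' K : ℝ) (hK : 1 + |b| ≤ K) (n : ℕ) (hn : 1 ≤ n) :
    |Psi a b - Psi a' b'| ≤ (|a - a'| + |b - b'| / (2*π)) * K ^ n + 2 / n := by
  have h1K : (1:ℝ) ≤ K := le_trans (by linarith [abs_nonneg b]) hK
  have hδ : (0:ℝ) ≤ |a - a'| + |b - b'| / (2*π) := by positivity
  apply tau_close (lowerLift a b) (lowerLift a' b') K _ h1K hδ _ _ n hn
  · intro u v
    exact (lower_lip a b u v).trans (mul_le_mul_of_nonneg_right hK (abs_nonneg _))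
  · intro z
    rw [abs_le]
    constructor
    · have := lower_param_le a' b' a b z
      rw [abs_sub_comm a' a, abs_sub_comm b' b] at this
      simp only [lowerLift_coe]
      linarith
    · have := lower_param_le a b a' b' z
      simp only [lowerLift_coe]
      linarith

/-- ε-δ continuity statement for both `Phi` and `Psi`. -/
lemma cont_aux {ε K : ℝ} (hε : 0 < ε) (h1K : 1 ≤ K) :
    ∃ δ > 0, ∀ a b a' b' : ℝ, 1 + |b| ≤ K → |a - a'| ≤ δ → |b - b'| ≤ δ →
      |Phi a b - Phi a' b'| < ε ∧ |Psi a b - Psi a' b'| < ε := by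
  obtain ⟨n, hn⟩ := exists_nat_gt (4 / ε)
  have hn1 : 1 ≤ n := by
    by_contra h
    push_neg at h
    interval_cases n
    · have h4 : (0:ℝ) < 4 / ε := by positivity
      simp at hn
      linarith
  have hnpos : (0:ℝ) < n := by exact_mod_cast hn1
  have h2n : 2 / (n:ℝ) < ε / 2 := by
    rw [div_lt_div_iff₀ hnpos (by norm_num : (0:ℝ) < 2)]
    have : 4 / ε < n := hn
    have h4 : 4 < n * ε := by
      rw [div_lt_iff₀ hε] at this
      linarith
    linarith
  have hKn : (0:ℝ) < K ^ n := by positivity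
  refine ⟨ε / (8 * K ^ n), by positivity, ?_⟩
  intro a b a' b' hbK ha hb
  have key : (|a - a'| + |b - b'| / (2*π)) * K ^ n + 2 / n < ε := by
    have hπ : (1:ℝ) ≤ 2 * π := by nlinarith [Real.pi_gt_three]
    have hbb : |b - b'| / (2*π) ≤ |b - b'| := by
      rw [div_le_iff₀ two_pi_pos]
      nlinarith [abs_nonneg (b - b')]
    have hsum : |a - a'| + |b - b'| / (2*π) ≤ 2 * (ε / (8 * K ^ n)) := by linarith
    have h5 : (|a - a'| + |b - b'| / (2*π)) * K ^ n ≤ 2 * (ε / (8 * K ^ n)) * K ^ n := by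
      apply mul_le_mul_of_nonneg_right hsum (le_of_lt hKn)
    have h6 : 2 * (ε / (8 * K ^ n)) * K ^ n = ε / 4 := by field_simp; ring
    rw [h6] at h5
    linarith
  exact ⟨lt_of_le_of_lt (abs_Phi_sub_le a b a' b' K hbK n hn1) key,
         lt_of_le_of_lt (abs_Psi_sub_le a b a' b' K hbK n hn1) key⟩

lemma Phi_cont_a (b : ℝ) : Continuous fun a => Phi a b := by
  rw [Metric.continuous_iff]
  intro a ε hε
  obtain ⟨δ, hδpos, hδ⟩ := cont_aux hε (le_add_of_nonneg_right (abs_nonneg b) : 1 ≤ 1 + |b|)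
  refine ⟨δ, hδpos, fun a' ha' => ?_⟩
  have := (hδ a b a' b le_rfl (by rw [abs_sub_comm]; exact le_of_lt ha') (by simp; linarith)).1
  rw [Real.dist_eq, abs_sub_comm]
  exact this

lemma Psi_cont_a (b : ℝ) : Continuous fun a => Psi a b := by
  rw [Metric.continuous_iff]
  intro a ε hε
  obtain ⟨δ, hδpos, hδ⟩ := cont_aux hε (le_add_of_nonneg_right (abs_nonneg b) : 1 ≤ 1 + |b|)
  refine ⟨δ, hδpos, fun a' ha' => ?_⟩
  have := (hδ a b a' b le_rfl (by rw [abs_sub_comm]; exact le_of_lt ha') (by simp; linarith)).2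
  rw [Real.dist_eq, abs_sub_comm]
  exact this

/-- joint sequential continuity, given a uniform bound on the second coordinates -/
lemma PhiPsi_tendsto {B : ℝ} {u v : ℕ → ℝ} {α β : ℝ}
    (hu : Tendsto u atTop (𝓝 α)) (hv : Tendsto v atTop (𝓝 β)) (hβ : |β| ≤ B) :
    Tendsto (fun n => Phi (u n) (v n)) atTop (𝓝 (Phi α β)) ∧
    Tendsto (fun n => Psi (u n) (v n)) atTop (𝓝 (Psi α β)) := by
  have h1K : (1:ℝ) ≤ 1 + B := by
    have := (abs_nonneg β).trans hβ
    linarith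
  have main : ∀ ε > 0, ∃ N, ∀ n ≥ N,
      |Phi (u n) (v n) - Phi α β| < ε ∧ |Psi (u n) (v n) - Psi α β| < ε := by
    intro ε hε
    obtain ⟨δ, hδpos, hδ⟩ := cont_aux hε h1K
    obtain ⟨N1, hN1⟩ := Metric.tendsto_atTop.1 hu δ hδpos
    obtain ⟨N2, hN2⟩ := Metric.tendsto_atTop.1 hv δ hδpos
    refine ⟨max N1 N2, fun n hn => ?_⟩
    have h1 := hN1 n (le_trans (le_max_left _ _) hn)
    have h2 := hN2 n (le_trans (le_max_right _ _) hn)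
    rw [Real.dist_eq] at h1 h2
    have hK : 1 + |β| ≤ 1 + B := by linarith
    have := hδ α β (u n) (v n) hK
      (by rw [abs_sub_comm]; exact le_of_lt h1) (by rw [abs_sub_comm]; exact le_of_lt h2)
    exact ⟨by rw [abs_sub_comm]; exact this.1, by rw [abs_sub_comm]; exact this.2⟩
  constructor
  · rw [Metric.tendsto_atTop]
    intro ε hε
    obtain ⟨N, hN⟩ := main ε hε
    exact ⟨N, fun n hn => by rw [Real.dist_eq]; exact (hN n hn).1⟩
  · rw [Metric.tendsto_atTop]
    intro ε hε
    obtain ⟨N, hN⟩ := main ε hε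
    exact ⟨N, fun n hn => by rw [Real.dist_eq]; exact (hN n hn).2⟩

lemma exists_Phi_eq {b : ℝ} (hb : 0 ≤ b) (t : ℝ) : ∃ a, Phi a b = t := by
  set c := b / (2*π) with hc
  have hc0 : 0 ≤ c := by positivity
  have h1 : Phi (t - c - 1) b ≤ t - 1 := by
    have := Phi_le (t - c - 1) hb
    linarith
  have h2 : t + 1 ≤ Phi (t + c + 1) b := by
    have := le_Phi' (t + c + 1) hb
    linarith
  have := intermediate_value_univ (t - c - 1) (t + c + 1) (Phi_cont_a b)
  have hmem : t ∈ Icc (Phi (t - c - 1) b) (Phi (t + c + 1) b) := ⟨by linarith, by linarith⟩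
  obtain ⟨a, ha⟩ := this hmem
  exact ⟨a, ha⟩

lemma Phi_eq_Psi_of_b_le_one (a : ℝ) {b : ℝ} (hb0 : 0 ≤ b) (hb1 : b ≤ 1) :
    Phi a b = Psi a b := by
  have hmono := stdLift_mono a hb0 hb1
  have hupper : ∀ x, upperBound (stdLift a b) x = stdLift a b x := fun x =>
    le_antisymm (upper_le a b (fun y hy => hmono hy)) (le_upper a b (le_refl x))
  have hlower : ∀ x, lowerBound (stdLift a b) x = stdLift a b x := fun x =>
    le_antisymm (lower_le a b (le_refl x)) (le_lower a b (fun y hy => hmono hy))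
  have : upperLift a b = lowerLift a b := by
    apply CircleDeg1Lift.ext
    intro x
    show upperBound (stdLift a b) x = lowerBound (stdLift a b) x
    rw [hupper, hlower]
  unfold Phi Psi
  rw [this]

lemma tendsto_iter (f : CircleDeg1Lift) (x : ℝ) :
    Tendsto (fun n : ℕ => f^[n] x / (n:ℝ)) atTop (𝓝 (τ f)) := by
  have h := f.tendsto_translationNumber x
  have h2 := tendsto_const_div_atTop_nhds_zero_nat x
  have h3 := h.add h2
  rw [add_zero] at h3
  refine h3.congr fun n => ?_
  rw [← add_div, sub_add_cancel, coe_pow]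

theorem main (ω θ : ℝ) (hlt : ω < θ) : ∃ a b : ℝ, 1 ≤ b ∧ Psi a b = ω ∧ Phi a b = θ := by
  set B := π * (θ - ω + 3) with hBdef
  have hpi := Real.pi_gt_three
  have hB1 : 1 ≤ B := by nlinarith
  have hB0 : (0:ℝ) ≤ B := by linarith
  have hβabsB : ∀ β : ℝ, 1 ≤ β → β ≤ B → |β| ≤ B := fun β h1 h2 => by
    rw [abs_of_nonneg (by linarith)]; exact h2
  have hBdiv : B / (2*π) = (θ - ω + 3) / 2 := by
    rw [hBdef]
    field_simp
  have h2pi1 : (1:ℝ) ≤ 2*π := by nlinarith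
  -- gap estimate at b = B
  have hgap : ∀ a, Phi a B = θ → Psi a B ≤ ω - 1 := by
    intro a h
    have h1 := le_Phi a hB0
    have h2 := Psi_le a hB0
    rw [h, hBdiv] at h1
    rw [hBdiv] at h2
    linarith
  -- witnesses are uniformly bounded
  have hbound : ∀ a b, 0 ≤ b → b ≤ B → Phi a b = θ → a ∈ Icc (θ - B) (θ + B) := by
    intro a b hb0 hbB h
    have h1 := Phi_le a hb0
    have h2 := le_Phi' a hb0
    have h3 : b / (2*π) ≤ B := (div_le_self hb0 h2pi1).trans hbB
    have h4 : 0 ≤ b / (2*π) := by positivity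
    rw [h] at h1 h2
    exact ⟨by linarith, by linarith⟩
  set S := {b : ℝ | b ∈ Icc (1:ℝ) B ∧ ∃ a, Phi a b = θ ∧ ω ≤ Psi a b} with hSdef
  have hone : (1:ℝ) ∈ S := by
    obtain ⟨a₀, ha₀⟩ := exists_Phi_eq zero_le_one θ
    refine ⟨⟨le_refl 1, hB1⟩, a₀, ha₀, ?_⟩
    rw [← Phi_eq_Psi_of_b_le_one a₀ zero_le_one (le_refl 1), ha₀]
    exact le_of_lt hlt
  have hSne : S.Nonempty := ⟨1, hone⟩
  have hSbdd : BddAbove S := ⟨B, fun b hb => hb.1.2⟩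
  set β := sSup S with hβdef
  have hβ1 : 1 ≤ β := le_csSup hSbdd hone
  have hβB : β ≤ B := csSup_le hSne (fun b hb => hb.1.2)
  have hβabs : |β| ≤ B := hβabsB β hβ1 hβB
  obtain ⟨u, -, hulim, huS⟩ := exists_seq_tendsto_sSup hSne hSbdd
  have huI : ∀ n, u n ∈ Icc (1:ℝ) B := fun n => (huS n).1
  choose A hA1 hA2 using fun n => (huS n).2
  have hAmem : ∀ n, A n ∈ Icc (θ - B) (θ + B) := fun n =>
    hbound (A n) (u n) (by linarith [(huI n).1]) (huI n).2 (hA1 n)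
  obtain ⟨astar, -, φ, hφmono, hφlim⟩ :=
    tendsto_subseq_of_bounded (Metric.isBounded_Icc _ _) hAmem
  have hulimsub : Tendsto (u ∘ φ) atTop (𝓝 β) := hulim.comp hφmono.tendsto_atTop
  have htend := PhiPsi_tendsto hφlim hulimsub hβabs
  have hPhiβ : Phi astar β = θ := by
    have hconst : Tendsto (fun _ : ℕ => θ) atTop (𝓝 (Phi astar β)) :=
      htend.1.congr (fun n => hA1 (φ n))
    exact tendsto_nhds_unique hconst tendsto_const_nhds
  have hPsiβ : ω ≤ Psi astar β :=
    ge_of_tendsto htend.2 (Eventually.of_forall fun n => hA2 (φ n))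
  rcases eq_or_lt_of_le hPsiβ with heq | hgt
  · exact ⟨astar, β, hβ1, heq.symm, hPhiβ⟩
  · have hβltB : β < B := by
      rcases lt_or_eq_of_le hβB with h | h
      · exact h
      · exfalso
        rw [h] at hPhiβ hgt
        have := hgap astar hPhiβ
        linarith
    set v : ℕ → ℝ := fun n => β + (B - β)/(n + 2) with hvdef
    have hvgt : ∀ n, β < v n := fun n => by
      have : (0:ℝ) < (B - β)/(n + 2) := div_pos (by linarith) (by positivity)
      simp only [hvdef]
      linarith
    have hvle : ∀ n, v n ≤ B := fun n => by
      have hn2 : (1:ℝ) ≤ (n:ℝ) + 2 := by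
        have := Nat.cast_nonneg (α := ℝ) n
        linarith
      have h1 : (B - β)/((n:ℝ) + 2) ≤ B - β := div_le_self (by linarith) hn2
      simp only [hvdef]
      linarith
    have hv1 : ∀ n, (1:ℝ) ≤ v n := fun n => le_of_lt (lt_of_le_of_lt hβ1 (hvgt n))
    have hvlim : Tendsto v atTop (𝓝 β) := by
      have h0 : Tendsto (fun n : ℕ => (B - β)/((n:ℝ) + 2)) atTop (𝓝 0) := by
        have := (tendsto_const_div_atTop_nhds_zero_nat (B - β)).comp (tendsto_add_atTop_nat 2)
        refine this.congr fun n => ?_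
        simp only [Function.comp_apply]
        push_cast
        ring
      have h1 : Tendsto (fun n : ℕ => β + (B - β)/((n:ℝ) + 2)) atTop (𝓝 (β + 0)) :=
        tendsto_const_nhds.add h0
      rw [add_zero] at h1
      exact h1
    choose A' hA'1 using fun n => exists_Phi_eq (show (0:ℝ) ≤ v n by linarith [hv1 n]) θ
    have hnotS : ∀ n, v n ∉ S := fun n h => (hvgt n).not_ge (le_csSup hSbdd h)
    have hPsi' : ∀ n, Psi (A' n) (v n) < ω := by
      intro n
      by_contra h
      push_neg at h
      exact hnotS n ⟨⟨hv1 n, hvle n⟩, A' n, hA'1 n, h⟩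
    have hA'mem : ∀ n, A' n ∈ Icc (θ - B) (θ + B) := fun n =>
      hbound (A' n) (v n) (by linarith [hv1 n]) (hvle n) (hA'1 n)
    obtain ⟨c, -, ψ, hψmono, hψlim⟩ :=
      tendsto_subseq_of_bounded (Metric.isBounded_Icc _ _) hA'mem
    have hvlimsub : Tendsto (v ∘ ψ) atTop (𝓝 β) := hvlim.comp hψmono.tendsto_atTop
    have htend2 := PhiPsi_tendsto hψlim hvlimsub hβabs
    have hPhic : Phi c β = θ := by
      have hconst : Tendsto (fun _ : ℕ => θ) atTop (𝓝 (Phi c β)) :=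
        htend2.1.congr (fun n => hA'1 (ψ n))
      exact tendsto_nhds_unique hconst tendsto_const_nhds
    have hPsic : Psi c β ≤ ω :=
      le_of_tendsto htend2.2 (Eventually.of_forall fun n => le_of_lt (hPsi' (ψ n)))
    have hcont : ContinuousOn (fun a => Psi a β) (uIcc c astar) := (Psi_cont_a β).continuousOn
    have hmem : ω ∈ uIcc (Psi c β) (Psi astar β) := by
      rw [Set.mem_uIcc]
      left
      exact ⟨hPsic, le_of_lt hgt⟩
    obtain ⟨a2, ha2mem, ha2⟩ := intermediate_value_uIcc hcont hmem
    have hPhia2 : Phi a2 β = θ := by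
      rcases le_total c astar with h | h
      · rw [uIcc_of_le h] at ha2mem
        have h1 := Phi_mono_a β ha2mem.1
        have h2 := Phi_mono_a β ha2mem.2
        rw [hPhic] at h1
        rw [hPhiβ] at h2
        linarith
      · rw [uIcc_of_ge h] at ha2mem
        have h1 := Phi_mono_a β ha2mem.1
        have h2 := Phi_mono_a β ha2mem.2
        rw [hPhiβ] at h1
        rw [hPhic] at h2
        linarith
    exact ⟨a2, β, hβ1, ha2, hPhia2⟩

end Stmt15

/-- For any reals `ω < θ`, there exist `a ∈ ℝ` and `b > 0` with `ρ(F⁻_{a,b}) = ω` and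
`ρ(F⁺_{a,b}) = θ`; that is, the rotation interval of `F_{a,b}` is exactly `[ω, θ]`. -/
theorem stmt_15 (ω θ : ℝ) (hlt : ω < θ) :
    ∃ a b : ℝ, 0 < b ∧
      (∀ x : ℝ, Filter.Tendsto (fun n : ℕ => (lowerBound (stdLift a b))^[n] x / (n : ℝ))
        Filter.atTop (nhds ω)) ∧
      (∀ x : ℝ, Filter.Tendsto (fun n : ℕ => (upperBound (stdLift a b))^[n] x / (n : ℝ))
        Filter.atTop (nhds θ)) := by
  obtain ⟨a, b, hb1, hPsi, hPhi⟩ := Stmt15.main ω θ hlt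
  refine ⟨a, b, by linarith, fun x => ?_, fun x => ?_⟩
  · have h := Stmt15.tendsto_iter (Stmt15.lowerLift a b) x
    rw [show CircleDeg1Lift.translationNumber (Stmt15.lowerLift a b) = ω from hPsi] at h
    exact h
  · have h := Stmt15.tendsto_iter (Stmt15.upperLift a b) x
    rw [show CircleDeg1Lift.translationNumber (Stmt15.upperLift a b) = θ from hPhi] at h
    exact h
end

section
/- Let a ∈ ℝ and b > 1. For every x ∈ ℝ with F_{a,b}'(x) ≠ 0 (that is, 1 + b·cos(2πx) ≠ 0), the Schwarzian derivative SF_{a,b}(x) = F_{a,b}'''(x)/F_{a,b}'(x) − (3/2)·(F_{a,b}''(x)/F_{a,b}'(x))² is strictly negative. -/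
open Real Filter Set

lemma hasDeriv1 (a b x : ℝ) :
    HasDerivAt (stdLift a b) (1 + b * Real.cos (2 * π * x)) x := by
  have h2 : HasDerivAt (fun y : ℝ => 2 * π * y) (2 * π) x := by
    simpa using (hasDerivAt_id x).const_mul (2 * π)
  have hs : HasDerivAt (fun y : ℝ => Real.sin (2 * π * y))
      (Real.cos (2 * π * x) * (2 * π)) x :=
    (Real.hasDerivAt_sin (2 * π * x)).comp x h2
  have := ((hasDerivAt_id x).add_const a).add (hs.const_mul (b / (2 * π)))
  refine this.congr_deriv ?_
  have hπ : (π : ℝ) ≠ 0 := Real.pi_ne_zero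
  field_simp

lemma hasDeriv2 (b x : ℝ) :
    HasDerivAt (fun y => 1 + b * Real.cos (2 * π * y))
      (-(2 * π * b * Real.sin (2 * π * x))) x := by
  have h2 : HasDerivAt (fun y : ℝ => 2 * π * y) (2 * π) x := by
    simpa using (hasDerivAt_id x).const_mul (2 * π)
  have hc : HasDerivAt (fun y : ℝ => Real.cos (2 * π * y))
      (-Real.sin (2 * π * x) * (2 * π)) x :=
    (Real.hasDerivAt_cos (2 * π * x)).comp x h2
  have := (hc.const_mul b).const_add 1
  refine this.congr_deriv ?_
  ring

lemma hasDeriv3 (b x : ℝ) :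
    HasDerivAt (fun y => -(2 * π * b * Real.sin (2 * π * y)))
      (-((2 * π) ^ 2 * b * Real.cos (2 * π * x))) x := by
  have h2 : HasDerivAt (fun y : ℝ => 2 * π * y) (2 * π) x := by
    simpa using (hasDerivAt_id x).const_mul (2 * π)
  have hs : HasDerivAt (fun y : ℝ => Real.sin (2 * π * y))
      (Real.cos (2 * π * x) * (2 * π)) x :=
    (Real.hasDerivAt_sin (2 * π * x)).comp x h2
  have := ((hs.const_mul (2 * π * b))).neg
  refine this.congr_deriv ?_
  ring

/-- For `b > 1`, at every point where `F_{a,b}'(x) ≠ 0` the Schwarzian derivative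
`S F_{a,b}(x) = F'''/F' - (3/2)(F''/F')²` is strictly negative. -/
theorem stmt_16 (a b : ℝ) (hb : 1 < b) (x : ℝ)
    (hx : deriv (stdLift a b) x ≠ 0) :
    deriv (deriv (deriv (stdLift a b))) x / deriv (stdLift a b) x -
      (3 / 2) * (deriv (deriv (stdLift a b)) x / deriv (stdLift a b) x) ^ 2 < 0 := by
  have hd1 : deriv (stdLift a b) = fun y => 1 + b * Real.cos (2 * π * y) :=
    funext fun y => (hasDeriv1 a b y).deriv
  have hd2 : deriv (deriv (stdLift a b)) = fun y => -(2 * π * b * Real.sin (2 * π * y)) := by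
    rw [hd1]; exact funext fun y => (hasDeriv2 b y).deriv
  have hd3 : deriv (deriv (deriv (stdLift a b)))
      = fun y => -((2 * π) ^ 2 * b * Real.cos (2 * π * y)) := by
    rw [hd2]; exact funext fun y => (hasDeriv3 b y).deriv
  simp only [hd1] at hx
  rw [hd3, hd2, hd1]
  simp only
  set c := Real.cos (2 * π * x) with hc
  set s := Real.sin (2 * π * x) with hsdef
  have hsc : s ^ 2 = 1 - c ^ 2 := by
    have := Real.sin_sq_add_cos_sq (2 * π * x)
    rw [← hc, ← hsdef] at this; linarith
  have hc1 : c ≤ 1 := Real.cos_le_one _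
  have hc2 : -1 ≤ c := Real.neg_one_le_cos _
  have hDne : (1 : ℝ) + b * c ≠ 0 := hx
  have hD2 : (0 : ℝ) < (1 + b * c) ^ 2 := by positivity
  have key : -((2 * π) ^ 2 * b * c) / (1 + b * c) -
      (3 / 2) * (-(2 * π * b * s) / (1 + b * c)) ^ 2
      = (2 * π) ^ 2 * ((1 / 2) * b ^ 2 * c ^ 2 - b * c - (3 / 2) * b ^ 2)
        / (1 + b * c) ^ 2 := by
    field_simp
    linear_combination (-3*b) * hsc
  rw [key]
  apply div_neg_of_neg_of_pos _ hD2
  have hπ : (0 : ℝ) < (2 * π) ^ 2 := by positivity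
  have hneg : (1 / 2) * b ^ 2 * c ^ 2 - b * c - (3 / 2) * b ^ 2 < 0 := by
    nlinarith [mul_nonneg (mul_nonneg (le_of_lt (lt_trans one_pos hb)) (le_of_lt (lt_trans one_pos hb))) (mul_nonneg (sub_nonneg.mpr hc1) (by linarith : (0:ℝ) ≤ 1 + c)), mul_nonneg (le_of_lt (lt_trans one_pos hb)) (by linarith : (0:ℝ) ≤ 1 + c)]
  exact mul_neg_of_pos_of_neg hπ hneg
end
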